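/- arXiv:0906.3421 — 11 statements merged into one kernel-verified Lean document; each statement's English description precedes it below -/
import Mathlib

section
/- Let (x_n)_{n∈ℤ} be a (2,2)-sequence. Then for all n ∈ ℤ one has x_{n−1} + x_{n+1} = c·x_n, where c = x_1/x_0 + 1/(x_0·x_1) + x_0/x_1. In particular the quantity (x_{n−1} + x_{n+1})/x_n is independent of n. -/
/-!
Subtracting the recurrence at `n` from the recurrence at `n + 1` gives
`x n (x n + x (n+2)) = x (n+1) (x (n-1) + x (n+1))`, so the ratio
`(x (n-1) + x (n+1)) / x n` is invariant under `n ↦ n + 1`, hence constant.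
Every term is nonzero, as `x n ^ 2 + 1 > 0` is a product of its two neighbours.
Its value at `n = 0` is read off after eliminating `x (-1)` with the recurrence at `0`.
-/

section Field

variable {K : Type*} [Field K] {x : ℤ → K}

def neighbourRatio (x : ℤ → K) (n : ℤ) : K := (x (n - 1) + x (n + 1)) / x n

theorem mul_add_eq_mul_add_of_recurrence
    (hrec : ∀ n : ℤ, x (n + 1) * x (n - 1) = x n ^ 2 + 1) (n : ℤ) :
    x n * (x n + x (n + 2)) = x (n + 1) * (x (n - 1) + x (n + 1)) := by
  have hnext : x (n + 2) * x n = x (n + 1) ^ 2 + 1 := by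
    simpa only [add_assoc, one_add_one_eq_two, add_sub_cancel_right] using hrec (n + 1)
  linear_combination hnext - hrec n

theorem neighbourRatio_periodic (hrec : ∀ n : ℤ, x (n + 1) * x (n - 1) = x n ^ 2 + 1)
    (hx : ∀ n, x n ≠ 0) : Function.Periodic (neighbourRatio x) 1 := by
  intro n
  have hcross := mul_add_eq_mul_add_of_recurrence hrec n
  simp only [neighbourRatio, add_sub_cancel_right, add_assoc, one_add_one_eq_two]
  rw [div_eq_div_iff (hx (n + 1)) (hx n)]
  linear_combination hcross

end Field

theorem ne_zero_of_recurrence {K : Type*} [Field K] [LinearOrder K] [IsStrictOrderedRing K]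
    {x : ℤ → K} (hrec : ∀ n : ℤ, x (n + 1) * x (n - 1) = x n ^ 2 + 1) (n : ℤ) : x n ≠ 0 := by
  have hprod : x (n - 1 + 1) * x (n - 1 - 1) ≠ 0 := by
    rw [hrec]
    positivity
  simpa only [sub_add_cancel] using left_ne_zero_of_mul hprod

theorem q22_conserved_quantity_general (x : ℤ → ℝ)
    (hrec : ∀ n : ℤ, x (n + 1) * x (n - 1) = x n ^ 2 + 1) :
    ∀ n : ℤ, x (n - 1) + x (n + 1) =
      (x 1 / x 0 + 1 / (x 0 * x 1) + x 0 / x 1) * x n := by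
  intro n
  have hx := ne_zero_of_recurrence hrec
  have hconst : neighbourRatio x n = neighbourRatio x 0 := by
    simpa using (neighbourRatio_periodic hrec hx).int_mul_eq n
  have hbase : neighbourRatio x 0 = x 1 / x 0 + 1 / (x 0 * x 1) + x 0 / x 1 := by
    have h0 : x 1 * x (-1) = x 0 ^ 2 + 1 := by simpa using hrec 0
    have hx0 := hx 0
    have hx1 := hx 1
    simp only [neighbourRatio, zero_sub, zero_add]
    field_simp
    linear_combination h0
  rw [← hbase, ← hconst, neighbourRatio, div_mul_cancel₀ _ (hx n)]

/-- For a (2,2)-sequence, x_{n-1} + x_{n+1} = c·x_n with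
c = x_1/x_0 + 1/(x_0·x_1) + x_0/x_1; in particular (x_{n-1}+x_{n+1})/x_n
is independent of n. -/
theorem q22_conserved_quantity (x : ℤ → ℝ) (hpos : ∀ n, 0 < x n)
    (hrec : ∀ n : ℤ, x (n + 1) * x (n - 1) = x n ^ 2 + 1) :
    ∀ n : ℤ, x (n - 1) + x (n + 1) =
      (x 1 / x 0 + 1 / (x 0 * x 1) + x 0 / x 1) * x n :=
  q22_conserved_quantity_general x hrec
end

section
/- Let (x_n)_{n∈ℤ} be a (2,2)-sequence and set c = x_1/x_0 + 1/(x_0·x_1) + x_0/x_1. Then in the ring of formal power series ℝ[[t]] one has the identity (1 − c·t + t²)·(Σ_{n≥0} x_n tⁿ) = x_0 − (c·x_0 − x_1)·t. -/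
/-!
Subtracting the relations `x (n + 1) * x (n - 1) = x n ^ 2 + d` at `n` and `n + 1` gives
`(x (n + 2) + x n) * x n = (x (n + 1) + x (n - 1)) * x (n + 1)`, so the ratio
`(x (n + 1) + x (n - 1)) / x n` does not depend on `n`. For a (2,2)-sequence its value at `n = 0`
is `c`, because `x (-1) = (x 0 ^ 2 + 1) / x 1`. Hence `x (n + 2) - c * x (n + 1) + x n = 0`, which
is exactly the vanishing of the coefficients of `tⁿ⁺²` in `(1 - c t + t²) * Σ xₙ tⁿ`.
-/

open PowerSeries in
theorem PowerSeries.mul_mk_eq_of_linear_recurrence {R : Type*} [CommRing R] (a : ℕ → R) (c : R)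
    (ha : ∀ n, a (n + 2) + a n = c * a (n + 1)) :
    (1 - C c * X + X ^ 2) * mk a = C (a 0) - C (c * a 0 - a 1) * X := by
  ext n
  rcases n with _ | _ | n
  · simp
  · simp [add_mul, sub_mul, mul_assoc, coeff_succ_X_mul, coeff_X_pow_mul']
  · simp [add_mul, sub_mul, mul_assoc, coeff_succ_X_mul, coeff_X_pow_mul']
    linear_combination ha n

theorem add_eq_mul_of_mul_sub_sq_eq_const {K : Type*} [Field K] (x : ℤ → K) (hx : ∀ n, x n ≠ 0)
    (d : K) (hrec : ∀ n, x (n + 1) * x (n - 1) = x n ^ 2 + d) (n : ℤ) :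
    x (n + 1) + x (n - 1) = (x 1 + x (-1)) / x 0 * x n := by
  set r : ℤ → K := fun n => (x (n + 1) + x (n - 1)) / x n
  have hstep : ∀ n, r (n + 1) = r n := by
    intro n
    have h₁ := hrec (n + 1)
    rw [add_sub_cancel_right, add_assoc, one_add_one_eq_two] at h₁
    simp only [r, add_sub_cancel_right, add_assoc, one_add_one_eq_two]
    rw [div_eq_div_iff (hx _) (hx _)]
    linear_combination h₁ - hrec n
  have hconst : r n = r 0 := by
    induction n using Int.induction_on with
    | zero => rfl
    | succ k ih => rw [hstep, ih]
    | pred k ih => rw [← ih, ← hstep, sub_add_cancel]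
  simp only [r, zero_add, zero_sub] at hconst
  rw [← hconst, div_mul_cancel₀ _ (hx n)]

/-- the generating function identity
(1 − c·t + t²)·(Σ_{n≥0} x_n tⁿ) = x_0 − (c·x_0 − x_1)·t in ℝ[[t]]. -/
theorem q22_generating_function (x : ℤ → ℝ) (hpos : ∀ n, 0 < x n)
    (hrec : ∀ n : ℤ, x (n + 1) * x (n - 1) = x n ^ 2 + 1)
    (c : ℝ) (hc : c = x 1 / x 0 + 1 / (x 0 * x 1) + x 0 / x 1) :
    (1 - PowerSeries.C (R := ℝ) c * PowerSeries.X + PowerSeries.X ^ 2) *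
        PowerSeries.mk (fun n : ℕ => x (n : ℤ)) =
      PowerSeries.C (R := ℝ) (x 0) - PowerSeries.C (R := ℝ) (c * x 0 - x 1) * PowerSeries.X := by
  have hx : ∀ n, x n ≠ 0 := fun n => (hpos n).ne'
  have hc' : c = (x 1 + x (-1)) / x 0 := by
    have h₀ := hrec 0
    rw [zero_add, zero_sub] at h₀
    rw [hc]
    field_simp [hx 0, hx 1]
    linear_combination -h₀
  apply PowerSeries.mul_mk_eq_of_linear_recurrence
  intro n
  have hlin := add_eq_mul_of_mul_sub_sq_eq_const x hx 1 hrec (n + 1)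
  rw [← hc', add_sub_cancel_right, add_assoc, one_add_one_eq_two] at hlin
  push_cast
  exact hlin
end

section
/- Let (x_n)_{n∈ℤ} be a (2,2)-sequence. Then for every integer n ≥ 0, x_n = Σ_{p,q,ℓ ≥ 0, p+q+ℓ = n} C(p+q−1, q)·C(q+ℓ−1, ℓ)·x_0^{1+ℓ−p−q}·x_1^{p−q−ℓ}, where the exponents are integers (integer powers of the positive reals x_0, x_1) and the binomial convention below is used. -/
/-- Binomial convention: C(a,b) = a!/(b!(a−b)!) if 0 ≤ b ≤ a, C(−1,0) = 1,
and C(a,b) = 0 otherwise. -/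
def intChoose (a b : ℤ) : ℤ :=
  if 0 ≤ b ∧ b ≤ a then Nat.choose a.toNat b.toNat
  else if a = -1 ∧ b = 0 then 1 else 0

/-- auxiliary: E q l = intChoose (q + l - 1) l -/
def auxE (q : ℕ) (l : ℤ) : ℤ := intChoose ((q : ℤ) + l - 1) l

lemma auxE_neg (q : ℕ) (l : ℤ) (h : l < 0) : auxE q l = 0 := by
  unfold auxE intChoose
  rw [if_neg, if_neg] <;> omega

lemma auxE_nat (q l : ℕ) : auxE q l = ((q + l - 1).choose l : ℤ) := by
  unfold auxE intChoose
  rcases Nat.eq_zero_or_pos q with hq | hq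
  · subst hq
    rcases Nat.eq_zero_or_pos l with hl | hl
    · subst hl; norm_num
    · rw [if_neg (by omega), if_neg (by omega)]
      rw [Nat.choose_eq_zero_of_lt (by omega)]
      simp
  · rw [if_pos (by constructor <;> omega)]
    have h1 : ((q:ℤ) + (l:ℤ) - 1).toNat = q + l - 1 := by omega
    have h2 : ((l:ℤ)).toNat = l := by omega
    rw [h1, h2]

lemma auxE_zero (q : ℕ) : auxE q 0 = 1 := by
  have := auxE_nat q 0
  simpa using this

lemma auxE_zero_left (l : ℤ) : auxE 0 l = if l = 0 then 1 else 0 := by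
  rcases lt_trichotomy l 0 with h | h | h
  · rw [auxE_neg 0 l h, if_neg (by omega)]
  · subst h; simp [auxE_zero]
  · rw [if_neg (by omega)]
    obtain ⟨m, rfl⟩ : ∃ m : ℕ, l = (m : ℤ) := ⟨l.toNat, by omega⟩
    rw [auxE_nat]
    have : (m - 1).choose m = 0 := Nat.choose_eq_zero_of_lt (by omega)
    simp [this]

lemma auxE_pascal (q : ℕ) (hq : 1 ≤ q) (l : ℤ) :
    auxE q l = auxE (q - 1) l + auxE q (l - 1) := by
  rcases lt_trichotomy l 0 with h | h | h
  · rw [auxE_neg q l h, auxE_neg (q-1) l h, auxE_neg q (l-1) (by omega)]; ring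
  · subst h
    rw [auxE_zero, auxE_zero, auxE_neg q (0-1) (by omega)]; ring
  · obtain ⟨m, rfl⟩ : ∃ m : ℕ, l = ((m : ℤ) + 1) := ⟨(l-1).toNat, by omega⟩
    have h1 : ((m : ℤ) + 1) = ((m + 1 : ℕ) : ℤ) := by push_cast; ring
    have h2 : ((m : ℤ) + 1 - 1) = ((m : ℕ) : ℤ) := by push_cast; ring
    rw [h2, h1, auxE_nat, auxE_nat, auxE_nat]
    have e1 : q + (m + 1) - 1 = (q - 1 + m) + 1 := by omega
    have e2 : q - 1 + (m + 1) - 1 = q - 1 + m := by omega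
    have e3 : q + m - 1 = q - 1 + m := by omega
    rw [e1, e2, e3, Nat.choose_succ_succ]
    push_cast
    ring

lemma coeff_id_00 (l : ℤ) (h : 2 ≤ l) :
    auxE 0 ((0:ℕ):ℤ) * auxE 0 l = auxE 0 ((0:ℕ):ℤ) * auxE 0 (l-1) := by
  rw [show ((0:ℕ):ℤ) = 0 from rfl, auxE_zero_left l, auxE_zero_left (l-1)]
  rw [if_neg (show ¬(l = 0) by omega), if_neg (show ¬(l - 1 = 0) by omega)]

lemma coeff_id_0q (q : ℕ) (l : ℤ) (h : 1 ≤ (q:ℤ) + l) :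
    auxE 0 ((q+1:ℕ):ℤ) * auxE (q+1) l =
      auxE 0 ((q+1:ℕ):ℤ) * auxE (q+1) (l-1) + auxE 0 ((q:ℕ):ℤ) * auxE q l := by
  rw [show ((q+1:ℕ):ℤ) = (q:ℤ) + 1 by push_cast; ring, auxE_zero_left ((q:ℤ)+1),
    if_neg (show ¬((q:ℤ) + 1 = 0) by omega)]
  rcases Nat.eq_zero_or_pos q with hq | hq
  · subst hq
    rw [show ((0:ℕ):ℤ) = 0 from rfl, auxE_zero, auxE_zero_left l,
      if_neg (show ¬(l = 0) by omega)]
    ring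
  · rw [auxE_zero_left ((q:ℕ):ℤ),
      if_neg (show ¬(((q:ℕ):ℤ) = 0) by exact_mod_cast Nat.pos_iff_ne_zero.mp hq)]
    ring

lemma coeff_id_p0 (p : ℕ) (l : ℤ) :
    auxE (p+1) ((0:ℕ):ℤ) * auxE 0 l =
      auxE (p+1) ((0:ℕ):ℤ) * auxE 0 (l-1) + auxE p ((0:ℕ):ℤ) * auxE 0 l
      - auxE p ((0:ℕ):ℤ) * auxE 0 (l-1) := by
  rw [show ((0:ℕ):ℤ) = 0 from rfl, auxE_zero, auxE_zero]
  ring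

lemma coeff_id_pq (p q : ℕ) (l : ℤ) :
    auxE (p+1) ((q+1:ℕ):ℤ) * auxE (q+1) l =
      auxE (p+1) ((q+1:ℕ):ℤ) * auxE (q+1) (l-1)
      + auxE p ((q+1:ℕ):ℤ) * auxE (q+1) l
      + auxE (p+1) ((q:ℕ):ℤ) * auxE q l
      - auxE p ((q+1:ℕ):ℤ) * auxE (q+1) (l-1) := by
  have hP := auxE_pascal (p+1) (by omega) ((q+1 : ℕ) : ℤ)
  have hQ := auxE_pascal (q+1) (by omega) l
  rw [show (p + 1 - 1 : ℕ) = p by omega] at hP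
  rw [show (q + 1 - 1 : ℕ) = q by omega] at hQ
  rw [show ((q + 1 : ℕ) : ℤ) - 1 = ((q : ℕ) : ℤ) by push_cast; ring] at hP
  linear_combination (auxE (q+1) l - auxE (q+1) (l-1)) * hP
    + auxE (p+1) ((q:ℕ):ℤ) * hQ

noncomputable def auxMo (x0 x1 : ℝ) (p q : ℕ) (l : ℤ) : ℝ :=
  x0 ^ (1 + l - (p:ℤ) - (q:ℤ)) * x1 ^ ((p:ℤ) - (q:ℤ) - l)

noncomputable def auxT (x0 x1 : ℝ) (n p q : ℕ) : ℝ :=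
  ((auxE p (q:ℤ) * auxE q ((n:ℤ) - p - q) : ℤ) : ℝ) * auxMo x0 x1 p q ((n:ℤ) - p - q)

variable {x0 x1 : ℝ}

lemma auxT_eq (n p q : ℕ) (l : ℤ) (hl : (n:ℤ) - p - q = l) :
    auxT x0 x1 n p q = ((auxE p (q:ℤ) * auxE q l : ℤ) : ℝ) * auxMo x0 x1 p q l := by
  rw [auxT, hl]

lemma auxMo_A (hx0 : x0 ≠ 0) (hx1 : x1 ≠ 0) (p q : ℕ) (l : ℤ) :
    x0^2 * auxMo x0 x1 p q (l-1) = (x0*x1) * auxMo x0 x1 p q l := by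
  unfold auxMo
  rw [show (1 + (l-1) - (p:ℤ) - (q:ℤ)) = (1 + l - (p:ℤ) - (q:ℤ)) - 1 by ring,
    show ((p:ℤ) - (q:ℤ) - (l-1)) = ((p:ℤ) - (q:ℤ) - l) + 1 by ring,
    zpow_sub_one₀ hx0, zpow_add_one₀ hx1]
  field_simp
  try ring

lemma auxMo_B (hx0 : x0 ≠ 0) (hx1 : x1 ≠ 0) (p q : ℕ) (l : ℤ) :
    x1^2 * auxMo x0 x1 p q l = (x0*x1) * auxMo x0 x1 (p+1) q l := by
  unfold auxMo
  rw [show (1 + l - ((p+1:ℕ):ℤ) - (q:ℤ)) = (1 + l - (p:ℤ) - (q:ℤ)) - 1 by push_cast; ring,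
    show (((p+1:ℕ):ℤ) - (q:ℤ) - l) = ((p:ℤ) - (q:ℤ) - l) + 1 by push_cast; ring,
    zpow_sub_one₀ hx0, zpow_add_one₀ hx1]
  field_simp
  try ring

lemma auxMo_C (hx0 : x0 ≠ 0) (hx1 : x1 ≠ 0) (p q : ℕ) (l : ℤ) :
    auxMo x0 x1 p q l = (x0*x1) * auxMo x0 x1 p (q+1) l := by
  unfold auxMo
  rw [show (1 + l - (p:ℤ) - ((q+1:ℕ):ℤ)) = (1 + l - (p:ℤ) - (q:ℤ)) - 1 by push_cast; ring,
    show ((p:ℤ) - ((q+1:ℕ):ℤ) - l) = ((p:ℤ) - (q:ℤ) - l) - 1 by push_cast; ring,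
    zpow_sub_one₀ hx0, zpow_sub_one₀ hx1]
  field_simp
  try ring

lemma auxMo_D (p q : ℕ) (l : ℤ) :
    auxMo x0 x1 p q (l-1) = auxMo x0 x1 (p+1) q l := by
  unfold auxMo
  rw [show (1 + (l-1) - (p:ℤ) - (q:ℤ)) = (1 + l - ((p+1:ℕ):ℤ) - (q:ℤ)) by push_cast; ring,
    show ((p:ℤ) - (q:ℤ) - (l-1)) = (((p+1:ℕ):ℤ) - (q:ℤ) - l) by push_cast; ring]

lemma auxT_pointwise (hx0 : x0 ≠ 0) (hx1 : x1 ≠ 0) (n p q : ℕ) :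
    auxT x0 x1 (n+2) p q * (x0*x1) =
      x0^2 * auxT x0 x1 (n+1) p q
      + (if p = 0 then 0 else x1^2 * auxT x0 x1 (n+1) (p-1) q)
      + (if q = 0 then 0 else auxT x0 x1 (n+1) p (q-1))
      - (if p = 0 then 0 else (x0*x1) * auxT x0 x1 n (p-1) q) := by
  rcases p with _ | p <;> rcases q with _ | q
  · -- p = 0, q = 0
    simp only [reduceIte]
    set L : ℤ := (n:ℤ) + 2 with hL
    rw [auxT_eq (n+2) 0 0 L (by push_cast; ring),
      auxT_eq (n+1) 0 0 (L-1) (by push_cast; ring)]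
    have hA := auxMo_A hx0 hx1 (x0 := x0) (x1 := x1) 0 0 L
    have hc : ((auxE 0 ((0:ℕ):ℤ) * auxE 0 L : ℤ) : ℝ)
        = ((auxE 0 ((0:ℕ):ℤ) * auxE 0 (L-1) : ℤ) : ℝ) := by
      exact_mod_cast coeff_id_00 L (by omega)
    linear_combination (-((auxE 0 ((0:ℕ):ℤ) * auxE 0 (L-1) : ℤ) : ℝ)) * hA
      + ((x0*x1) * auxMo x0 x1 0 0 L) * hc
  · -- p = 0, q = q+1
    simp only [reduceIte, if_neg (Nat.succ_ne_zero q)]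
    set L : ℤ := (n:ℤ) + 1 - q with hL
    rw [auxT_eq (n+2) 0 (q+1) L (by push_cast; ring),
      auxT_eq (n+1) 0 (q+1) (L-1) (by push_cast; ring),
      show (q+1-1 : ℕ) = q from rfl,
      auxT_eq (n+1) 0 q L (by push_cast; ring)]
    have hA := auxMo_A hx0 hx1 (x0 := x0) (x1 := x1) 0 (q+1) L
    have hC := auxMo_C hx0 hx1 (x0 := x0) (x1 := x1) 0 q L
    have hc : ((auxE 0 ((q+1:ℕ):ℤ) * auxE (q+1) L : ℤ) : ℝ)
        = ((auxE 0 ((q+1:ℕ):ℤ) * auxE (q+1) (L-1) : ℤ) : ℝ)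
          + ((auxE 0 ((q:ℕ):ℤ) * auxE q L : ℤ) : ℝ) := by
      exact_mod_cast coeff_id_0q q L (by omega)
    linear_combination (-((auxE 0 ((q+1:ℕ):ℤ) * auxE (q+1) (L-1) : ℤ) : ℝ)) * hA
      + (-((auxE 0 ((q:ℕ):ℤ) * auxE q L : ℤ) : ℝ)) * hC
      + ((x0*x1) * auxMo x0 x1 0 (q+1) L) * hc
  · -- p = p+1, q = 0
    simp only [if_neg (Nat.succ_ne_zero p), reduceIte]
    set L : ℤ := (n:ℤ) + 1 - p with hL
    rw [auxT_eq (n+2) (p+1) 0 L (by push_cast; ring),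
      auxT_eq (n+1) (p+1) 0 (L-1) (by push_cast; ring),
      show (p+1-1 : ℕ) = p from rfl,
      auxT_eq (n+1) p 0 L (by push_cast; ring),
      auxT_eq n p 0 (L-1) (by push_cast; ring)]
    have hA := auxMo_A hx0 hx1 (x0 := x0) (x1 := x1) (p+1) 0 L
    have hB := auxMo_B hx0 hx1 (x0 := x0) (x1 := x1) p 0 L
    have hD := auxMo_D (x0 := x0) (x1 := x1) p 0 L
    have hc : ((auxE (p+1) ((0:ℕ):ℤ) * auxE 0 L : ℤ) : ℝ)
        = ((auxE (p+1) ((0:ℕ):ℤ) * auxE 0 (L-1) : ℤ) : ℝ)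
          + ((auxE p ((0:ℕ):ℤ) * auxE 0 L : ℤ) : ℝ)
          - ((auxE p ((0:ℕ):ℤ) * auxE 0 (L-1) : ℤ) : ℝ) := by
      exact_mod_cast coeff_id_p0 p L
    linear_combination (-((auxE (p+1) ((0:ℕ):ℤ) * auxE 0 (L-1) : ℤ) : ℝ)) * hA
      + (-((auxE p ((0:ℕ):ℤ) * auxE 0 L : ℤ) : ℝ)) * hB
      + (((auxE p ((0:ℕ):ℤ) * auxE 0 (L-1) : ℤ) : ℝ) * (x0*x1)) * hD
      + ((x0*x1) * auxMo x0 x1 (p+1) 0 L) * hc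
  · -- p = p+1, q = q+1
    simp only [if_neg (Nat.succ_ne_zero p), if_neg (Nat.succ_ne_zero q)]
    set L : ℤ := (n:ℤ) - p - q with hL
    rw [auxT_eq (n+2) (p+1) (q+1) L (by push_cast; ring),
      auxT_eq (n+1) (p+1) (q+1) (L-1) (by push_cast; ring),
      show (p+1-1 : ℕ) = p from rfl,
      show (q+1-1 : ℕ) = q from rfl,
      auxT_eq (n+1) p (q+1) L (by push_cast; ring),
      auxT_eq (n+1) (p+1) q L (by push_cast; ring),
      auxT_eq n p (q+1) (L-1) (by push_cast; ring)]
    have hA := auxMo_A hx0 hx1 (x0 := x0) (x1 := x1) (p+1) (q+1) L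
    have hB := auxMo_B hx0 hx1 (x0 := x0) (x1 := x1) p (q+1) L
    have hC := auxMo_C hx0 hx1 (x0 := x0) (x1 := x1) (p+1) q L
    have hD := auxMo_D (x0 := x0) (x1 := x1) p (q+1) L
    have hc : ((auxE (p+1) ((q+1:ℕ):ℤ) * auxE (q+1) L : ℤ) : ℝ)
        = ((auxE (p+1) ((q+1:ℕ):ℤ) * auxE (q+1) (L-1) : ℤ) : ℝ)
          + ((auxE p ((q+1:ℕ):ℤ) * auxE (q+1) L : ℤ) : ℝ)
          + ((auxE (p+1) ((q:ℕ):ℤ) * auxE q L : ℤ) : ℝ)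
          - ((auxE p ((q+1:ℕ):ℤ) * auxE (q+1) (L-1) : ℤ) : ℝ) := by
      exact_mod_cast coeff_id_pq p q L
    linear_combination (-((auxE (p+1) ((q+1:ℕ):ℤ) * auxE (q+1) (L-1) : ℤ) : ℝ)) * hA
      + (-((auxE p ((q+1:ℕ):ℤ) * auxE (q+1) L : ℤ) : ℝ)) * hB
      + (-((auxE (p+1) ((q:ℕ):ℤ) * auxE q L : ℤ) : ℝ)) * hC
      + (((auxE p ((q+1:ℕ):ℤ) * auxE (q+1) (L-1) : ℤ) : ℝ) * (x0*x1)) * hD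
      + ((x0*x1) * auxMo x0 x1 (p+1) (q+1) L) * hc

lemma auxT_zero (n p q : ℕ) (h : n < p + q) : auxT x0 x1 n p q = 0 := by
  unfold auxT
  rw [auxE_neg q ((n:ℤ) - p - q) (by push_cast; omega)]
  simp

lemma sum_shift (u : ℕ → ℝ) (B : ℕ) (h : u B = 0) :
    ∑ p ∈ Finset.range (B+1), u p
      = ∑ p ∈ Finset.range (B+1), (if p = 0 then 0 else u (p-1)) := by
  rw [Finset.sum_range_succ, h, add_zero,
    Finset.sum_range_succ' (fun p => if p = 0 then 0 else u (p-1)) B]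
  simp

lemma sum_box (n B : ℕ) (hB : n + 1 ≤ B) :
    (∑ p ∈ Finset.range (n+1), ∑ q ∈ Finset.range (n+1-p), auxT x0 x1 n p q)
      = ∑ p ∈ Finset.range B, ∑ q ∈ Finset.range B, auxT x0 x1 n p q := by
  calc (∑ p ∈ Finset.range (n+1), ∑ q ∈ Finset.range (n+1-p), auxT x0 x1 n p q)
      = ∑ p ∈ Finset.range (n+1), ∑ q ∈ Finset.range B, auxT x0 x1 n p q := by
        refine Finset.sum_congr rfl fun p hp => ?_
        refine Finset.sum_subset (Finset.range_subset_range.2 (by omega)) fun q _ hq2 => ?_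
        simp only [Finset.mem_range] at hp hq2
        exact auxT_zero n p q (by omega)
    _ = ∑ p ∈ Finset.range B, ∑ q ∈ Finset.range B, auxT x0 x1 n p q := by
        refine Finset.sum_subset (Finset.range_subset_range.2 hB) fun p _ hp2 => ?_
        simp only [Finset.mem_range] at hp2
        exact Finset.sum_eq_zero fun q _ => auxT_zero n p q (by omega)

lemma box_rec (hx0 : x0 ≠ 0) (hx1 : x1 ≠ 0) (n : ℕ) :
    (∑ p ∈ Finset.range (n+4), ∑ q ∈ Finset.range (n+4), auxT x0 x1 (n+2) p q) * (x0*x1)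
      = (x0^2 + x1^2 + 1) *
          (∑ p ∈ Finset.range (n+4), ∑ q ∈ Finset.range (n+4), auxT x0 x1 (n+1) p q)
        - (x0*x1) *
          (∑ p ∈ Finset.range (n+4), ∑ q ∈ Finset.range (n+4), auxT x0 x1 n p q) := by
  set B := n + 4 with hB
  have step1 : (∑ p ∈ Finset.range B, ∑ q ∈ Finset.range B, auxT x0 x1 (n+2) p q) * (x0*x1)
      = ∑ p ∈ Finset.range B, ∑ q ∈ Finset.range B,
          (x0^2 * auxT x0 x1 (n+1) p q
            + (if p = 0 then 0 else x1^2 * auxT x0 x1 (n+1) (p-1) q)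
            + (if q = 0 then 0 else auxT x0 x1 (n+1) p (q-1))
            - (if p = 0 then 0 else (x0*x1) * auxT x0 x1 n (p-1) q)) := by
    rw [Finset.sum_mul]
    refine Finset.sum_congr rfl fun p _ => ?_
    rw [Finset.sum_mul]
    exact Finset.sum_congr rfl fun q _ => auxT_pointwise hx0 hx1 n p q
  rw [step1]
  simp only [Finset.sum_add_distrib, Finset.sum_sub_distrib]
  have e1 : (∑ p ∈ Finset.range B, ∑ q ∈ Finset.range B, x0^2 * auxT x0 x1 (n+1) p q)
      = x0^2 * ∑ p ∈ Finset.range B, ∑ q ∈ Finset.range B, auxT x0 x1 (n+1) p q := by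
    simp only [← Finset.mul_sum]
  have e2 : (∑ p ∈ Finset.range B, ∑ q ∈ Finset.range B,
        (if p = 0 then 0 else x1^2 * auxT x0 x1 (n+1) (p-1) q))
      = x1^2 * ∑ p ∈ Finset.range B, ∑ q ∈ Finset.range B, auxT x0 x1 (n+1) p q := by
    have h1 : ∀ p : ℕ, (∑ q ∈ Finset.range B,
          (if p = 0 then 0 else x1^2 * auxT x0 x1 (n+1) (p-1) q))
        = if p = 0 then 0 else ∑ q ∈ Finset.range B, x1^2 * auxT x0 x1 (n+1) (p-1) q := by
      intro p
      split_ifs with h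
      · simp
      · rfl
    simp only [h1]
    rw [← sum_shift (fun p => ∑ q ∈ Finset.range B, x1^2 * auxT x0 x1 (n+1) p q) (n+3)
      (Finset.sum_eq_zero fun q _ => by rw [auxT_zero (n+1) (n+3) q (by omega)]; ring)]
    rw [Finset.mul_sum]
    exact Finset.sum_congr rfl fun p _ => by rw [Finset.mul_sum]
  have e3 : (∑ p ∈ Finset.range B, ∑ q ∈ Finset.range B,
        (if q = 0 then 0 else auxT x0 x1 (n+1) p (q-1)))
      = ∑ p ∈ Finset.range B, ∑ q ∈ Finset.range B, auxT x0 x1 (n+1) p q := by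
    refine Finset.sum_congr rfl fun p _ => ?_
    exact (sum_shift (fun q => auxT x0 x1 (n+1) p q) (n+3)
      (auxT_zero (n+1) p (n+3) (by omega))).symm
  have e4 : (∑ p ∈ Finset.range B, ∑ q ∈ Finset.range B,
        (if p = 0 then 0 else (x0*x1) * auxT x0 x1 n (p-1) q))
      = (x0*x1) * ∑ p ∈ Finset.range B, ∑ q ∈ Finset.range B, auxT x0 x1 n p q := by
    have h1 : ∀ p : ℕ, (∑ q ∈ Finset.range B,
          (if p = 0 then 0 else (x0*x1) * auxT x0 x1 n (p-1) q))
        = if p = 0 then 0 else ∑ q ∈ Finset.range B, (x0*x1) * auxT x0 x1 n (p-1) q := by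
      intro p
      split_ifs with h
      · simp
      · rfl
    simp only [h1]
    rw [← sum_shift (fun p => ∑ q ∈ Finset.range B, (x0*x1) * auxT x0 x1 n p q) (n+3)
      (Finset.sum_eq_zero fun q _ => by rw [auxT_zero n (n+3) q (by omega)]; ring)]
    rw [Finset.mul_sum]
    exact Finset.sum_congr rfl fun p _ => by rw [Finset.mul_sum]
  rw [e1, e2, e3, e4]
  ring


/-- explicit positive Laurent polynomial expression for x_n. -/
theorem q22_explicit_solution (x : ℤ → ℝ) (hpos : ∀ n, 0 < x n)
    (hrec : ∀ n : ℤ, x (n + 1) * x (n - 1) = x n ^ 2 + 1) (n : ℕ) :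
    x (n : ℤ) = ∑ p ∈ Finset.range (n + 1), ∑ q ∈ Finset.range (n + 1 - p),
      (intChoose ((p : ℤ) + (q : ℤ) - 1) (q : ℤ) *
          intChoose ((q : ℤ) + ((n - p - q : ℕ) : ℤ) - 1) ((n - p - q : ℕ) : ℤ) : ℝ) *
        x 0 ^ (1 + ((n - p - q : ℕ) : ℤ) - (p : ℤ) - (q : ℤ)) *
        x 1 ^ ((p : ℤ) - (q : ℤ) - ((n - p - q : ℕ) : ℤ)) := by
  have hx0 : x 0 ≠ 0 := ne_of_gt (hpos 0)
  have hx1 : x 1 ≠ 0 := ne_of_gt (hpos 1)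
  -- linear recurrence
  have hlin : ∀ m : ℕ, (x ((m:ℤ)+2) + x (m:ℤ)) * (x 0 * x 1)
      = (x 0^2 + x 1^2 + 1) * x ((m:ℤ)+1) := by
    intro m
    induction m with
    | zero =>
      have h := hrec 1
      norm_num at h ⊢
      linear_combination x 1 * h
    | succ m IH =>
      have h1 := hrec ((m:ℤ)+2)
      have h2 := hrec ((m:ℤ)+1)
      rw [show (m:ℤ)+2+1 = (m:ℤ)+3 by ring, show (m:ℤ)+2-1 = (m:ℤ)+1 by ring] at h1
      rw [show (m:ℤ)+1+1 = (m:ℤ)+2 by ring, show (m:ℤ)+1-1 = (m:ℤ) by ring] at h2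
      have hxn1 : x ((m:ℤ)+1) ≠ 0 := ne_of_gt (hpos _)
      push_cast
      rw [show ((m:ℤ)+1+2) = (m:ℤ)+3 by ring, show ((m:ℤ)+1+1) = (m:ℤ)+2 by ring]
      apply mul_right_cancel₀ hxn1
      linear_combination (x 0 * x 1) * h1 - (x 0 * x 1) * h2 + x ((m:ℤ)+2) * IH
  -- key induction
  have key : ∀ m : ℕ, x (m:ℤ) = ∑ p ∈ Finset.range (m+1), ∑ q ∈ Finset.range (m+1-p),
      auxT (x 0) (x 1) m p q := by
    have base0 : x (0:ℤ) = ∑ p ∈ Finset.range (0+1), ∑ q ∈ Finset.range (0+1-p),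
        auxT (x 0) (x 1) 0 p q := by
      norm_num [auxT, auxMo, auxE_zero]
    have base1 : x (1:ℤ) = ∑ p ∈ Finset.range (1+1), ∑ q ∈ Finset.range (1+1-p),
        auxT (x 0) (x 1) 1 p q := by
      norm_num [Finset.sum_range_succ, auxT, auxMo, auxE_zero, auxE_zero_left]
    have step : ∀ m : ℕ,
        x (m:ℤ) = (∑ p ∈ Finset.range (m+1), ∑ q ∈ Finset.range (m+1-p),
          auxT (x 0) (x 1) m p q) →
        x ((m:ℤ)+1) = (∑ p ∈ Finset.range (m+2), ∑ q ∈ Finset.range (m+2-p),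
          auxT (x 0) (x 1) (m+1) p q) →
        x ((m:ℤ)+2) = (∑ p ∈ Finset.range (m+3), ∑ q ∈ Finset.range (m+3-p),
          auxT (x 0) (x 1) (m+2) p q) := by
      intro m ih0 ih1
      have hb0 := sum_box (x0 := x 0) (x1 := x 1) m (m+4) (by omega)
      have hb1 := sum_box (x0 := x 0) (x1 := x 1) (m+1) (m+4) (by omega)
      have hb2 := sum_box (x0 := x 0) (x1 := x 1) (m+2) (m+4) (by omega)
      rw [show m+1+1 = m+2 from rfl] at hb1
      rw [show m+2+1 = m+3 from rfl] at hb2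
      rw [hb2]
      have hbr := box_rec (x0 := x 0) (x1 := x 1) hx0 hx1 m
      have hx01 : x 0 * x 1 ≠ 0 := mul_ne_zero hx0 hx1
      apply mul_right_cancel₀ hx01
      rw [hbr]
      rw [← hb1, ← hb0, ← ih0, ← ih1]
      have hl := hlin m
      linear_combination hl
    intro m
    induction m using Nat.twoStepInduction with
    | zero => exact_mod_cast base0
    | one => exact_mod_cast base1
    | more m ih0 ih1 =>
      have := step m (by exact_mod_cast ih0) (by exact_mod_cast ih1)
      rw [show ((m+2:ℕ):ℤ) = (m:ℤ)+2 by push_cast; ring]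
      exact_mod_cast this
  rw [key n]
  refine Finset.sum_congr rfl fun p hp => Finset.sum_congr rfl fun q hq => ?_
  simp only [Finset.mem_range] at hp hq
  have hl : ((n - p - q : ℕ) : ℤ) = (n:ℤ) - p - q := by omega
  rw [hl, auxT, auxMo, auxE, auxE]
  push_cast
  ring
end

section
/- Let (x_n)_{n∈ℤ} be a (1,4)-sequence. Then for all n ∈ ℤ one has x_{2n}·x_{2n−2} − 1 = x_{2n−1} > 0, and the even subsequence u_n = x_{2n} satisfies u_{n+1}·(u_n·u_{n−1} − 1) = u_n³ + u_{n−1} for all n ∈ ℤ. -/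
/-! Clearing the denominator in the even recurrence expresses each odd term through its two even
neighbours, `x (2n-1) = x (2n) x (2n-2) - 1`. Substituting this into the odd recurrence eliminates
the odd terms, and the remaining identity is a rational-function identity in the even terms. -/

section FieldIdentities

variable {K : Type*} [Field K]

theorem mul_sub_one_eq_of_eq_one_add_div {a b c : K} (hb : b ≠ 0) (h : a = (1 + c) / b) :
    a * b - 1 = c := by
  rw [h, div_mul_cancel₀ _ hb]
  ring

theorem mul_mul_sub_one_eq_of_eq_one_add_div {u v w y : K} (hu : u ≠ 0) (huv : u * v - 1 ≠ 0)
    (hw : w = (1 + y) / u) (hy : y = (1 + u ^ 4) / (u * v - 1)) :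
    w * (u * v - 1) = u ^ 3 + v := by
  rw [hw, hy]
  field_simp
  ring

end FieldIdentities

/-- for a (1,4)-sequence, x_{2n}·x_{2n−2} − 1 = x_{2n−1} > 0 and
the even subsequence u_n = x_{2n} satisfies u_{n+1}(u_n u_{n−1} − 1) = u_n³ + u_{n−1}. -/
theorem q14_even_subsequence (x : ℤ → ℝ) (hpos : ∀ n, 0 < x n)
    (heven : ∀ n : ℤ, x (2 * n) = (1 + x (2 * n - 1)) / x (2 * n - 2))
    (hodd : ∀ n : ℤ, x (2 * n + 1) = (1 + x (2 * n) ^ 4) / x (2 * n - 1)) :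
    (∀ n : ℤ, x (2 * n) * x (2 * n - 2) - 1 = x (2 * n - 1) ∧ 0 < x (2 * n - 1)) ∧
    (∀ n : ℤ, x (2 * (n + 1)) * (x (2 * n) * x (2 * (n - 1)) - 1)
        = x (2 * n) ^ 3 + x (2 * (n - 1))) := by
  have hodd_eq : ∀ n : ℤ, x (2 * n) * x (2 * n - 2) - 1 = x (2 * n - 1) := fun n =>
    mul_sub_one_eq_of_eq_one_add_div (hpos _).ne' (heven n)
  refine ⟨fun n => ⟨hodd_eq n, hpos _⟩, fun n => ?_⟩
  have hnext : x (2 * (n + 1)) = (1 + x (2 * n + 1)) / x (2 * n) := by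
    simpa only [show 2 * (n + 1) - 1 = 2 * n + 1 by ring, show 2 * (n + 1) - 2 = 2 * n by ring]
      using heven (n + 1)
  rw [show 2 * (n - 1) = 2 * n - 2 by ring]
  refine mul_mul_sub_one_eq_of_eq_one_add_div (hpos _).ne' ?_ hnext ?_
  · exact hodd_eq n ▸ (hpos _).ne'
  · exact hodd_eq n ▸ hodd n
end

section
/- Let (x_n)_{n∈ℤ} be a (1,4)-sequence. Then for all n ∈ ℤ one has x_{2n+2} + x_{2n−2} = c·x_{2n}, where c = (x_0⁴ + (1 + x_1)²)/(x_0²·x_1). In particular (x_{2n+2} + x_{2n−2})/x_{2n} is independent of n, and c also equals (x_2⁴ + (1 + x_1)²)/(x_2²·x_1). -/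
/-!
For `a ≠ 0` the quantity `K(a, b) = (a⁴ + (1 + b)²) / (a² b)` can be rewritten in two ways:
if `b b' = 1 + a⁴` then `K(a, b) = (b + b' + 2) / a²`, and if `a a' = 1 + b` then
`K(a, b) = (a² + a'²) / b`. Both forms are symmetric, so `K` is unchanged by either recurrence
step, hence `K(x₂ₙ, x₂ₙ₊₁) = c` for all `n`. The first form then gives
`c x₂ₙ² = x₂ₙ₋₁ + x₂ₙ₊₁ + 2 = x₂ₙ (x₂ₙ₋₂ + x₂ₙ₊₂)`.
-/

section Field

variable {F : Type*} [Field F]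

def conservedQuantity (a b : F) : F := (a ^ 4 + (1 + b) ^ 2) / (a ^ 2 * b)

theorem conservedQuantity_eq_of_mul_eq_one_add_pow_four {a b b' : F} (ha : a ≠ 0) (hb : b ≠ 0)
    (h : b * b' = 1 + a ^ 4) : conservedQuantity a b = (b + b' + 2) / a ^ 2 := by
  unfold conservedQuantity
  field_simp
  linear_combination -h

theorem conservedQuantity_eq_of_mul_eq_one_add {a a' b : F} (ha : a ≠ 0) (h : a * a' = 1 + b) :
    conservedQuantity a b = (a ^ 2 + a' ^ 2) / b := by
  unfold conservedQuantity
  rw [← h, mul_pow, show a ^ 4 + a ^ 2 * a' ^ 2 = a ^ 2 * (a ^ 2 + a' ^ 2) by ring,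
    mul_div_mul_left _ _ (pow_ne_zero 2 ha)]

theorem conservedQuantity_right_eq {a b b' : F} (ha : a ≠ 0) (hb : b ≠ 0) (hb' : b' ≠ 0)
    (h : b * b' = 1 + a ^ 4) : conservedQuantity a b = conservedQuantity a b' := by
  rw [conservedQuantity_eq_of_mul_eq_one_add_pow_four ha hb h,
    conservedQuantity_eq_of_mul_eq_one_add_pow_four ha hb' (by rw [mul_comm, h]), add_comm b]

theorem conservedQuantity_left_eq {a a' b : F} (ha : a ≠ 0) (ha' : a' ≠ 0)
    (h : a * a' = 1 + b) : conservedQuantity a b = conservedQuantity a' b := by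
  rw [conservedQuantity_eq_of_mul_eq_one_add ha h,
    conservedQuantity_eq_of_mul_eq_one_add ha' (by rw [mul_comm, h]), add_comm]

end Field

section Sequence

variable {x : ℤ → ℝ}

theorem even_mul_eq (hpos : ∀ n, 0 < x n)
    (heven : ∀ n : ℤ, x (2 * n) = (1 + x (2 * n - 1)) / x (2 * n - 2)) (n : ℤ) :
    x (2 * n) * x (2 * n + 2) = 1 + x (2 * n + 1) := by
  have h := heven (n + 1)
  rw [show 2 * (n + 1) - 1 = 2 * n + 1 by ring, show 2 * (n + 1) - 2 = 2 * n by ring,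
    show 2 * (n + 1) = 2 * n + 2 by ring, eq_div_iff (hpos _).ne'] at h
  rw [mul_comm, h]

theorem odd_mul_eq (hpos : ∀ n, 0 < x n)
    (hodd : ∀ n : ℤ, x (2 * n + 1) = (1 + x (2 * n) ^ 4) / x (2 * n - 1)) (n : ℤ) :
    x (2 * n - 1) * x (2 * n + 1) = 1 + x (2 * n) ^ 4 := by
  rw [hodd n, mul_div_cancel₀ _ (hpos _).ne']

theorem conservedQuantity_eq_of_recurrence (hpos : ∀ n, 0 < x n)
    (heven : ∀ n : ℤ, x (2 * n) = (1 + x (2 * n - 1)) / x (2 * n - 2))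
    (hodd : ∀ n : ℤ, x (2 * n + 1) = (1 + x (2 * n) ^ 4) / x (2 * n - 1)) (n : ℤ) :
    conservedQuantity (x (2 * n)) (x (2 * n + 1)) = conservedQuantity (x 0) (x 1) := by
  have hperiodic :
      Function.Periodic (fun m : ℤ ↦ conservedQuantity (x (2 * m)) (x (2 * m + 1))) 1 := by
    intro m
    have hodd' := odd_mul_eq hpos hodd (m + 1)
    rw [show 2 * (m + 1) - 1 = 2 * m + 1 by ring, show 2 * (m + 1) = 2 * m + 2 by ring] at hodd'
    dsimp only
    rw [show 2 * (m + 1) = 2 * m + 2 by ring,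
      conservedQuantity_left_eq (hpos _).ne' (hpos _).ne' (even_mul_eq hpos heven m)]
    exact (conservedQuantity_right_eq (hpos _).ne' (hpos _).ne' (hpos _).ne' hodd').symm
  simpa using hperiodic.int_mul_eq n

end Sequence

/-- conserved quantity of the (1,4) case. -/
theorem q14_conserved_quantity (x : ℤ → ℝ) (hpos : ∀ n, 0 < x n)
    (heven : ∀ n : ℤ, x (2 * n) = (1 + x (2 * n - 1)) / x (2 * n - 2))
    (hodd : ∀ n : ℤ, x (2 * n + 1) = (1 + x (2 * n) ^ 4) / x (2 * n - 1))
    (c : ℝ) (hc : c = (x 0 ^ 4 + (1 + x 1) ^ 2) / (x 0 ^ 2 * x 1)) :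
    (∀ n : ℤ, x (2 * n + 2) + x (2 * n - 2) = c * x (2 * n)) ∧
    c = (x 2 ^ 4 + (1 + x 1) ^ 2) / (x 2 ^ 2 * x 1) := by
  have hne : ∀ n, x n ≠ 0 := fun n ↦ (hpos n).ne'
  change c = conservedQuantity (x 0) (x 1) at hc
  refine ⟨fun n ↦ ?_, ?_⟩
  · have hsq : c * x (2 * n) ^ 2 = x (2 * n + 1) + x (2 * n - 1) + 2 := by
      rw [hc, ← conservedQuantity_eq_of_recurrence hpos heven hodd n,
        conservedQuantity_eq_of_mul_eq_one_add_pow_four (hne _) (hne _)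
          (by rw [mul_comm]; exact odd_mul_eq hpos hodd n),
        div_mul_cancel₀ _ (pow_ne_zero 2 (hne _))]
    have hprev := even_mul_eq hpos heven (n - 1)
    rw [show 2 * (n - 1) + 2 = 2 * n by ring, show 2 * (n - 1) + 1 = 2 * n - 1 by ring,
      show 2 * (n - 1) = 2 * n - 2 by ring] at hprev
    refine mul_left_cancel₀ (hne (2 * n)) ?_
    linear_combination even_mul_eq hpos heven n + hprev - hsq
  · have h := even_mul_eq hpos heven 0
    simp only [mul_zero, zero_add] at h
    rw [hc, conservedQuantity_left_eq (hne 0) (hne 2) h]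
    rfl
end

section
/- Let (x_n)_{n∈ℤ} be a (1,4)-sequence. Then for every integer n ≥ 0, x_{2n+2} = Σ_{q,ℓ,r,s,m ≥ 0} x_2^{1+2n−4(q+ℓ+r+s)}·x_1^{q+ℓ+m−n}·C(n−q−ℓ; q−r, r, s)·C(q+ℓ−1, ℓ)·C(2r+s+ℓ, m), where the exponents are integers (integer powers of the positive reals x_1, x_2) and the binomial and multinomial conventions below are used (only finitely many terms are nonzero). -/
/-- Multinomial convention: C(n; m_1,…,m_k) = n!/(m_1!⋯m_k!(n−Σm_j)!) if all
m_j ≥ 0 and Σ m_j ≤ n, C(−1; 0,…,0) = 1, and 0 otherwise. -/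
def intMultinomial (n : ℤ) (ms : List ℤ) : ℤ :=
  if (∀ a ∈ ms, 0 ≤ a) ∧ ms.sum ≤ n then
    (Nat.factorial n.toNat /
      ((ms.map fun a => Nat.factorial a.toNat).prod *
        Nat.factorial (n - ms.sum).toNat) : ℕ)
  else if n = -1 ∧ ∀ a ∈ ms, a = 0 then 1 else 0

/-!
Write `a = x 1`, `b = x 2`. Eliminating the odd terms gives
`x (2k) * x (2k+2) * x (2k+4) = x (2k) + x (2k+4) + x (2k+2) ^ 3`, so that
`(x (2k) ^ 2 + x (2k+2) ^ 2) / x (2k+1)` is conserved and the even terms satisfy the linear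
recurrence `x (2k) + x (2k+4) = K * x (2k+2)` with `K = (b ^ 4 + (1 + a) ^ 2) / (a * b ^ 2)`.

On the other side, since `C(N; q-r, r, s) = C(N, q) * C(q, r) * C(N-q, s)`, the sums over `m`, `s`
and `r` are binomial expansions, and the explicit sum becomes `b * (b ^ 2 / a) ^ n * c n`, where
`c n = ∑ C(n-q-l, q) * C(q+l-1, l) * A ^ (n-2q-l) * B ^ q * S ^ l` for `A = 1 + (1 + a) / b ^ 4`,
`B = a / b ^ 4 * (1 + (1 + a) ^ 2 / b ^ 4)`, `S = a * (1 + a) / b ^ 4`. Two Pascal rules give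
`c (n+2) = (A + S) * c (n+1) - (A * S - B) * c n`, which is the same recurrence since
`A + S = 1 + (1 + a) ^ 2 / b ^ 4` and `A * S - B = a ^ 2 / b ^ 4`; the initial values agree.
-/

open Finset

section Tiling

variable {R : Type*} [CommRing R] (A B S : R)

def tilingCoeff (k n q l : ℕ) : ℕ :=
  if 2 * q + l ≤ n then (n - q - l).choose q * (q + l + k - 1).choose l else 0

def tilingTerm (k n q l : ℕ) : R :=
  tilingCoeff k n q l * A ^ (n - 2 * q - l) * B ^ q * S ^ l

/-- `tilingSum A B S 0 n` weighs the tilings of a board of length `n` by squares of weight `A` and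
by blocks made of a domino of weight `B` followed by any number of squares of weight `S`; `q` counts
the blocks and `l` the squares of weight `S`, and `k = 1` also allows such squares at the start.
For `k ≤ 1` the generating function is
`(1 - S z) ^ (1 - k) / ((1 - A z) * (1 - S z) - B z ^ 2)`. -/
def tilingSum (k n : ℕ) : R :=
  ∑ q ∈ range (n + 1), ∑ l ∈ range (n + 1), tilingTerm A B S k n q l

theorem tilingCoeff_zero (n q l : ℕ) :
    tilingCoeff 0 n q l = (n - q - l).choose q * (q + l - 1).choose l := by
  unfold tilingCoeff
  split_ifs with h
  · rfl
  · rcases Nat.lt_or_ge n (q + l) with h' | h'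
    · rcases q with _ | q
      · simp [Nat.choose_eq_zero_of_lt (show l - 1 < l by omega)]
      · simp [show n - (q + 1) - l = 0 by omega]
    · simp [Nat.choose_eq_zero_of_lt (show n - q - l < q by omega)]

theorem tilingTerm_eq_zero {k n q l : ℕ} (h : n < 2 * q + l) : tilingTerm A B S k n q l = 0 := by
  simp [tilingTerm, tilingCoeff, if_neg (not_le.2 h)]

theorem tilingTerm_zero_add_two_zero (n l : ℕ) :
    tilingTerm A B S 0 (n + 2) 0 l = A * tilingTerm A B S 0 (n + 1) 0 l := by
  rcases l with _ | l
  · simp [tilingTerm, tilingCoeff, pow_succ']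
  · simp [tilingTerm, tilingCoeff_zero]

theorem tilingTerm_zero_add_two_succ (n q l : ℕ) :
    tilingTerm A B S 0 (n + 2) (q + 1) l =
      A * tilingTerm A B S 0 (n + 1) (q + 1) l + B * tilingTerm A B S 1 n q l := by
  by_cases h : 2 * q + l ≤ n
  · have hpascal := Nat.choose_succ_succ' (n - q - l) q
    rw [show n - q - l + 1 = n + 1 - q - l by omega] at hpascal
    simp only [tilingTerm, tilingCoeff, if_pos h, if_pos (show 2 * (q + 1) + l ≤ n + 2 by omega),
      show n + 2 - 2 * (q + 1) - l = n - 2 * q - l by omega,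
      show n + 1 - (q + 1) - l = n - q - l by omega,
      show n + 2 - (q + 1) - l = n + 1 - q - l by omega,
      show q + 1 + l + 0 - 1 = q + l + 1 - 1 by omega, hpascal]
    split_ifs with h'
    · rw [show n - 2 * q - l = n + 1 - 2 * (q + 1) - l + 1 by omega]
      push_cast; ring
    · rw [Nat.choose_eq_zero_of_lt (show n - q - l < q + 1 by omega)]
      push_cast; ring
  · simp [tilingTerm_eq_zero A B S (show n + 2 < 2 * (q + 1) + l by omega),
      tilingTerm_eq_zero A B S (show n + 1 < 2 * (q + 1) + l by omega),
      tilingTerm_eq_zero A B S (show n < 2 * q + l by omega)]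

theorem tilingTerm_succ_add_one_zero (k n q : ℕ) :
    tilingTerm A B S (k + 1) (n + 1) q 0 = tilingTerm A B S k (n + 1) q 0 := by
  simp [tilingTerm, tilingCoeff]

theorem tilingTerm_succ_add_one_succ (k n q l : ℕ) :
    tilingTerm A B S (k + 1) (n + 1) q (l + 1) =
      tilingTerm A B S k (n + 1) q (l + 1) + S * tilingTerm A B S (k + 1) n q l := by
  by_cases h : 2 * q + l ≤ n
  · have hpascal := Nat.choose_succ_succ' (q + l + k) l
    simp only [tilingTerm, tilingCoeff, if_pos h, if_pos (show 2 * q + (l + 1) ≤ n + 1 by omega),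
      show n + 1 - 2 * q - (l + 1) = n - 2 * q - l by omega,
      show n + 1 - q - (l + 1) = n - q - l by omega,
      show q + (l + 1) + (k + 1) - 1 = q + l + k + 1 by omega,
      show q + (l + 1) + k - 1 = q + l + k by omega,
      show q + l + (k + 1) - 1 = q + l + k by omega, hpascal]
    push_cast; ring
  · simp [tilingTerm_eq_zero A B S (show n + 1 < 2 * q + (l + 1) by omega),
      tilingTerm_eq_zero A B S (show n < 2 * q + l by omega)]

theorem tilingSum_eq_sum_range {k n M M' : ℕ} (hM : n < M) (hM' : n < M') :
    tilingSum A B S k n = ∑ q ∈ range M, ∑ l ∈ range M', tilingTerm A B S k n q l := by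
  have hvanish : ∀ q l, n < q ∨ n < l → tilingTerm A B S k n q l = 0 :=
    fun q l h => tilingTerm_eq_zero A B S (by omega)
  unfold tilingSum
  rw [sum_subset (range_subset_range.2 (Nat.succ_le_of_lt hM)) fun q _ hq =>
    sum_eq_zero fun l _ => hvanish q l (Or.inl (by simpa using hq))]
  refine sum_congr rfl fun q _ => sum_subset (range_subset_range.2 (Nat.succ_le_of_lt hM'))
    fun l _ hl => hvanish q l (Or.inr (by simpa using hl))

theorem tilingSum_zero_add_two_eq_mul_add_mul (n : ℕ) :
    tilingSum A B S 0 (n + 2) = A * tilingSum A B S 0 (n + 1) + B * tilingSum A B S 1 n := by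
  rw [tilingSum_eq_sum_range A B S (n := n + 2) (M := n + 3) (M' := n + 3) (by omega) (by omega),
    tilingSum_eq_sum_range A B S (k := 1) (n := n) (M := n + 2) (M' := n + 3) (by omega) (by omega),
    tilingSum_eq_sum_range A B S (n := n + 1) (M := n + 3) (M' := n + 3) (by omega) (by omega),
    sum_range_succ' _ (n + 2),
    sum_range_succ' (fun q => ∑ l ∈ range (n + 3), tilingTerm A B S 0 (n + 1) q l)]
  simp only [tilingTerm_zero_add_two_succ, tilingTerm_zero_add_two_zero, sum_add_distrib,
    mul_add, mul_sum]
  ring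

theorem tilingSum_succ_add_one (k n : ℕ) :
    tilingSum A B S (k + 1) (n + 1) =
      tilingSum A B S k (n + 1) + S * tilingSum A B S (k + 1) n := by
  rw [tilingSum_eq_sum_range A B S (k := k + 1) (n := n) (M := n + 2) (M' := n + 1) (by omega)
    (by omega)]
  unfold tilingSum
  rw [mul_sum, ← sum_add_distrib]
  refine sum_congr rfl fun q _ => ?_
  rw [sum_range_succ' _ (n + 1), sum_range_succ' (fun l => tilingTerm A B S k (n + 1) q l) (n + 1)]
  simp only [tilingTerm_succ_add_one_succ, tilingTerm_succ_add_one_zero, sum_add_distrib, mul_sum]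
  ring

theorem tilingSum_zero_zero : tilingSum A B S 0 0 = 1 := by
  simp [tilingSum, tilingTerm, tilingCoeff]

theorem tilingSum_one_zero : tilingSum A B S 1 0 = 1 := by
  simp [tilingSum, tilingTerm, tilingCoeff]

theorem tilingSum_zero_one : tilingSum A B S 0 1 = A := by
  simp [tilingSum, tilingTerm, tilingCoeff, sum_range_succ]

theorem tilingSum_zero_add_two (n : ℕ) :
    tilingSum A B S 0 (n + 2) =
      (A + S) * tilingSum A B S 0 (n + 1) - (A * S - B) * tilingSum A B S 0 n := by
  rcases n with _ | n
  · rw [tilingSum_zero_add_two_eq_mul_add_mul, tilingSum_zero_one, tilingSum_zero_zero,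
      tilingSum_one_zero]
    ring
  · linear_combination tilingSum_zero_add_two_eq_mul_add_mul A B S (n + 1)
      + B * tilingSum_succ_add_one A B S 0 n - S * tilingSum_zero_add_two_eq_mul_add_mul A B S n

end Tiling

theorem intChoose_natCast (E m : ℕ) : intChoose E m = E.choose m := by
  unfold intChoose
  split_ifs with h h'
  · simp
  · omega
  · simp [Nat.choose_eq_zero_of_lt (show E < m by omega)]

theorem intChoose_add_sub_one (q l : ℕ) :
    intChoose ((q : ℤ) + l - 1) l = (q + l - 1).choose l := by
  rcases Nat.eq_zero_or_pos (q + l) with h | h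
  · obtain ⟨rfl, rfl⟩ : q = 0 ∧ l = 0 := by omega
    simp [intChoose]
  · rw [show (q : ℤ) + l - 1 = ((q + l - 1 : ℕ) : ℤ) by omega, intChoose_natCast]

theorem intMultinomial_three (N q r s : ℕ) :
    intMultinomial N [(q : ℤ) - r, r, s] =
      (N.choose q * q.choose r * (N - q).choose s : ℕ) := by
  unfold intMultinomial
  simp only [List.forall_mem_cons, List.not_mem_nil, IsEmpty.forall_iff, implies_true, and_true,
    List.sum_cons, List.sum_nil, List.map_cons, List.map_nil, List.prod_cons, List.prod_nil]
  by_cases h : r ≤ q ∧ q + s ≤ N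
  · obtain ⟨hrq, hqs⟩ := h
    rw [if_pos (by omega), show ((q : ℤ) - r).toNat = q - r by omega, show (N : ℤ).toNat = N by omega,
      show ((r : ℤ)).toNat = r by omega, show ((s : ℤ)).toNat = s by omega,
      show ((N : ℤ) - ((q : ℤ) - r + (r + (s + 0)))).toNat = N - q - s by omega]
    congr 1
    apply Nat.div_eq_of_eq_mul_left (by positivity)
    rw [← Nat.choose_mul_factorial_mul_factorial (show q ≤ N by omega),
      ← Nat.choose_mul_factorial_mul_factorial hrq,
      ← Nat.choose_mul_factorial_mul_factorial (show s ≤ N - q by omega),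
      show N - q - s = N - s - q by omega]
    ring
  · rw [not_and_or] at h
    rw [if_neg (by omega), if_neg (by omega)]
    rcases Nat.lt_or_ge q r with h' | h'
    · simp [Nat.choose_eq_zero_of_lt h']
    rcases Nat.lt_or_ge N q with h'' | h''
    · simp [Nat.choose_eq_zero_of_lt h'']
    · simp [Nat.choose_eq_zero_of_lt (show N - q < s by omega)]

theorem intMultinomial_mul_intChoose (n q l r s : ℕ) :
    intMultinomial ((n : ℤ) - q - l) [(q : ℤ) - r, r, s] * intChoose ((q : ℤ) + l - 1) l =
      ((n - q - l).choose q * q.choose r * (n - q - l - q).choose s * (q + l - 1).choose l :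
        ℕ) := by
  rw [intChoose_add_sub_one]
  by_cases h : q + l ≤ n
  · rw [show (n : ℤ) - q - l = ((n - q - l : ℕ) : ℤ) by omega, intMultinomial_three]
    push_cast; ring
  · rcases q with _ | q
    · simp [Nat.choose_eq_zero_of_lt (show l - 1 < l by omega)]
    · unfold intMultinomial
      simp only [List.forall_mem_cons, List.not_mem_nil, IsEmpty.forall_iff, implies_true, and_true,
        List.sum_cons, List.sum_nil]
      rw [if_neg (by omega), if_neg (by omega)]
      simp [show n - (q + 1) - l = 0 by omega]

theorem finsum_mul_choose_mul_pow {R : Type*} [CommSemiring R] (c x : R) (E : ℕ) :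
    ∑ᶠ m : ℕ, c * (E.choose m * x ^ m) = c * (1 + x) ^ E := by
  rw [finsum_eq_sum_of_support_subset (s := range (E + 1)), add_comm 1 x, add_pow, mul_sum]
  · simp only [one_pow, mul_one]
    exact sum_congr rfl fun m _ => by ring
  · intro m hm
    by_contra h
    simp [Nat.choose_eq_zero_of_lt (show E < m by simpa using h)] at hm

theorem finsum_finsum_mul_choose_mul_pow {R : Type*} [CommSemiring R] (c x y : R) (E F : ℕ) :
    ∑ᶠ (r : ℕ) (s : ℕ), c * (E.choose r * x ^ r) * (F.choose s * y ^ s) =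
      c * (1 + x) ^ E * (1 + y) ^ F := by
  simp only [finsum_mul_choose_mul_pow, mul_right_comm c _ ((1 + y) ^ F)]

theorem finsum_finsum_eq_sum_sum {M : Type*} [AddCommMonoid M] {f : ℕ → ℕ → M} {N : ℕ}
    (hf : ∀ q l, N ≤ q ∨ N ≤ l → f q l = 0) :
    ∑ᶠ q, ∑ᶠ l, f q l = ∑ q ∈ range N, ∑ l ∈ range N, f q l := by
  have inner : ∀ q, ∑ᶠ l, f q l = ∑ l ∈ range N, f q l := fun q =>
    finsum_eq_sum_of_support_subset _ fun l hl => by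
      by_contra h
      exact hl (hf q l (Or.inr (by simpa using h)))
  simp only [inner]
  refine finsum_eq_sum_of_support_subset _ fun q hq => ?_
  by_contra h
  exact hq (sum_eq_zero fun l _ => hf q l (Or.inl (by simpa using h)))

section ClosedForm

noncomputable def explicitSummand (a b : ℝ) (n q l r s m : ℕ) : ℝ :=
  b ^ (1 + 2 * (n : ℤ) - 4 * ((q : ℤ) + (l : ℤ) + (r : ℤ) + (s : ℤ))) *
  a ^ ((q : ℤ) + (l : ℤ) + (m : ℤ) - (n : ℤ)) *
  ((intMultinomial ((n : ℤ) - q - l) [(q : ℤ) - r, (r : ℤ), (s : ℤ)] *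
    intChoose ((q : ℤ) + l - 1) (l : ℤ) *
    intChoose (2 * (r : ℤ) + s + l) (m : ℤ) : ℤ) : ℝ)

noncomputable def evenClosedForm (a b : ℝ) (n : ℕ) : ℝ :=
  b * (b ^ 2 / a) ^ n *
    tilingSum (1 + (1 + a) / b ^ 4) (a / b ^ 4 * (1 + (1 + a) ^ 2 / b ^ 4))
      (a * (1 + a) / b ^ 4) 0 n

variable {a b : ℝ}

theorem evenClosedForm_add_two (ha : a ≠ 0) (hb : b ≠ 0) (n : ℕ) :
    evenClosedForm a b (n + 2) =
      (b ^ 4 + (1 + a) ^ 2) / (a * b ^ 2) * evenClosedForm a b (n + 1) - evenClosedForm a b n := by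
  simp only [evenClosedForm, tilingSum_zero_add_two, pow_add _ n, pow_one]
  generalize (b ^ 2 / a) ^ n = P
  generalize tilingSum (1 + (1 + a) / b ^ 4) (a / b ^ 4 * (1 + (1 + a) ^ 2 / b ^ 4))
    (a * (1 + a) / b ^ 4) 0 (n + 1) = c₁
  generalize tilingSum (1 + (1 + a) / b ^ 4) (a / b ^ 4 * (1 + (1 + a) ^ 2 / b ^ 4))
    (a * (1 + a) / b ^ 4) 0 n = c₀
  field_simp
  ring

theorem explicitSummand_eq (ha : a ≠ 0) (hb : b ≠ 0) (n q l r s m : ℕ) :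
    explicitSummand a b n q l r s m =
      b * (b ^ 2 / a) ^ n * (a / b ^ 4) ^ (q + l) * (b ^ 4)⁻¹ ^ (r + s) *
        ((n - q - l).choose q * q.choose r * (n - q - l - q).choose s * (q + l - 1).choose l) *
        ((2 * r + s + l).choose m * a ^ m) := by
  have hb' : b ^ (1 + 2 * (n : ℤ) - 4 * ((q : ℤ) + (l : ℤ) + (r : ℤ) + (s : ℤ))) =
      b ^ (1 + 2 * n) / b ^ (4 * (q + l + r + s)) := by
    rw [zpow_sub₀ hb]; norm_cast
  have ha' : a ^ ((q : ℤ) + (l : ℤ) + (m : ℤ) - (n : ℤ)) = a ^ (q + l + m) / a ^ n := by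
    rw [zpow_sub₀ ha]; norm_cast
  rw [explicitSummand, intMultinomial_mul_intChoose,
    show 2 * (r : ℤ) + s + l = ((2 * r + s + l : ℕ) : ℤ) by push_cast; ring,
    intChoose_natCast, hb', ha', div_pow, div_pow, inv_pow]
  push_cast
  field_simp
  ring

theorem finsum_explicitSummand (ha : a ≠ 0) (hb : b ≠ 0) (n q l : ℕ) :
    ∑ᶠ (r : ℕ) (s : ℕ) (m : ℕ), explicitSummand a b n q l r s m =
      b * (b ^ 2 / a) ^ n * tilingTerm (1 + (1 + a) / b ^ 4) (a / b ^ 4 * (1 + (1 + a) ^ 2 / b ^ 4))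
        (a * (1 + a) / b ^ 4) 0 n q l := by
  have hfactor : ∀ r s : ℕ,
      b * (b ^ 2 / a) ^ n * (a / b ^ 4) ^ (q + l) * (b ^ 4)⁻¹ ^ (r + s) *
        ((n - q - l).choose q * q.choose r * (n - q - l - q).choose s * (q + l - 1).choose l) *
        (1 + a) ^ (2 * r + s + l) =
      b * (b ^ 2 / a) ^ n * (n - q - l).choose q * (q + l - 1).choose l * (a / b ^ 4) ^ q *
        (a * (1 + a) / b ^ 4) ^ l * (q.choose r * ((1 + a) ^ 2 / b ^ 4) ^ r) *
        ((n - q - l - q).choose s * ((1 + a) / b ^ 4) ^ s) := by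
    intro r s
    simp only [div_pow, mul_pow, inv_pow, pow_add, pow_mul]
    ring
  simp only [explicitSummand_eq ha hb, finsum_mul_choose_mul_pow]
  simp only [hfactor, finsum_finsum_mul_choose_mul_pow]
  rw [tilingTerm, tilingCoeff_zero, show n - 2 * q - l = n - q - l - q by omega, mul_pow]
  push_cast
  ring

theorem finsum_explicitSummand_eq_evenClosedForm (ha : a ≠ 0) (hb : b ≠ 0) (n : ℕ) :
    ∑ᶠ (q : ℕ) (l : ℕ) (r : ℕ) (s : ℕ) (m : ℕ), explicitSummand a b n q l r s m =
      evenClosedForm a b n := by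
  simp only [finsum_explicitSummand ha hb]
  rw [finsum_finsum_eq_sum_sum (N := n + 1) fun q l h => by
      rw [tilingTerm_eq_zero _ _ _ (by omega), mul_zero],
    evenClosedForm, tilingSum, mul_sum]
  simp only [mul_sum]

end ClosedForm

section OneFourSequence

variable {x : ℤ → ℝ} (hpos : ∀ n, 0 < x n)
  (heven : ∀ n : ℤ, x (2 * n) = (1 + x (2 * n - 1)) / x (2 * n - 2))
  (hodd : ∀ n : ℤ, x (2 * n + 1) = (1 + x (2 * n) ^ 4) / x (2 * n - 1))

include hpos heven in
theorem even_mul_even (k : ℤ) : x (2 * k + 2) * x (2 * k) = 1 + x (2 * k + 1) := by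
  have h := heven (k + 1)
  rw [show 2 * (k + 1) = 2 * k + 2 by ring, show 2 * k + 2 - 1 = 2 * k + 1 by ring,
    show 2 * k + 2 - 2 = 2 * k by ring] at h
  rw [h, div_mul_cancel₀ _ (hpos _).ne']

include hpos hodd in
theorem odd_mul_odd (k : ℤ) : x (2 * k + 3) * x (2 * k + 1) = 1 + x (2 * k + 2) ^ 4 := by
  have h := hodd (k + 1)
  rw [show 2 * (k + 1) + 1 = 2 * k + 3 by ring, show 2 * (k + 1) = 2 * k + 2 by ring,
    show 2 * k + 2 - 1 = 2 * k + 1 by ring] at h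
  rw [h, div_mul_cancel₀ _ (hpos _).ne']

include hpos heven hodd in
theorem even_mul_even_mul_even (k : ℤ) :
    x (2 * k) * x (2 * k + 2) * x (2 * k + 4) = x (2 * k) + x (2 * k + 4) + x (2 * k + 2) ^ 3 := by
  have h₀ := even_mul_even hpos heven k
  have h₁ := even_mul_even hpos heven (k + 1)
  rw [show 2 * (k + 1) + 2 = 2 * k + 4 by ring, show 2 * (k + 1) + 1 = 2 * k + 3 by ring,
    show 2 * (k + 1) = 2 * k + 2 by ring] at h₁
  have h : x (2 * k + 2) * (x (2 * k) * x (2 * k + 2) * x (2 * k + 4) - x (2 * k) - x (2 * k + 4)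
      - x (2 * k + 2) ^ 3) = 0 := by
    linear_combination odd_mul_odd hpos hodd k + x (2 * k + 3) * h₀
      + (x (2 * k + 2) * x (2 * k) - 1) * h₁
  linear_combination (mul_eq_zero.1 h).resolve_left (hpos _).ne'

include hpos heven hodd in
theorem even_sq_add_sq (k : ℕ) :
    x (2 * k) ^ 2 + x (2 * k + 2) ^ 2 = (x 0 ^ 2 + x 2 ^ 2) / x 1 * x (2 * k + 1) := by
  induction k with
  | zero => simp [div_mul_cancel₀ _ (hpos 1).ne']
  | succ k ih =>
    have h₀ := even_mul_even hpos heven k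
    have h₁ := even_mul_even hpos heven (k + 1)
    push_cast at h₁ ⊢
    rw [show 2 * ((k : ℤ) + 1) + 2 = 2 * k + 4 by ring,
      show 2 * ((k : ℤ) + 1) + 1 = 2 * k + 3 by ring,
      show 2 * ((k : ℤ) + 1) = 2 * k + 2 by ring] at h₁ ⊢
    refine mul_right_cancel₀ (hpos (2 * k + 1)).ne' ?_
    -- for `u, v, w = x (2k), x (2k+2), x (2k+4)`:
    -- `(u²+v²) (v w - 1) - (v²+w²) (u v - 1) = (u - w) (u v w - u - w - v³)`
    linear_combination (x (2 * k + 4) - x (2 * k)) * even_mul_even_mul_even hpos heven hodd k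
      - (x (2 * k + 2) ^ 2 + x (2 * k + 4) ^ 2) * h₀ + (x (2 * k) ^ 2 + x (2 * k + 2) ^ 2) * h₁
      + x (2 * k + 3) * ih

include hpos heven hodd in
theorem even_add_even (k : ℕ) :
    x (2 * k) + x (2 * k + 4) = (x 0 ^ 2 + x 2 ^ 2) / x 1 * x (2 * k + 2) := by
  refine mul_right_cancel₀ (hpos (2 * k + 1)).ne' ?_
  linear_combination even_mul_even_mul_even hpos heven hodd k
    + x (2 * k + 2) * even_sq_add_sq hpos heven hodd k
    - (x (2 * k) + x (2 * k + 4)) * even_mul_even hpos heven k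

include hpos heven hodd in
theorem even_eq_evenClosedForm (n : ℕ) : x (2 * n + 2) = evenClosedForm (x 1) (x 2) n := by
  have ha := (hpos 1).ne'
  have hb := (hpos 2).ne'
  have hx₀ : x 0 = (1 + x 1) / x 2 := by
    have h := even_mul_even hpos heven 0
    simp only [mul_zero, zero_add] at h
    field_simp
    linarith
  have hK : (x 0 ^ 2 + x 2 ^ 2) / x 1 = (x 2 ^ 4 + (1 + x 1) ^ 2) / (x 1 * x 2 ^ 2) := by
    rw [hx₀]
    field_simp
    ring
  induction n using Nat.twoStepInduction with
  | zero => simp [evenClosedForm, tilingSum_zero_zero]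
  | one =>
    have h := even_add_even hpos heven hodd 0
    simp only [Nat.cast_zero, mul_zero, zero_add] at h
    rw [hK, hx₀] at h
    simp only [evenClosedForm, tilingSum_zero_one]
    field_simp at h ⊢
    push_cast
    linear_combination h
  | more n ih₀ ih₁ =>
    have h := even_add_even hpos heven hodd (n + 1)
    push_cast at h ih₁ ⊢
    rw [show 2 * ((n : ℤ) + 1) + 2 = 2 * n + 2 + 2 by ring] at ih₁
    rw [show 2 * ((n : ℤ) + 1) + 4 = 2 * (n + 2) + 2 by ring,
      show 2 * ((n : ℤ) + 1) = 2 * n + 2 by ring, hK, ih₀, ih₁] at h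
    rw [evenClosedForm_add_two ha hb]
    linear_combination h

end OneFourSequence

/-- explicit expression for x_{2n+2} in terms of (x_1, x_2). -/
theorem q14_explicit_case1 (x : ℤ → ℝ) (hpos : ∀ n, 0 < x n)
    (heven : ∀ n : ℤ, x (2 * n) = (1 + x (2 * n - 1)) / x (2 * n - 2))
    (hodd : ∀ n : ℤ, x (2 * n + 1) = (1 + x (2 * n) ^ 4) / x (2 * n - 1))
    (n : ℕ) :
    x (2 * (n : ℤ) + 2) =
      ∑ᶠ (q : ℕ), ∑ᶠ (l : ℕ), ∑ᶠ (r : ℕ), ∑ᶠ (s : ℕ), ∑ᶠ (m : ℕ),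
        x 2 ^ (1 + 2 * (n : ℤ) - 4 * ((q : ℤ) + (l : ℤ) + (r : ℤ) + (s : ℤ))) *
        x 1 ^ ((q : ℤ) + (l : ℤ) + (m : ℤ) - (n : ℤ)) *
        ((intMultinomial ((n : ℤ) - q - l) [(q : ℤ) - r, (r : ℤ), (s : ℤ)] *
          intChoose ((q : ℤ) + l - 1) (l : ℤ) *
          intChoose (2 * (r : ℤ) + s + l) (m : ℤ) : ℤ) : ℝ) := by
  exact (even_eq_evenClosedForm hpos heven hodd n).trans
    (finsum_explicitSummand_eq_evenClosedForm (hpos 1).ne' (hpos 2).ne' n).symm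
end

section
/- For every r ≥ 1, every real t, and all real weights y_1,…,y_{2r+1}, one has det(I − T_r(−t·y)) = Σ_{m=0}^{r+1} t^m·Z_m^{G_r}(y), where T_r(−t·y) denotes the transfer matrix T_r(t·y) with t replaced by −t. -/
/-- The edge set of the graph G_r: edges (1,2), (2r,2r+1), and
(2i,2i+1), (2i,2i+2), (2i+1,2i+2) for 1 ≤ i ≤ r−1. -/
def grEdges (r : ℕ) : Finset (ℕ × ℕ) :=
  {(1, 2), (2 * r, 2 * r + 1)} ∪
    (Finset.Icc 1 (r - 1)).biUnion fun i =>
      {(2 * i, 2 * i + 1), (2 * i, 2 * i + 2), (2 * i + 1, 2 * i + 2)}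

/-- Adjacency in the graph G_r. -/
def grAdj (r : ℕ) (a b : ℕ) : Prop := (a, b) ∈ grEdges r ∨ (b, a) ∈ grEdges r

instance (r a b : ℕ) : Decidable (grAdj r a b) :=
  inferInstanceAs (Decidable ((a, b) ∈ grEdges r ∨ (b, a) ∈ grEdges r))

/-- The hard-particle partition function Z_m^{G_r}(y). -/
noncomputable def hardZ (r m : ℕ) (y : ℕ → ℝ) : ℝ :=
  ∑ c ∈ (Finset.powersetCard m (Finset.Icc 1 (2 * r + 1))).filter
      (fun c => ∀ a ∈ c, ∀ b ∈ c, ¬ grAdj r a b),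
    ∏ i ∈ c, y i

/-- The transfer matrix T_r(t·y), a (2r+2)×(2r+2) matrix.  The index set
0 < 1 < 2 < 2' < 3 < 3' < ⋯ < r < r' < r+1 < r+2 is encoded by positions
in Fin (2r+2): vertex 0 ↦ 0, vertex 1 ↦ 1, vertex k ↦ 2k−2 and vertex
k' ↦ 2k−1 (2 ≤ k ≤ r), vertex r+1 ↦ 2r, vertex r+2 ↦ 2r+1.  The nonzero
entries are (T_r)_{k',k} = 1, (T_r)_{k,k'} = t·y_{2k−1} (k = 2,…,r);
(T_r)_{k+1,k} = 1, (T_r)_{k,k+1} = t·y_{2k} (k = 1,…,r);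
(T_r)_{1,0} = (T_r)_{r+2,r+1} = 1, (T_r)_{0,1} = t·y_1,
(T_r)_{r+1,r+2} = t·y_{2r+1}. -/
def Tmat (r : ℕ) (t : ℝ) (y : ℕ → ℝ) : Matrix (Fin (2 * r + 2)) (Fin (2 * r + 2)) ℝ :=
  Matrix.of fun p q =>
    if (p : ℕ) = (q : ℕ) + 1 ∧ ((q : ℕ) ≤ 1 ∨ (q : ℕ) % 2 = 0) then 1
    else if (p : ℕ) = (q : ℕ) + 2 ∧ (q : ℕ) % 2 = 0 ∧ 2 ≤ (q : ℕ) then 1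
    else if (q : ℕ) = (p : ℕ) + 1 ∧ ((p : ℕ) ≤ 1 ∨ (p : ℕ) % 2 = 0) then t * y ((p : ℕ) + 1)
    else if (q : ℕ) = (p : ℕ) + 2 ∧ (p : ℕ) % 2 = 0 ∧ 2 ≤ (p : ℕ) then t * y ((p : ℕ) + 2)
    else 0

/-!
Index the rows and columns of `T_r` by `0, …, 2r+1`. Every index `v > 0` has a parent
`tmatParent v < v`, and off the diagonal `1 - T_r(-t·y)` is supported on the edges
`{tmatParent v, v}` of the resulting forest, the edge of `v` carrying the entries `-1` and
`t·y_v`. In the Leibniz expansion only permutations moving every point along an edge survive.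
The largest point moved by such a permutation has both its image and its preimage below it,
hence both equal to its parent: it is swapped with its parent, and induction shows these
permutations are exactly the products of the swaps along the edges of a matching, the edge of
`v` contributing `-(-1 · t·y_v) = t·y_v`. Finally, the edges of `v` and `w` share an endpoint
exactly when `v` and `w` are adjacent in `G_r`, so matchings are hard-particle configurations.
-/

open Equiv Finset

namespace ForestMatrix

variable {ι : Type*} [LinearOrder ι] (p : ι → ι)

def MovesAlong (σ : Perm ι) : Prop := ∀ i, σ i = i ∨ σ i = p i ∨ p (σ i) = i

/-- A set of edges `{p v, v}` of the forest, each given by its upper end `v`, no two of which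
share an endpoint. -/
def IsMatching (C : Finset ι) : Prop :=
  (∀ v ∈ C, p v < v) ∧ (C : Set ι).PairwiseDisjoint fun v => ({p v, v} : Finset ι)

variable {p}

theorem swap_mul_apply_of_fixed {σ : Perm ι} {a b j : ι} (ha : σ a = a) (hb : σ b = b)
    (hja : j ≠ a) (hjb : j ≠ b) : (swap a b * σ) j = σ j :=
  swap_apply_of_ne_of_ne (fun h => hja (σ.injective (h.trans ha.symm)))
    (fun h => hjb (σ.injective (h.trans hb.symm)))

theorem IsMatching.subset {C D : Finset ι} (hD : IsMatching p D) (hCD : C ⊆ D) :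
    IsMatching p C :=
  ⟨fun v hv => hD.1 v (hCD hv), hD.2.subset (coe_subset.mpr hCD)⟩

theorem MovesAlong.apply_eq_of_lt (hp : ∀ i, p i ≤ i) {σ : Perm ι} (hσ : MovesAlong p σ)
    {v : ι} (hv : σ v < v) : σ v = p v := by
  rcases hσ v with h | h | h
  · exact absurd h hv.ne
  · exact h
  · exact absurd (h.symm.trans_le (hp _)) hv.not_ge

theorem MovesAlong.swap_mul {σ : Perm ι} (hσ : MovesAlong p σ) {i : ι} (hσpi : σ (p i) = p i)
    (hσi : σ i = i) : MovesAlong p (swap (p i) i * σ) := by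
  intro j
  by_cases hja : j = p i
  · subst hja; simp [hσpi]
  by_cases hjb : j = i
  · subst hjb; simp [hσi]
  rw [swap_mul_apply_of_fixed hσpi hσi hja hjb]
  exact hσ j

variable [Fintype ι]

def deficiencies (σ : Perm ι) : Finset ι := {v | σ v < v}

@[simp]
theorem mem_deficiencies {σ : Perm ι} {v : ι} : v ∈ deficiencies σ ↔ σ v < v := by
  simp [deficiencies]

theorem deficiencies_swap_mul {σ : Perm ι} {a b : ι} (hab : a < b) (ha : σ a = a)
    (hb : σ b = b) : deficiencies (swap a b * σ) = insert b (deficiencies σ) := by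
  ext j
  rw [mem_deficiencies, mem_insert, mem_deficiencies]
  by_cases hja : j = a
  · subst hja; simp [ha, hab.ne, hab.le]
  by_cases hjb : j = b
  · subst hjb; simp [hb, hab]
  rw [swap_mul_apply_of_fixed ha hb hja hjb]
  simp [hjb]

theorem IsMatching.two_mul_card_le {C : Finset ι} (hC : IsMatching p C) :
    2 * #C ≤ Fintype.card ι := by
  calc 2 * #C = #(C.biUnion fun v => ({p v, v} : Finset ι)) := by
        rw [card_biUnion hC.2, mul_comm, ← smul_eq_mul, ← sum_const]
        exact sum_congr rfl fun v hv => (card_pair (hC.1 v hv).ne).symm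
    _ ≤ Fintype.card ι := card_le_univ _

theorem MovesAlong.apply_max_support (hp : ∀ i, p i ≤ i) {σ : Perm ι} (hσ : MovesAlong p σ)
    {i : ι} (hi : i ∈ σ.support) (hmax : ∀ j ∈ σ.support, j ≤ i) :
    σ i = p i ∧ σ (p i) = i := by
  have hlt : ∀ j ∈ σ.support, σ j = i → j < i := fun j hj hji =>
    (hmax j hj).lt_of_ne fun h => Perm.mem_support.mp hj (h ▸ hji)
  have hσi : σ i < i :=
    (hmax _ (Perm.apply_mem_support.mpr hi)).lt_of_ne (Perm.mem_support.mp hi)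
  refine ⟨hσ.apply_eq_of_lt hp hσi, ?_⟩
  obtain ⟨j, hji⟩ := σ.surjective i
  have hj : j ∈ σ.support := by
    rw [Perm.mem_support, hji]; rintro rfl; exact Perm.mem_support.mp hi hji
  rcases hσ j with h | h | h
  · exact absurd (h.symm.trans hji) (hlt j hj hji).ne
  · exact absurd (hp j) (by rw [← h, hji]; exact (hlt j hj hji).not_ge)
  · subst hji; rw [h]

@[elab_as_elim]
theorem MovesAlong.induction (hp : ∀ i, p i ≤ i) {P : Perm ι → Prop} (one : P 1)
    (swap_mul : ∀ σ i, MovesAlong p σ → p i < i → σ (p i) = p i → σ i = i → P σ →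
      P (swap (p i) i * σ))
    (σ : Perm ι) (hσ : MovesAlong p σ) : P σ := by
  induction hn : #σ.support using Nat.strong_induction_on generalizing σ with
  | _ n ih =>
  obtain h0 | hne := σ.support.eq_empty_or_nonempty
  · rwa [Perm.support_eq_empty_iff.mp h0]
  set i := σ.support.max' hne
  have hi : i ∈ σ.support := σ.support.max'_mem hne
  obtain ⟨hσi, hσpi⟩ := hσ.apply_max_support hp hi fun j hj => σ.support.le_max' j hj
  have hpi : p i ≠ i := hσi ▸ Perm.mem_support.mp hi
  set τ := swap (p i) i * σ
  have hστ : σ = swap (p i) i * τ := (swap_mul_self_mul _ _ _).symm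
  have hτpi : τ (p i) = p i := by simp [τ, hσpi]
  have hτi : τ i = i := by simp [τ, hσi]
  have hτ : MovesAlong p τ := by
    intro j
    by_cases hj : j = p i ∨ j = i
    · obtain rfl | rfl := hj <;> simp [hτpi, hτi]
    · rw [not_or] at hj
      rw [← swap_mul_apply_of_fixed hτpi hτi hj.1 hj.2, ← hστ]
      exact hσ j
  have hcard : #τ.support < n := by
    have := Perm.card_support_swap_mul (Perm.mem_support.mp hi)
    rwa [hσi, swap_comm, hn] at this
  rw [hστ]
  exact swap_mul τ i hτ ((hp i).lt_of_ne hpi) hτpi hτi (ih _ hcard τ hτ rfl)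

theorem MovesAlong.involutive (hp : ∀ i, p i ≤ i) {σ : Perm ι} (hσ : MovesAlong p σ) :
    Function.Involutive σ := by
  refine MovesAlong.induction hp (fun _ => rfl) ?_ σ hσ
  intro σ i _ _ hσpi hσi hinv j
  by_cases hj : j = p i ∨ j = i
  · obtain rfl | rfl := hj <;> simp [hσpi, hσi]
  · rw [not_or] at hj
    rw [swap_mul_apply_of_fixed hσpi hσi hj.1 hj.2,
      swap_mul_apply_of_fixed hσpi hσi ((σ.injective.ne_iff' hσpi).mpr hj.1)
        ((σ.injective.ne_iff' hσi).mpr hj.2), hinv j]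

theorem MovesAlong.sign_mul_prod {R : Type*} [CommRing R] (hp : ∀ i, p i ≤ i)
    {M : Matrix ι ι R} (hM : ∀ i, M i i = 1) {σ : Perm ι} (hσ : MovesAlong p σ) :
    ((Perm.sign σ : ℤ) : R) * ∏ j, M (σ j) j =
      ∏ v ∈ deficiencies σ, -(M (p v) v * M v (p v)) := by
  refine MovesAlong.induction hp (by simp [deficiencies, hM]) ?_ σ hσ
  intro σ i _ hi hσpi hσi ih
  have hfactor : ∀ j, M ((swap (p i) i * σ) j) j =
      (if j = p i then M i (p i) else 1) * ((if j = i then M (p i) i else 1) * M (σ j) j) := by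
    intro j
    by_cases hja : j = p i
    · subst hja; simp [hσpi, hi.ne, hM]
    by_cases hjb : j = i
    · subst hjb; simp [hσi, hi.ne', hM]
    simp [swap_mul_apply_of_fixed hσpi hσi hja hjb, hja, hjb]
  rw [deficiencies_swap_mul hi hσpi hσi, prod_insert (by simp [hσi]), ← ih, Perm.sign_mul,
    Perm.sign_swap hi.ne, prod_congr rfl fun j _ => hfactor j, prod_mul_distrib,
    prod_mul_distrib, prod_ite_eq', prod_ite_eq']
  simp only [mem_univ, if_true, Units.val_mul, Units.val_neg, Units.val_one, Int.cast_mul,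
    Int.cast_neg, Int.cast_one]
  ring

theorem MovesAlong.support_subset (hp : ∀ i, p i ≤ i) {σ : Perm ι} (hσ : MovesAlong p σ) :
    σ.support ⊆ (deficiencies σ).biUnion fun w => {p w, w} := by
  intro j hj
  simp only [mem_biUnion, mem_insert, mem_singleton, mem_deficiencies]
  rcases lt_or_gt_of_ne (Perm.mem_support.mp hj) with hlt | hgt
  · exact ⟨j, hlt, Or.inr rfl⟩
  · have hσσj : σ (σ j) = j := hσ.involutive hp j
    have hlt : σ (σ j) < σ j := by rwa [hσσj]
    refine ⟨σ j, hlt, Or.inl ?_⟩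
    rw [← hσ.apply_eq_of_lt hp hlt, hσσj]

theorem MovesAlong.isMatching_deficiencies (hp : ∀ i, p i ≤ i) {σ : Perm ι}
    (hσ : MovesAlong p σ) : IsMatching p (deficiencies σ) := by
  have hdown : ∀ v ∈ deficiencies σ, σ v = p v := fun v hv =>
    hσ.apply_eq_of_lt hp (mem_deficiencies.mp hv)
  have hparent : ∀ v ∈ deficiencies σ, ∀ w ∈ deficiencies σ, p v ≠ w := by
    intro v hv w hw hvw
    have hσw : σ w = v := by rw [← hvw, ← hdown v hv, hσ.involutive hp]
    have hwv : w < v := hvw ▸ hdown v hv ▸ mem_deficiencies.mp hv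
    exact (hσw ▸ mem_deficiencies.mp hw).not_gt hwv
  refine ⟨fun v hv => hdown v hv ▸ mem_deficiencies.mp hv, fun v hv w hw hvw => ?_⟩
  simp only [Function.onFun, disjoint_insert_left, disjoint_insert_right,
    disjoint_singleton_left, mem_insert, mem_singleton, not_or]
  refine ⟨⟨fun h => hvw (σ.injective ?_), hparent w hw v hv⟩, hparent v hv w hw, hvw⟩
  rw [hdown v hv, hdown w hw, h]

theorem MovesAlong.eq_of_deficiencies_eq (hp : ∀ i, p i ≤ i) {σ τ : Perm ι}
    (hσ : MovesAlong p σ) (hτ : MovesAlong p τ) (h : deficiencies σ = deficiencies τ) :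
    σ = τ := by
  have hmoved : ∀ σ τ : Perm ι, MovesAlong p σ → MovesAlong p τ →
      deficiencies σ = deficiencies τ → ∀ j, σ j ≠ j → σ j = τ j := by
    intro σ τ hσ hτ h j hj
    have hdown : ∀ v, σ v < v → σ v = τ v := fun v hv => by
      have hv' : τ v < v := mem_deficiencies.mp (h ▸ mem_deficiencies.mpr hv)
      rw [hσ.apply_eq_of_lt hp hv, hτ.apply_eq_of_lt hp hv']
    rcases lt_or_gt_of_ne hj with hlt | hgt
    · exact hdown j hlt
    · have hσσj : σ (σ j) = j := hσ.involutive hp j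
      have hτσj : τ (σ j) = j := (hdown (σ j) (by rwa [hσσj])).symm.trans hσσj
      calc σ j = τ (τ (σ j)) := (hτ.involutive hp _).symm
        _ = τ j := by rw [hτσj]
  ext j
  by_cases hσj : σ j = j
  · by_cases hτj : τ j = j
    · rw [hσj, hτj]
    · exact (hmoved τ σ hτ hσ h.symm j hτj).symm
  · exact hmoved σ τ hσ hτ h j hσj

theorem IsMatching.exists_deficiencies_eq (hp : ∀ i, p i ≤ i) {C : Finset ι}
    (hC : IsMatching p C) : ∃ σ, MovesAlong p σ ∧ deficiencies σ = C := by
  induction C using Finset.induction_on with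
  | empty => exact ⟨1, fun _ => Or.inl rfl, by ext; simp⟩
  | insert v C hvC ih =>
    obtain ⟨σ, hσ, rfl⟩ := ih (hC.subset (subset_insert v _))
    have hdisj : Disjoint {p v, v} ((deficiencies σ).biUnion fun w => {p w, w}) :=
      (disjoint_biUnion_right _ _ _).mpr fun w hw =>
        hC.2 (mem_insert_self v _) (mem_insert_of_mem hw) (fun h => hvC (h ▸ hw))
    have hfix : ∀ j ∈ ({p v, v} : Finset ι), σ j = j := fun j hj =>
      Perm.notMem_support.mp fun hs => disjoint_left.mp hdisj hj (hσ.support_subset hp hs)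
    have hσpv := hfix (p v) (by simp)
    have hσv := hfix v (by simp)
    exact ⟨swap (p v) v * σ, hσ.swap_mul hσpv hσv,
      deficiencies_swap_mul (hC.1 v (mem_insert_self v _)) hσpv hσv⟩

open Classical in
theorem det_eq_sum_isMatching {R : Type*} [CommRing R] (hp : ∀ i, p i ≤ i)
    (M : Matrix ι ι R) (hM_diag : ∀ i, M i i = 1)
    (hM : ∀ i j, i ≠ j → i ≠ p j → p i ≠ j → M i j = 0) :
    M.det = ∑ C ∈ univ.filter (IsMatching p), ∏ v ∈ C, -(M (p v) v * M v (p v)) := by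
  have hzero : ∀ σ ∈ univ, σ ∉ univ.filter (MovesAlong p) →
      ((Perm.sign σ : ℤ) : R) * ∏ j, M (σ j) j = 0 := by
    intro σ _ hσ
    obtain ⟨j, hj⟩ : ∃ j, ¬(σ j = j ∨ σ j = p j ∨ p (σ j) = j) := by
      simpa [MovesAlong] using hσ
    simp only [not_or] at hj
    exact mul_eq_zero_of_right _ (prod_eq_zero (mem_univ j) (hM _ _ hj.1 hj.2.1 hj.2.2))
  rw [Matrix.det_apply', ← sum_subset (subset_univ _) hzero]
  refine sum_nbij deficiencies (fun σ hσ => ?_) (fun σ hσ τ hτ h => ?_) (fun C hC => ?_)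
    (fun σ hσ => ?_)
  · exact mem_filter.mpr ⟨mem_univ _, (mem_filter.mp hσ).2.isMatching_deficiencies hp⟩
  · exact (mem_filter.mp hσ).2.eq_of_deficiencies_eq hp (mem_filter.mp hτ).2 h
  · obtain ⟨σ, hσ, rfl⟩ := (mem_filter.mp hC).2.exists_deficiencies_eq hp
    exact ⟨σ, mem_filter.mpr ⟨mem_univ _, hσ⟩, rfl⟩
  · exact (mem_filter.mp hσ).2.sign_mul_prod hp hM_diag

end ForestMatrix

open ForestMatrix

/-- Row `v` of `Tmat` has its entry `1`, and column `v` its entry `t * y v`, at the index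
`tmatParent v`; `tmatParent 0 = 0`. -/
def tmatParent {n : ℕ} (v : Fin n) : Fin n :=
  ⟨if (v : ℕ) % 2 = 1 ∨ (v : ℕ) = 2 then (v : ℕ) - 1 else (v : ℕ) - 2, by split_ifs <;> omega⟩

theorem tmatParent_cases {n : ℕ} (v : Fin n) :
    ((tmatParent v : ℕ) = v - 1 ∧ ((v : ℕ) % 2 = 1 ∨ (v : ℕ) = 2)) ∨
      ((tmatParent v : ℕ) = v - 2 ∧ (v : ℕ) % 2 = 0 ∧ (v : ℕ) ≠ 2) := by
  dsimp only [tmatParent]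
  split_ifs <;> omega

theorem tmatParent_le {n : ℕ} (v : Fin n) : tmatParent v ≤ v := by
  rw [Fin.le_def]; rcases tmatParent_cases v with h | h <;> omega

theorem tmatParent_lt_iff {n : ℕ} {v : Fin n} : tmatParent v < v ↔ 0 < (v : ℕ) := by
  rw [Fin.lt_def]; rcases tmatParent_cases v with h | h <;> omega

theorem tmat_apply_self (r : ℕ) (t : ℝ) (y : ℕ → ℝ) (i : Fin (2 * r + 2)) :
    Tmat r t y i i = 0 := by
  simp [Tmat]

theorem tmat_apply_eq_zero (r : ℕ) (t : ℝ) (y : ℕ → ℝ) {i j : Fin (2 * r + 2)}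
    (hi : i ≠ tmatParent j) (hj : tmatParent i ≠ j) : Tmat r t y i j = 0 := by
  rw [Ne, Fin.ext_iff] at hi hj
  simp only [Tmat, Matrix.of_apply]
  rcases tmatParent_cases i with ⟨ei, hi'⟩ | ⟨ei, hi'⟩ <;>
  rcases tmatParent_cases j with ⟨ej, hj'⟩ | ⟨ej, hj'⟩ <;>
  split_ifs <;> first | rfl | omega

theorem tmat_apply_parent (r : ℕ) (t : ℝ) (y : ℕ → ℝ) {v : Fin (2 * r + 2)}
    (hv : tmatParent v < v) :
    Tmat r t y v (tmatParent v) = 1 ∧ Tmat r t y (tmatParent v) v = t * y v := by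
  rw [Fin.lt_def] at hv
  simp only [Tmat, Matrix.of_apply]
  rcases tmatParent_cases v with ⟨e, h⟩ | ⟨e, h⟩ <;>
  split_ifs <;> first | omega | exact ⟨rfl, by congr 2; omega⟩

theorem one_sub_tmat_neg_edge_weight (r : ℕ) (t : ℝ) (y : ℕ → ℝ) {v : Fin (2 * r + 2)}
    (hv : tmatParent v < v) :
    -((1 - Tmat r (-t) y) (tmatParent v) v * (1 - Tmat r (-t) y) v (tmatParent v)) =
      t * y v := by
  obtain ⟨h1, h2⟩ := tmat_apply_parent r (-t) y hv
  simp [Matrix.sub_apply, hv.ne, hv.ne', h1, h2]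

theorem mem_grEdges_iff {r a b : ℕ} (ha : 1 ≤ a) (hb : b ≤ 2 * r + 1) :
    (a, b) ∈ grEdges r ↔ b = a + 1 ∨ (a % 2 = 0 ∧ 2 ≤ a ∧ b = a + 2) := by
  simp only [grEdges, mem_union, mem_insert, mem_singleton, mem_biUnion, mem_Icc, Prod.ext_iff]
  constructor
  · rintro ((h | h) | ⟨i, hi, h | h | h⟩) <;> omega
  · rintro (h | h)
    · by_cases h1 : a = 1
      · omega
      by_cases h2 : a = 2 * r
      · omega
      refine Or.inr ⟨a / 2, ?_, ?_⟩ <;> omega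
    · refine Or.inr ⟨a / 2, ?_, ?_⟩ <;> omega

theorem grAdj_irrefl (r a : ℕ) : ¬grAdj r a a := by
  simp only [grAdj, or_self, grEdges, mem_union, mem_insert, mem_singleton, mem_biUnion,
    Prod.ext_iff]
  omega

theorem grAdj_iff {r : ℕ} {a b : Fin (2 * r + 2)} (ha : 0 < (a : ℕ)) (hb : 0 < (b : ℕ))
    (hab : a ≠ b) :
    grAdj r a b ↔ ¬Disjoint ({tmatParent a, a} : Finset _) {tmatParent b, b} := by
  rw [Ne, Fin.ext_iff] at hab
  have := a.isLt
  have := b.isLt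
  simp only [grAdj, mem_grEdges_iff (r := r) (a := a) (b := b) ha (by omega),
    mem_grEdges_iff (r := r) (a := b) (b := a) hb (by omega),
    disjoint_insert_left, disjoint_insert_right, disjoint_singleton_left, mem_insert,
    mem_singleton, Fin.ext_iff, not_or, not_and_or, not_not]
  rcases tmatParent_cases a with ⟨ea, ha'⟩ | ⟨ea, ha'⟩ <;>
  rcases tmatParent_cases b with ⟨eb, hb'⟩ | ⟨eb, hb'⟩ <;>
  omega

theorem isMatching_tmatParent_iff {r : ℕ} {C : Finset (Fin (2 * r + 2))} :
    IsMatching tmatParent C ↔ (∀ v ∈ C, 0 < (v : ℕ)) ∧ ∀ a ∈ C, ∀ b ∈ C, ¬grAdj r a b := by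
  simp only [IsMatching, tmatParent_lt_iff]
  refine and_congr_right fun hpos => ⟨fun h a ha b hb hadj => ?_, fun h a ha b hb hab => ?_⟩
  · rcases eq_or_ne a b with rfl | hab
    · exact grAdj_irrefl r a hadj
    · exact (grAdj_iff (hpos a ha) (hpos b hb) hab).mp hadj (h ha hb hab)
  · rw [mem_coe] at ha hb
    exact not_not.mp fun hd => h a ha b hb ((grAdj_iff (hpos a ha) (hpos b hb) hab).mpr hd)

theorem map_val_mem_hardZ_index_iff {r m : ℕ} {C : Finset (Fin (2 * r + 2))} :
    C.map Fin.valEmbedding ∈ (powersetCard m (Icc 1 (2 * r + 1))).filter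
        (fun c => ∀ a ∈ c, ∀ b ∈ c, ¬grAdj r a b) ↔
      IsMatching tmatParent C ∧ #C = m := by
  simp only [mem_filter, mem_powersetCard, card_map, forall_mem_map, Fin.valEmbedding_apply,
    isMatching_tmatParent_iff, subset_iff, mem_Icc]
  have hbounds : (∀ v ∈ C, 1 ≤ (v : ℕ) ∧ (v : ℕ) ≤ 2 * r + 1) ↔ ∀ v ∈ C, 0 < (v : ℕ) :=
    forall₂_congr fun v _ => by omega
  rw [hbounds]
  tauto

open Classical in
theorem hardZ_eq_sum_isMatching (r m : ℕ) (y : ℕ → ℝ) :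
    hardZ r m y = ∑ C ∈ univ.filter (IsMatching (tmatParent (n := 2 * r + 2))) with #C = m,
      ∏ v ∈ C, y v := by
  symm
  refine sum_nbij (fun C => C.map Fin.valEmbedding) (fun C hC => ?_)
    (fun C _ D _ h => map_injective Fin.valEmbedding h) (fun c hc => ?_)
    (fun C _ => (prod_map C Fin.valEmbedding y).symm)
  · simp only [mem_filter, mem_univ, true_and] at hC
    exact map_val_mem_hardZ_index_iff.mpr hC
  · have hlt : ∀ v ∈ c, v < 2 * r + 2 := fun v hv => by
      have := mem_Icc.mp ((mem_powersetCard.mp (mem_filter.mp hc).1).1 hv)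
      omega
    refine ⟨c.attachFin hlt, ?_, map_valEmbedding_attachFin hlt⟩
    rw [mem_coe, ← map_valEmbedding_attachFin hlt, map_val_mem_hardZ_index_iff] at hc
    simpa only [coe_filter, mem_filter, mem_univ, true_and, Set.mem_ofPred_eq] using hc

theorem det_transfer_eq_hardZ_general (r : ℕ) (t : ℝ) (y : ℕ → ℝ) :
    (1 - Tmat r (-t) y).det = ∑ m ∈ Finset.range (r + 2), t ^ m * hardZ r m y := by
  classical
  rw [det_eq_sum_isMatching tmatParent_le _ (fun i => by simp [tmat_apply_self])
    (fun i j hij hi hj => by simp [hij, tmat_apply_eq_zero r (-t) y hi hj])]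
  calc _ = ∑ C ∈ univ.filter (IsMatching tmatParent), t ^ #C * ∏ v ∈ C, y v := by
        refine sum_congr rfl fun C hC => ?_
        rw [prod_congr rfl fun v hv =>
            one_sub_tmat_neg_edge_weight r t y ((mem_filter.mp hC).2.1 v hv),
          prod_mul_distrib, prod_const]
    _ = ∑ m ∈ range (r + 2),
          ∑ C ∈ univ.filter (IsMatching tmatParent) with #C = m, t ^ #C * ∏ v ∈ C, y v := by
        refine (sum_fiberwise_of_maps_to (fun C hC => mem_range.mpr ?_) _).symm
        have := (mem_filter.mp hC).2.two_mul_card_le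
        rw [Fintype.card_fin] at this
        omega
    _ = _ := by
        refine sum_congr rfl fun m _ => ?_
        rw [hardZ_eq_sum_isMatching, mul_sum]
        exact sum_congr rfl fun C hC => by rw [(mem_filter.mp hC).2]

/-- det(I − T_r(−t·y)) is the hard-particle generating polynomial. -/
theorem det_transfer_eq_hardZ (r : ℕ) (hr : 1 ≤ r) (t : ℝ) (y : ℕ → ℝ) :
    (1 - Tmat r (-t) y).det = ∑ m ∈ Finset.range (r + 2), t ^ m * hardZ r m y :=
  det_transfer_eq_hardZ_general r t y
end

section
/- For every r ≥ 1, every real t, and all real weights y_1,…,y_{2r+1} such that det(I − T_r(t·y)) ≠ 0, the (0,0)-entry of the inverse of I − T_r(t·y) equals [Σ_{m=0}^{r+1} (−t)^m·Z_m^{G_r}(0, y_2,…,y_{2r+1})] / [Σ_{m=0}^{r+1} (−t)^m·Z_m^{G_r}(y_1, y_2,…,y_{2r+1})], i.e. the ratio of the hard-particle generating polynomial with the weight y_1 set to 0 to the full hard-particle generating polynomial. -/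
namespace HP

def f (v : ℕ) : ℕ := if v ≤ 2 then v - 1 else 2 * ((v - 1) / 2)

lemma f_spec (v : ℕ) :
    (f v = v - 1 ∧ (v ≤ 2 ∨ v % 2 = 1)) ∨ (f v = v - 2 ∧ v % 2 = 0 ∧ 3 ≤ v) := by
  unfold f; split_ifs <;> omega

lemma f_lt {v : ℕ} (hv : 1 ≤ v) : f v < v := by
  have := f_spec v; omega

lemma mem_grEdges (r a b : ℕ) : (a, b) ∈ grEdges r ↔
    ((a = 1 ∧ b = 2) ∨ (a = 2*r ∧ b = 2*r+1) ∨
     (2 ≤ a ∧ a + 2 ≤ 2*r ∧ a % 2 = 0 ∧ (b = a+1 ∨ b = a+2)) ∨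
     (3 ≤ a ∧ a + 1 ≤ 2*r ∧ a % 2 = 1 ∧ b = a+1)) := by
  simp only [grEdges, Finset.mem_union, Finset.mem_insert, Finset.mem_singleton,
    Finset.mem_biUnion, Finset.mem_Icc, Prod.mk.injEq]
  constructor
  · rintro ((⟨ha, hb⟩ | ⟨ha, hb⟩) | ⟨i, ⟨hi1, hi2⟩, (⟨ha, hb⟩ | ⟨ha, hb⟩ | ⟨ha, hb⟩)⟩) <;> omega
  · rintro (⟨ha, hb⟩ | ⟨ha, hb⟩ | ⟨h1, h2, h3, hb⟩ | ⟨h1, h2, h3, hb⟩)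
    · exact Or.inl (Or.inl ⟨ha, hb⟩)
    · exact Or.inl (Or.inr ⟨ha, hb⟩)
    · exact Or.inr ⟨a / 2, by omega, by omega⟩
    · exact Or.inr ⟨(a-1) / 2, by omega, by omega⟩

set_option maxHeartbeats 1000000 in
lemma adj_iff {r u v : ℕ} (hu1 : 1 ≤ u) (hu2 : u ≤ 2*r+1) (hv1 : 1 ≤ v) (hv2 : v ≤ 2*r+1) :
    grAdj r u v ↔ (u ≠ v ∧ (u = f v ∨ v = f u ∨ f u = f v)) := by
  rw [grAdj, mem_grEdges, mem_grEdges]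
  have h1 := f_spec u
  have h2 := f_spec v
  constructor
  · rintro ((h | h | h | h) | (h | h | h | h)) <;>
      rcases h1 with ⟨h1, h1'⟩ | ⟨h1, h1'⟩ <;> rcases h2 with ⟨h2, h2'⟩ | ⟨h2, h2'⟩ <;> omega
  · rintro ⟨hne, h | h | h⟩ <;>
      rcases h1 with ⟨h1, h1'⟩ | ⟨h1, h1'⟩ <;> rcases h2 with ⟨h2, h2'⟩ | ⟨h2, h2'⟩ <;>
      first | (left; omega) | (right; omega)

lemma not_adj_self (r a : ℕ) : ¬ grAdj r a a := by
  simp only [grAdj, mem_grEdges]; omega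

end HP

namespace HP2
open HP

variable {r : ℕ} {t : ℝ} {y : ℕ → ℝ}

/-- allowed moves of the transfer digraph -/
def Mv (p q : ℕ) : Prop :=
  (p = q+1 ∧ (q ≤ 1 ∨ q % 2 = 0)) ∨ (p = q+2 ∧ q % 2 = 0 ∧ 2 ≤ q) ∨
  (q = p+1 ∧ (p ≤ 1 ∨ p % 2 = 0)) ∨ (q = p+2 ∧ p % 2 = 0 ∧ 2 ≤ p)

lemma Tmat_def (p q : Fin (2*r+2)) : Tmat r t y p q =
    if (p : ℕ) = (q : ℕ) + 1 ∧ ((q : ℕ) ≤ 1 ∨ (q : ℕ) % 2 = 0) then 1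
    else if (p : ℕ) = (q : ℕ) + 2 ∧ (q : ℕ) % 2 = 0 ∧ 2 ≤ (q : ℕ) then 1
    else if (q : ℕ) = (p : ℕ) + 1 ∧ ((p : ℕ) ≤ 1 ∨ (p : ℕ) % 2 = 0) then t * y ((p : ℕ) + 1)
    else if (q : ℕ) = (p : ℕ) + 2 ∧ (p : ℕ) % 2 = 0 ∧ 2 ≤ (p : ℕ) then t * y ((p : ℕ) + 2)
    else 0 := rfl

lemma T_diag (p : Fin (2*r+2)) : Tmat r t y p p = 0 := by
  rw [Tmat_def, if_neg (by omega), if_neg (by omega), if_neg (by omega), if_neg (by omega)]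

lemma A_diag (p : Fin (2*r+2)) : (1 - Tmat r t y) p p = 1 := by
  simp [Matrix.sub_apply, Matrix.one_apply, T_diag]

lemma T_pair_lt {v : ℕ} (hv1 : 1 ≤ v) (hp : f v < 2*r+2) (hq : v < 2*r+2) :
    Tmat r t y ⟨f v, hp⟩ ⟨v, hq⟩ = t * y v := by
  have hs := f_spec v
  rw [Tmat_def]
  simp only [Fin.val_mk]  -- reduce coercions
  rcases hs with ⟨hf, hc⟩ | ⟨hf, hc1, hc2⟩
  · rw [if_neg (by omega), if_neg (by omega), if_pos (by omega),
      show f v + 1 = v from by omega]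
  · rw [if_neg (by omega), if_neg (by omega), if_neg (by omega), if_pos (by omega),
      show f v + 2 = v from by omega]

lemma T_pair_gt {v : ℕ} (hv1 : 1 ≤ v) (hp : f v < 2*r+2) (hq : v < 2*r+2) :
    Tmat r t y ⟨v, hq⟩ ⟨f v, hp⟩ = 1 := by
  have hs := f_spec v
  rw [Tmat_def]
  simp only [Fin.val_mk]
  rcases hs with ⟨hf, hc⟩ | ⟨hf, hc1, hc2⟩
  · rw [if_pos (by omega)]
  · rw [if_neg (by omega), if_pos (by omega)]

lemma A_pair_lt {v : ℕ} (hv1 : 1 ≤ v) (hp : f v < 2*r+2) (hq : v < 2*r+2) :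
    (1 - Tmat r t y) ⟨f v, hp⟩ ⟨v, hq⟩ = -(t * y v) := by
  have : f v < v := f_lt hv1
  rw [Matrix.sub_apply, Matrix.one_apply, if_neg (by simp [Fin.ext_iff]; omega),
    T_pair_lt hv1, zero_sub]

lemma A_pair_gt {v : ℕ} (hv1 : 1 ≤ v) (hp : f v < 2*r+2) (hq : v < 2*r+2) :
    (1 - Tmat r t y) ⟨v, hq⟩ ⟨f v, hp⟩ = -1 := by
  have : f v < v := f_lt hv1
  rw [Matrix.sub_apply, Matrix.one_apply, if_neg (by simp [Fin.ext_iff]; omega),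
    T_pair_gt hv1, zero_sub]

lemma Mv_of_ne {p q : Fin (2*r+2)} (h : (1 - Tmat r t y) p q ≠ 0) :
    (p : ℕ) = (q : ℕ) ∨ Mv (p : ℕ) (q : ℕ) := by
  by_cases hpq : (p : ℕ) = (q : ℕ)
  · exact Or.inl hpq
  · right
    have hT : Tmat r t y p q ≠ 0 := by
      intro h0
      apply h
      rw [Matrix.sub_apply, Matrix.one_apply, if_neg (by simp [Fin.ext_iff]; omega), h0, sub_zero]
    rw [Tmat_def] at hT
    unfold Mv
    split_ifs at hT with h1 h2 h3 h4
    · exact Or.inl h1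
    · exact Or.inr (Or.inl h2)
    · exact Or.inr (Or.inr (Or.inl h3))
    · exact Or.inr (Or.inr (Or.inr h4))
    · exact absurd rfl hT

end HP2

namespace HP3
open HP HP2

def gnat (C : Finset ℕ) (i : ℕ) : ℕ :=
  if i ∈ C then f i
  else if i + 1 ∈ C ∧ f (i + 1) = i then i + 1
  else if i + 2 ∈ C ∧ f (i + 2) = i then i + 2
  else i

lemma gnat_of_mem {C : Finset ℕ} {i : ℕ} (h : i ∈ C) : gnat C i = f i := by
  unfold gnat; rw [if_pos h]

lemma gnat_b2 {C : Finset ℕ} {i : ℕ} (h1 : i ∉ C) (h2 : i + 1 ∈ C ∧ f (i + 1) = i) :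
    gnat C i = i + 1 := by
  unfold gnat; rw [if_neg h1, if_pos h2]

lemma gnat_b3 {C : Finset ℕ} {i : ℕ} (h1 : i ∉ C) (h2 : ¬(i + 1 ∈ C ∧ f (i + 1) = i))
    (h3 : i + 2 ∈ C ∧ f (i + 2) = i) : gnat C i = i + 2 := by
  unfold gnat; rw [if_neg h1, if_neg h2, if_pos h3]

lemma gnat_fix {C : Finset ℕ} {i : ℕ} (h1 : i ∉ C) (h2 : ¬(i + 1 ∈ C ∧ f (i + 1) = i))
    (h3 : ¬(i + 2 ∈ C ∧ f (i + 2) = i)) : gnat C i = i := by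
  unfold gnat; rw [if_neg h1, if_neg h2, if_neg h3]

section

variable {r : ℕ} {C : Finset ℕ}

lemma pd (hC : C ⊆ Finset.Icc 1 (2*r+1)) (hind : ∀ a ∈ C, ∀ b ∈ C, ¬ grAdj r a b) :
    ∀ u ∈ C, ∀ v ∈ C, u ≠ v → u ≠ f v ∧ v ≠ f u ∧ f u ≠ f v := by
  intro u hu v hv hne
  have hu' := Finset.mem_Icc.1 (hC hu)
  have hv' := Finset.mem_Icc.1 (hC hv)
  have h2 : ¬(u ≠ v ∧ (u = f v ∨ v = f u ∨ f u = f v)) := by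
    rw [← adj_iff hu'.1 hu'.2 hv'.1 hv'.2]; exact hind u hu v hv
  exact ⟨fun h => h2 ⟨hne, Or.inl h⟩, fun h => h2 ⟨hne, Or.inr (Or.inl h)⟩,
    fun h => h2 ⟨hne, Or.inr (Or.inr h)⟩⟩

lemma gnat_invol (hC : C ⊆ Finset.Icc 1 (2*r+1))
    (hind : ∀ a ∈ C, ∀ b ∈ C, ¬ grAdj r a b) (i : ℕ) : gnat C (gnat C i) = i := by
  have hpd := pd hC hind
  by_cases h1 : i ∈ C
  · have hi := Finset.mem_Icc.1 (hC h1)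
    have hflt : f i < i := f_lt hi.1
    have hfi : f i ∉ C := fun hm => (hpd (f i) hm i h1 (by omega)).1 rfl
    have hs := f_spec i
    rw [gnat_of_mem h1]
    by_cases h2 : f i + 1 ∈ C ∧ f (f i + 1) = f i
    · have he : f i + 1 = i := by
        by_contra hne
        exact (hpd (f i + 1) h2.1 i h1 (by omega)).2.2 h2.2
      rw [gnat_b2 hfi h2, he]
    · by_cases h3 : f i + 2 ∈ C ∧ f (f i + 2) = f i
      · have he : f i + 2 = i := by
          by_contra hne
          exact (hpd (f i + 2) h3.1 i h1 (by omega)).2.2 h3.2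
        rw [gnat_b3 hfi h2 h3, he]
      · exfalso
        rcases hs with ⟨hf, hc⟩ | ⟨hf, hc1, hc2⟩
        · have he : f i + 1 = i := by omega
          exact h2 ⟨by rw [he]; exact h1, by rw [he]⟩
        · have he : f i + 2 = i := by omega
          exact h3 ⟨by rw [he]; exact h1, by rw [he]⟩
  · by_cases h2 : i + 1 ∈ C ∧ f (i + 1) = i
    · rw [gnat_b2 h1 h2, gnat_of_mem h2.1, h2.2]
    · by_cases h3 : i + 2 ∈ C ∧ f (i + 2) = i
      · rw [gnat_b3 h1 h2 h3, gnat_of_mem h3.1, h3.2]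
      · rw [gnat_fix h1 h2 h3, gnat_fix h1 h2 h3]

lemma gnat_lt (hC : C ⊆ Finset.Icc 1 (2*r+1)) {i : ℕ} (h : i < 2*r+2) :
    gnat C i < 2*r+2 := by
  by_cases h1 : i ∈ C
  · rw [gnat_of_mem h1]; have := f_spec i; omega
  · by_cases h2 : i + 1 ∈ C ∧ f (i + 1) = i
    · rw [gnat_b2 h1 h2]
      have := Finset.mem_Icc.1 (hC h2.1); omega
    · by_cases h3 : i + 2 ∈ C ∧ f (i + 2) = i
      · rw [gnat_b3 h1 h2 h3]
        have := Finset.mem_Icc.1 (hC h3.1); omega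
      · rw [gnat_fix h1 h2 h3]; exact h

lemma gnat_Mv (hC : C ⊆ Finset.Icc 1 (2*r+1)) (i : ℕ) :
    gnat C i = i ∨ Mv (gnat C i) i := by
  by_cases h1 : i ∈ C
  · right
    rw [gnat_of_mem h1]
    have := f_spec i
    have hi := Finset.mem_Icc.1 (hC h1)
    unfold Mv; omega
  · by_cases h2 : i + 1 ∈ C ∧ f (i + 1) = i
    · right
      rw [gnat_b2 h1 h2]
      have := f_spec (i+1)
      have h2' := h2.2
      unfold Mv; omega
    · by_cases h3 : i + 2 ∈ C ∧ f (i + 2) = i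
      · right
        rw [gnat_b3 h1 h2 h3]
        have := f_spec (i+2)
        have h3' := h3.2
        unfold Mv; omega
      · left; exact gnat_fix h1 h2 h3

end

section Insert

variable {r : ℕ} {a : ℕ} {s : Finset ℕ}

def HypIns (r a : ℕ) (s : Finset ℕ) : Prop :=
  a ∉ s ∧ insert a s ⊆ Finset.Icc 1 (2*r+1) ∧
    ∀ u ∈ insert a s, ∀ v ∈ insert a s, ¬ grAdj r u v

variable (H : HypIns r a s)
include H

lemma sub_of_insert : s ⊆ Finset.Icc 1 (2*r+1) :=
  fun x hx => H.2.1 (Finset.mem_insert_of_mem hx)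

lemma ind_of_insert : ∀ u ∈ s, ∀ v ∈ s, ¬ grAdj r u v :=
  fun u hu v hv => H.2.2 u (Finset.mem_insert_of_mem hu) v (Finset.mem_insert_of_mem hv)

lemma a_bounds : 1 ≤ a ∧ a ≤ 2*r+1 :=
  Finset.mem_Icc.1 (H.2.1 (Finset.mem_insert_self a s))

lemma fa_not_mem : f a ∉ s := by
  obtain ⟨ha, hC, hind⟩ := H
  intro hm
  have hb : 1 ≤ a ∧ a ≤ 2*r+1 := Finset.mem_Icc.1 (hC (Finset.mem_insert_self a s))
  have hflt : f a < a := f_lt hb.1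
  exact (pd hC hind (f a) (Finset.mem_insert_of_mem hm) a (Finset.mem_insert_self a s)
    (by omega)).1 rfl

lemma gnat_s_a : gnat s a = a := by
  obtain ⟨ha, hC, hind⟩ := H
  have hb : 1 ≤ a ∧ a ≤ 2*r+1 := Finset.mem_Icc.1 (hC (Finset.mem_insert_self a s))
  apply gnat_fix ha
  · rintro ⟨hm, he⟩
    exact (pd hC hind (a+1) (Finset.mem_insert_of_mem hm) a (Finset.mem_insert_self a s)
      (by omega)).2.1 he.symm
  · rintro ⟨hm, he⟩
    exact (pd hC hind (a+2) (Finset.mem_insert_of_mem hm) a (Finset.mem_insert_self a s)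
      (by omega)).2.1 he.symm

lemma gnat_s_fa : gnat s (f a) = f a := by
  have hfnm := fa_not_mem H
  obtain ⟨ha, hC, hind⟩ := H
  have hb : 1 ≤ a ∧ a ≤ 2*r+1 := Finset.mem_Icc.1 (hC (Finset.mem_insert_self a s))
  have hflt : f a < a := f_lt hb.1
  apply gnat_fix hfnm
  · rintro ⟨hm, he⟩
    have hne : f a + 1 ≠ a := fun h => ha (h ▸ hm)
    exact (pd hC hind (f a + 1) (Finset.mem_insert_of_mem hm) a (Finset.mem_insert_self a s)
      hne).2.2 he
  · rintro ⟨hm, he⟩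
    have hne : f a + 2 ≠ a := fun h => ha (h ▸ hm)
    exact (pd hC hind (f a + 2) (Finset.mem_insert_of_mem hm) a (Finset.mem_insert_self a s)
      hne).2.2 he

lemma gnat_insert_eq (i : ℕ) :
    gnat (insert a s) i =
      if gnat s i = f a then a else if gnat s i = a then f a else gnat s i := by
  have hfnm := fa_not_mem H
  have hga := gnat_s_a H
  have hgfa := gnat_s_fa H
  have hsub := sub_of_insert H
  have hinds := ind_of_insert H
  obtain ⟨ha, hC, hind⟩ := H
  have hb : 1 ≤ a ∧ a ≤ 2*r+1 := Finset.mem_Icc.1 (hC (Finset.mem_insert_self a s))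
  have hflt : f a < a := f_lt hb.1
  have hpd := pd hC hind
  by_cases hia : i = a
  · subst hia
    rw [gnat_of_mem (Finset.mem_insert_self i s), hga,
      if_neg (by omega), if_pos rfl]
  · by_cases hifa : i = f a
    · subst hifa
      rw [hgfa, if_pos rfl]
      have hnm : f a ∉ insert a s :=  by
        rw [Finset.mem_insert]
        rintro (h | h)
        · omega
        · exact hfnm h
      rcases f_spec a with ⟨hf, hc⟩ | ⟨hf, hc1, hc2⟩
      · have he : f a + 1 = a := by omega
        rw [gnat_b2 hnm ⟨by rw [he]; exact Finset.mem_insert_self a s, by rw [he]⟩, he]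
      · have he : f a + 2 = a := by omega
        apply Eq.trans (gnat_b3 hnm ?_ ⟨by rw [he]; exact Finset.mem_insert_self a s, by rw [he]⟩)
        · exact he
        · rintro ⟨hm, he2⟩
          rw [Finset.mem_insert] at hm
          rcases hm with hm | hm
          · omega
          · exact (hpd (f a + 1) (Finset.mem_insert_of_mem hm) a (Finset.mem_insert_self a s)
              (by omega)).2.2 he2
    · -- i ∉ {a, f a}
      have hg1 : gnat s i ≠ f a := by
        intro h
        apply hifa
        have := gnat_invol hsub hinds (C := s) i
        rw [h, hgfa] at this
        omega
      have hg2 : gnat s i ≠ a := by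
        intro h
        apply hia
        have := gnat_invol hsub hinds (C := s) i
        rw [h, hga] at this
        omega
      rw [if_neg hg1, if_neg hg2]
      by_cases him : i ∈ s
      · rw [gnat_of_mem him, gnat_of_mem (Finset.mem_insert_of_mem him)]
      · have hnm : i ∉ insert a s := by
          rw [Finset.mem_insert]; rintro (h | h); exacts [hia h, him h]
        by_cases hb2 : i + 1 ∈ s ∧ f (i + 1) = i
        · rw [gnat_b2 him hb2, gnat_b2 hnm ⟨Finset.mem_insert_of_mem hb2.1, hb2.2⟩]
        · by_cases hb3 : i + 2 ∈ s ∧ f (i + 2) = i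
          · have hb2' : ¬(i + 1 ∈ insert a s ∧ f (i + 1) = i) := by
              rintro ⟨hm, he⟩
              rw [Finset.mem_insert] at hm
              rcases hm with hm | hm
              · exact hifa (by rw [← hm, he])
              · exact hb2 ⟨hm, he⟩
            rw [gnat_b3 him hb2 hb3,
              gnat_b3 hnm hb2' ⟨Finset.mem_insert_of_mem hb3.1, hb3.2⟩]
          · have hb2' : ¬(i + 1 ∈ insert a s ∧ f (i + 1) = i) := by
              rintro ⟨hm, he⟩
              rw [Finset.mem_insert] at hm
              rcases hm with hm | hm
              · exact hifa (by rw [← hm, he])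
              · exact hb2 ⟨hm, he⟩
            have hb3' : ¬(i + 2 ∈ insert a s ∧ f (i + 2) = i) := by
              rintro ⟨hm, he⟩
              rw [Finset.mem_insert] at hm
              rcases hm with hm | hm
              · exact hifa (by rw [← hm, he])
              · exact hb3 ⟨hm, he⟩
            rw [gnat_fix him hb2 hb3, gnat_fix hnm hb2' hb3']

end Insert

lemma gnat_empty (i : ℕ) : gnat ∅ i = i := by
  apply gnat_fix <;> simp

end HP3
namespace HP4
open HP HP2 HP3

def Hyp (r : ℕ) (C : Finset ℕ) : Prop :=
  C ⊆ Finset.Icc 1 (2*r+1) ∧ ∀ u ∈ C, ∀ v ∈ C, ¬ grAdj r u v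

def sigmaOf (r : ℕ) (C : Finset ℕ) (h : Hyp r C) : Equiv.Perm (Fin (2*r+2)) where
  toFun i := ⟨gnat C i, gnat_lt h.1 i.isLt⟩
  invFun i := ⟨gnat C i, gnat_lt h.1 i.isLt⟩
  left_inv i := Fin.ext (gnat_invol h.1 h.2 i)
  right_inv i := Fin.ext (gnat_invol h.1 h.2 i)

lemma sigmaOf_apply {r : ℕ} {C : Finset ℕ} (h : Hyp r C) (i : Fin (2*r+2)) :
    (sigmaOf r C h i : ℕ) = gnat C (i : ℕ) := rfl

lemma hyp_of_insert {r a : ℕ} {s : Finset ℕ} (h : Hyp r (insert a s)) : Hyp r s :=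
  ⟨fun x hx => h.1 (Finset.mem_insert_of_mem hx),
   fun u hu v hv => h.2 u (Finset.mem_insert_of_mem hu) v (Finset.mem_insert_of_mem hv)⟩

lemma sigmaOf_empty {r : ℕ} (h : Hyp r ∅) : sigmaOf r ∅ h = 1 :=
  Equiv.ext fun i => Fin.ext (gnat_empty i)

lemma sigmaOf_insert {r a : ℕ} {s : Finset ℕ} (ha : a ∉ s) (h : Hyp r (insert a s))
    (hfa' : f a < 2*r+2) (ha' : a < 2*r+2) :
    sigmaOf r (insert a s) h =
      Equiv.swap ⟨f a, hfa'⟩ ⟨a, ha'⟩ * sigmaOf r s (hyp_of_insert h) := by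
  have H : HypIns r a s := ⟨ha, h.1, h.2⟩
  apply Equiv.ext; intro i
  apply Fin.ext
  rw [Equiv.Perm.mul_apply, Equiv.swap_apply_def]
  simp only [apply_ite (Fin.val (n := 2*r+2)), Fin.ext_iff, sigmaOf_apply]
  rw [gnat_insert_eq H]

lemma sign_sigmaOf {r : ℕ} : ∀ (C : Finset ℕ) (h : Hyp r C),
    Equiv.Perm.sign (sigmaOf r C h) = (-1)^C.card := by
  intro C
  induction C using Finset.induction_on with
  | empty => intro h; rw [sigmaOf_empty]; simp
  | @insert a s ha ih =>
      intro h
      have H : HypIns r a s := ⟨ha, h.1, h.2⟩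
      have hb := a_bounds H
      have hflt : f a < a := f_lt hb.1
      rw [sigmaOf_insert ha h (by omega) (by omega), Equiv.Perm.sign_mul,
        Equiv.Perm.sign_swap (by simp [Fin.ext_iff]; omega), ih (hyp_of_insert h),
        Finset.card_insert_of_notMem ha, pow_succ]
      exact (mul_comm _ _)

lemma prod_sigmaOf {r : ℕ} (t : ℝ) (y : ℕ → ℝ) : ∀ (C : Finset ℕ) (h : Hyp r C),
    ∏ i : Fin (2*r+2), (1 - Tmat r t y) (sigmaOf r C h i) i = ∏ v ∈ C, (t * y v) := by
  intro C
  induction C using Finset.induction_on with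
  | empty =>
      intro h
      rw [sigmaOf_empty]
      simp only [Equiv.Perm.one_apply, Finset.prod_empty]
      rw [Finset.prod_congr rfl (fun i _ => A_diag (r := r) (t := t) (y := y) i),
        Finset.prod_const_one]
  | @insert a s ha ih =>
      intro h
      have H : HypIns r a s := ⟨ha, h.1, h.2⟩
      have hb := a_bounds H
      have hflt : f a < a := f_lt hb.1
      have hfa' : f a < 2*r+2 := by omega
      have ha' : a < 2*r+2 := by omega
      set fa' : Fin (2*r+2) := ⟨f a, hfa'⟩ with hfadef
      set a' : Fin (2*r+2) := ⟨a, ha'⟩ with hadef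
      have hne : fa' ≠ a' := by simp [hfadef, hadef, Fin.ext_iff]; omega
      have hswap := sigmaOf_insert ha h hfa' ha'
      set σs := sigmaOf r s (hyp_of_insert h) with hσs
      set σi := sigmaOf r (insert a s) h with hσi
      have hsfa : σs fa' = fa' := Fin.ext (gnat_s_fa H)
      have hsa : σs a' = a' := Fin.ext (gnat_s_a H)
      have hkey : ∀ i : Fin (2*r+2), i ≠ fa' → i ≠ a' → σi i = σs i ∧ σs i ≠ fa' ∧ σs i ≠ a' := by
        intro i h1 h2
        have hx1 : σs i ≠ fa' := fun hx => h1 (by rw [← hsfa] at hx; exact σs.injective hx)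
        have hx2 : σs i ≠ a' := fun hx => h2 (by rw [← hsa] at hx; exact σs.injective hx)
        refine ⟨?_, hx1, hx2⟩
        rw [hswap, Equiv.Perm.mul_apply, Equiv.swap_apply_of_ne_of_ne hx1 hx2]
      have hsub : ({fa', a'} : Finset (Fin (2*r+2))) ⊆ Finset.univ := Finset.subset_univ _
      have hσia : σi a' = fa' := Fin.ext (gnat_of_mem (Finset.mem_insert_self a s))
      have hσifa : σi fa' = a' := by
        apply Fin.ext
        show gnat (insert a s) (f a) = a
        rw [gnat_insert_eq H, gnat_s_fa H, if_pos rfl]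
      have hsplit1 : ∏ i : Fin (2*r+2), (1 - Tmat r t y) (σi i) i
          = (∏ i ∈ Finset.univ \ {fa', a'}, (1 - Tmat r t y) (σs i) i) *
            ((1 - Tmat r t y) (σi fa') fa' * (1 - Tmat r t y) (σi a') a') := by
        rw [← Finset.prod_sdiff hsub, Finset.prod_pair hne]
        congr 1
        apply Finset.prod_congr rfl
        intro i hi
        simp only [Finset.mem_sdiff, Finset.mem_insert, Finset.mem_singleton] at hi
        rw [(hkey i (fun h => hi.2 (Or.inl h)) (fun h => hi.2 (Or.inr h))).1]
      have hsplit2 : ∏ i : Fin (2*r+2), (1 - Tmat r t y) (σs i) i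
          = (∏ i ∈ Finset.univ \ {fa', a'}, (1 - Tmat r t y) (σs i) i) := by
        rw [← Finset.prod_sdiff hsub, Finset.prod_pair hne, hsfa, hsa, A_diag, A_diag]
        ring
      rw [hsplit1, ← hsplit2, ih (hyp_of_insert h), hσifa, hσia]
      rw [show (1 - Tmat r t y) a' fa' = -1 from A_pair_gt hb.1 hfa' ha',
        show (1 - Tmat r t y) fa' a' = -(t * y a) from A_pair_lt hb.1 hfa' ha',
        Finset.prod_insert ha]
      ring

lemma sigmaOf_Mv {r : ℕ} {C : Finset ℕ} (h : Hyp r C) (i : Fin (2*r+2)) :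
    (sigmaOf r C h i : ℕ) = (i : ℕ) ∨ Mv (sigmaOf r C h i : ℕ) (i : ℕ) := by
  rw [sigmaOf_apply]
  exact gnat_Mv h.1 (i : ℕ)

end HP4
namespace HP5
open HP HP2 HP3 HP4

lemma classify {r : ℕ} (σ : Equiv.Perm (Fin (2*r+2)))
    (hσ : ∀ i : Fin (2*r+2), (σ i : ℕ) = (i : ℕ) ∨ Mv (σ i : ℕ) (i : ℕ)) :
    ∀ i : Fin (2*r+2), σ (σ i) = i ∧ ((σ i : ℕ) < (i : ℕ) → (σ i : ℕ) = f (i : ℕ)) := by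
  have main : ∀ (k : ℕ) (i : Fin (2*r+2)), 2*r+2 - (i : ℕ) ≤ k →
      σ (σ i) = i ∧ ((σ i : ℕ) < (i : ℕ) → (σ i : ℕ) = f (i : ℕ)) := by
    intro k
    induction k with
    | zero => intro i hi; exact absurd hi (by have := i.isLt; omega)
    | succ k ih =>
      intro i hi
      rcases lt_trichotomy ((σ i : ℕ)) ((i : ℕ)) with hlt | heq | hgt
      · have hfi : (σ i : ℕ) = f (i : ℕ) := by
          rcases hσ i with h | h
          · omega
          · unfold Mv at h; have hs := f_spec (i : ℕ); omega
        refine ⟨?_, fun _ => hfi⟩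
        set j := σ.symm i with hjdef
        have hji : σ j = i := σ.apply_symm_apply i
        have hjival : (σ j : ℕ) = (i : ℕ) := by rw [hji]
        have hjlt : (j : ℕ) < (i : ℕ) := by
          rcases lt_trichotomy ((j : ℕ)) ((i : ℕ)) with h | h | h
          · exact h
          · exfalso
            have hje : j = i := Fin.ext h
            rw [hje] at hjival
            omega
          · exfalso
            have hIH := (ih j (by have := i.isLt; omega)).1
            rw [hji] at hIH
            have : (σ i : ℕ) = (j : ℕ) := by rw [hIH]
            omega
        have hMv : Mv (i : ℕ) (j : ℕ) := by
          rcases hσ j with h | h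
          · omega
          · rw [hjival] at h; exact h
        have hjf : (j : ℕ) = f (i : ℕ) := by
          unfold Mv at hMv
          have hs := f_spec (i : ℕ)
          omega
        have hjeq : σ i = j := Fin.ext (by omega)
        rw [hjeq, hji]
      · have hfix : σ i = i := Fin.ext heq
        exact ⟨by rw [hfix, hfix], by omega⟩
      · have hIH := ih (σ i) (by have := (σ i).isLt; omega)
        have h2 : σ (σ i) = i := σ.injective hIH.1
        exact ⟨h2, by omega⟩
  intro i
  exact main (2*r+2) i (by omega)

end HP5
namespace HP6
open HP HP2 HP3 HP4 HP5

variable {r : ℕ}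

def snat (σ : Equiv.Perm (Fin (2*r+2))) (i : ℕ) : ℕ :=
  if h : i < 2*r+2 then (σ ⟨i, h⟩ : ℕ) else i

def Cof (σ : Equiv.Perm (Fin (2*r+2))) : Finset ℕ :=
  (Finset.Icc 1 (2*r+1)).filter fun v => snat σ v = f v

lemma mem_Cof {σ : Equiv.Perm (Fin (2*r+2))} {v : ℕ} :
    v ∈ Cof σ ↔ (1 ≤ v ∧ v ≤ 2*r+1 ∧ snat σ v = f v) := by
  simp only [Cof, Finset.mem_filter, Finset.mem_Icc]; tauto

lemma snat_lt {σ : Equiv.Perm (Fin (2*r+2))} {i : ℕ} (h : i < 2*r+2) :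
    snat σ i = (σ ⟨i, h⟩ : ℕ) := dif_pos h

lemma Cof_hyp (σ : Equiv.Perm (Fin (2*r+2)))
    (hσ : ∀ i : Fin (2*r+2), (σ i : ℕ) = (i : ℕ) ∨ Mv (σ i : ℕ) (i : ℕ)) :
    Hyp r (Cof σ) := by
  have hcl := classify σ hσ
  constructor
  · exact Finset.filter_subset _ _
  · intro u hu v hv hadj
    by_cases huv : u = v
    · subst huv; exact not_adj_self r u hadj
    · rw [mem_Cof] at hu hv
      obtain ⟨hu1, hu2, hu3⟩ := hu
      obtain ⟨hv1, hv2, hv3⟩ := hv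
      have hul : u < 2*r+2 := by omega
      have hvl : v < 2*r+2 := by omega
      have hful : f u < 2*r+2 := by have := f_spec u; omega
      have hfvl : f v < 2*r+2 := by have := f_spec v; omega
      rw [snat_lt hul] at hu3
      rw [snat_lt hvl] at hv3
      have hσu : σ ⟨u, hul⟩ = ⟨f u, hful⟩ := Fin.ext hu3
      have hσv : σ ⟨v, hvl⟩ = ⟨f v, hfvl⟩ := Fin.ext hv3
      have hσfu : σ ⟨f u, hful⟩ = ⟨u, hul⟩ := by
        have := (hcl ⟨u, hul⟩).1
        rw [hσu] at this; exact this
      have hσfv : σ ⟨f v, hfvl⟩ = ⟨v, hvl⟩ := by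
        have := (hcl ⟨v, hvl⟩).1
        rw [hσv] at this; exact this
      have hflu : f u < u := f_lt hu1
      have hflv : f v < v := f_lt hv1
      rw [adj_iff hu1 hu2 hv1 hv2] at hadj
      rcases hadj.2 with h | h | h
      · -- u = f v
        have : σ ⟨u, hul⟩ = ⟨v, hvl⟩ := by
          rw [show (⟨u, hul⟩ : Fin (2*r+2)) = ⟨f v, hfvl⟩ from Fin.ext h]
          exact hσfv
        have := congrArg Fin.val this
        rw [hσu] at this
        have : f u = v := this
        omega
      · -- v = f u
        have : σ ⟨v, hvl⟩ = ⟨u, hul⟩ := by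
          rw [show (⟨v, hvl⟩ : Fin (2*r+2)) = ⟨f u, hful⟩ from Fin.ext h]
          exact hσfu
        have := congrArg Fin.val this
        rw [hσv] at this
        have : f v = u := this
        omega
      · -- f u = f v
        have : σ ⟨f u, hful⟩ = σ ⟨f v, hfvl⟩ := by
          rw [show (⟨f u, hful⟩ : Fin (2*r+2)) = ⟨f v, hfvl⟩ from Fin.ext h]
        rw [hσfu, hσfv] at this
        exact huv (congrArg Fin.val this)

lemma gnat_Cof (σ : Equiv.Perm (Fin (2*r+2)))
    (hσ : ∀ i : Fin (2*r+2), (σ i : ℕ) = (i : ℕ) ∨ Mv (σ i : ℕ) (i : ℕ))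
    (i : Fin (2*r+2)) : gnat (Cof σ) (i : ℕ) = (σ i : ℕ) := by
  have hcl := classify σ hσ
  rcases lt_trichotomy ((σ i : ℕ)) ((i : ℕ)) with hlt | heq | hgt
  · have hfi : (σ i : ℕ) = f (i : ℕ) := (hcl i).2 hlt
    have hmem : (i : ℕ) ∈ Cof σ := mem_Cof.2 ⟨by omega, by have := i.isLt; omega,
      by rw [snat_lt i.isLt]; exact hfi⟩
    rw [gnat_of_mem hmem, ← hfi]
  · have hσii : σ i = i := Fin.ext heq
    rw [gnat_fix ?_ ?_ ?_]
    · exact heq.symm ▸ rfl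
    · intro hmem; rw [mem_Cof] at hmem
      have h3 : (σ i : ℕ) = f (i : ℕ) := by rw [← snat_lt i.isLt]; exact hmem.2.2
      have := f_lt (v := (i : ℕ)) hmem.1
      omega
    · rintro ⟨hmem, he⟩; rw [mem_Cof] at hmem
      have hlt1 : (i : ℕ) + 1 < 2*r+2 := by omega
      have h1 : (σ ⟨(i : ℕ)+1, hlt1⟩ : ℕ) = f ((i : ℕ)+1) := by
        rw [← snat_lt hlt1]; exact hmem.2.2
      have hee : σ ⟨(i : ℕ)+1, hlt1⟩ = σ i := Fin.ext (by omega)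
      have := congrArg Fin.val (σ.injective hee)
      simp at this
    · rintro ⟨hmem, he⟩; rw [mem_Cof] at hmem
      have hlt1 : (i : ℕ) + 2 < 2*r+2 := by omega
      have h1 : (σ ⟨(i : ℕ)+2, hlt1⟩ : ℕ) = f ((i : ℕ)+2) := by
        rw [← snat_lt hlt1]; exact hmem.2.2
      have hee : σ ⟨(i : ℕ)+2, hlt1⟩ = σ i := Fin.ext (by omega)
      have := congrArg Fin.val (σ.injective hee)
      simp at this
  · have h1 : σ (σ i) = i := (hcl i).1
    have h2 : (σ (σ i) : ℕ) = (i : ℕ) := by rw [h1]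
    have hkf : (i : ℕ) = f ((σ i : ℕ)) := by
      have := (hcl (σ i)).2 (by omega)
      omega
    have hkmem : ((σ i : ℕ)) ∈ Cof σ := mem_Cof.2 ⟨by omega,
      by have := (σ i).isLt; omega,
      by rw [snat_lt (σ i).isLt]; show (σ (σ i) : ℕ) = _; omega⟩
    have hinot : (i : ℕ) ∉ Cof σ := by
      intro hmem; rw [mem_Cof] at hmem
      have h3 : (σ i : ℕ) = f (i : ℕ) := by rw [← snat_lt i.isLt]; exact hmem.2.2
      have := f_spec (i : ℕ); omega
    have hMv : Mv ((σ i : ℕ)) ((i : ℕ)) := by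
      rcases hσ i with h | h
      · omega
      · exact h
    have hk12 : (σ i : ℕ) = (i : ℕ)+1 ∨ (σ i : ℕ) = (i : ℕ)+2 := by
      unfold Mv at hMv; omega
    rcases hk12 with hk | hk
    · rw [gnat_b2 hinot ⟨by rw [← hk]; exact hkmem, by rw [← hk]; exact hkf.symm⟩, hk]
    · have hb2 : ¬((i : ℕ)+1 ∈ Cof σ ∧ f ((i : ℕ)+1) = (i : ℕ)) := by
        rintro ⟨hm, he⟩
        rw [mem_Cof] at hm
        have hlt1 : (i : ℕ)+1 < 2*r+2 := by omega
        have h1' : (σ ⟨(i : ℕ)+1, hlt1⟩ : ℕ) = f ((i : ℕ)+1) := by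
          rw [← snat_lt hlt1]; exact hm.2.2
        have hee : σ ⟨(i : ℕ)+1, hlt1⟩ = σ (σ i) := Fin.ext (by omega)
        have := congrArg Fin.val (σ.injective hee)
        simp at this
        omega
      rw [gnat_b3 hinot hb2 ⟨by rw [← hk]; exact hkmem, by rw [← hk]; exact hkf.symm⟩, hk]

lemma sigmaOf_Cof (σ : Equiv.Perm (Fin (2*r+2)))
    (hσ : ∀ i : Fin (2*r+2), (σ i : ℕ) = (i : ℕ) ∨ Mv (σ i : ℕ) (i : ℕ))
    (h : Hyp r (Cof σ)) : sigmaOf r (Cof σ) h = σ :=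
  Equiv.ext fun i => Fin.ext (by rw [sigmaOf_apply, gnat_Cof σ hσ i])

lemma Cof_sigmaOf {C : Finset ℕ} (h : Hyp r C) : Cof (sigmaOf r C h) = C := by
  ext v
  rw [mem_Cof]
  constructor
  · rintro ⟨h1, h2, h3⟩
    have hv2 : v < 2*r+2 := by omega
    rw [snat_lt hv2, sigmaOf_apply] at h3
    by_contra hvC
    by_cases hb2 : v + 1 ∈ C ∧ f (v+1) = v
    · rw [gnat_b2 hvC hb2] at h3; have := f_spec v; omega
    · by_cases hb3 : v + 2 ∈ C ∧ f (v+2) = v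
      · rw [gnat_b3 hvC hb2 hb3] at h3; have := f_spec v; omega
      · rw [gnat_fix hvC hb2 hb3] at h3; have := f_lt h1; omega
  · intro hv
    have hb := Finset.mem_Icc.1 (h.1 hv)
    refine ⟨hb.1, hb.2, ?_⟩
    rw [snat_lt (by omega), sigmaOf_apply, gnat_of_mem hv]

end HP6
namespace HP7
open HP HP2 HP3 HP4 HP5 HP6

lemma card_le {r : ℕ} {C : Finset ℕ} (h : Hyp r C) : C.card ≤ r + 1 := by
  classical
  have hdisj : ∀ u ∈ C, ∀ v ∈ C, u ≠ v → Disjoint ({f u, u} : Finset ℕ) {f v, v} := by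
    intro u hu v hv huv
    have hpd := pd h.1 h.2 u hu v hv huv
    rw [Finset.disjoint_left]
    intro x hx hy
    simp only [Finset.mem_insert, Finset.mem_singleton] at hx hy
    omega
  have hcard : (C.biUnion fun v => ({f v, v} : Finset ℕ)).card = 2 * C.card := by
    rw [Finset.card_biUnion hdisj,
      Finset.sum_congr rfl (fun v hv => Finset.card_pair (f_lt (Finset.mem_Icc.1 (h.1 hv)).1).ne),
      Finset.sum_const, smul_eq_mul, mul_comm]
  have hsub : (C.biUnion fun v => ({f v, v} : Finset ℕ)) ⊆ Finset.range (2*r+2) := by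
    intro x hx
    simp only [Finset.mem_biUnion, Finset.mem_insert, Finset.mem_singleton] at hx
    obtain ⟨v, hv, hx⟩ := hx
    have h1 := Finset.mem_Icc.1 (h.1 hv)
    have h2 := f_spec v
    simp only [Finset.mem_range]
    omega
  have := Finset.card_le_card hsub
  rw [hcard, Finset.card_range] at this
  omega

theorem det_eq (r : ℕ) (t : ℝ) (y : ℕ → ℝ) :
    (1 - Tmat r t y).det = ∑ m ∈ Finset.range (r+2), (-t)^m * hardZ r m y := by
  classical
  rw [Matrix.det_apply']
  have h1 : ∀ σ ∈ (Finset.univ : Finset (Equiv.Perm (Fin (2*r+2)))),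
      (((Equiv.Perm.sign σ : ℤ) : ℝ) * ∏ i, (1 - Tmat r t y) (σ i) i) ≠ 0 →
      (∀ i, (σ i : ℕ) = (i : ℕ) ∨ Mv (σ i : ℕ) (i : ℕ)) := by
    intro σ _ hne i
    have hprod : (∏ i, (1 - Tmat r t y) (σ i) i) ≠ 0 := right_ne_zero_of_mul hne
    have hfac := Finset.prod_ne_zero_iff.1 hprod i (Finset.mem_univ i)
    rcases Mv_of_ne hfac with h | h
    exacts [Or.inl h, Or.inr h]
  rw [← Finset.sum_filter_of_ne h1]
  set S := (Finset.Icc 1 (2*r+1)).powerset.filter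
      (fun c => ∀ a ∈ c, ∀ b ∈ c, ¬ grAdj r a b) with hSdef
  have hmemS : ∀ {C : Finset ℕ}, C ∈ S ↔ Hyp r C := by
    intro C
    simp only [hSdef, Finset.mem_filter, Finset.mem_powerset, Hyp]
  have hbij : (∑ C ∈ S, ((-t)^C.card * ∏ v ∈ C, y v)) =
      ∑ σ ∈ Finset.univ.filter
        (fun σ : Equiv.Perm (Fin (2*r+2)) => ∀ i, (σ i : ℕ) = (i : ℕ) ∨ Mv (σ i : ℕ) (i : ℕ)),
        ((Equiv.Perm.sign σ : ℤ) : ℝ) * ∏ i, (1 - Tmat r t y) (σ i) i := by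
    refine Finset.sum_bij' (fun C hC => sigmaOf r C (hmemS.1 hC))
      (fun σ _ => Cof σ) ?_ ?_ ?_ ?_ ?_
    · intro C hC
      simp only [Finset.mem_filter]
      exact ⟨Finset.mem_univ _, fun i => sigmaOf_Mv (hmemS.1 hC) i⟩
    · intro σ hσ
      simp only [Finset.mem_filter] at hσ
      exact hmemS.2 (Cof_hyp σ hσ.2)
    · intro C hC
      exact Cof_sigmaOf (hmemS.1 hC)
    · intro σ hσ
      simp only [Finset.mem_filter] at hσ
      exact sigmaOf_Cof σ hσ.2 _
    · intro C hC
      rw [sign_sigmaOf C (hmemS.1 hC), prod_sigmaOf t y C (hmemS.1 hC)]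
      simp only [Units.val_pow_eq_pow_val, Units.val_neg, Units.val_one, Int.cast_pow,
        Int.cast_neg, Int.cast_one, Finset.prod_mul_distrib, Finset.prod_const]
      rw [neg_pow t C.card]
      ring
  rw [← hbij]
  have hz : ∀ m, hardZ r m y = ∑ C ∈ S.filter (fun c => c.card = m), ∏ v ∈ C, y v := by
    intro m
    unfold hardZ
    apply Finset.sum_congr _ (fun _ _ => rfl)
    ext C
    simp only [Finset.mem_filter, Finset.mem_powersetCard, hSdef, Finset.mem_powerset]
    tauto
  have hmaps : ∀ C ∈ S, C.card ∈ Finset.range (r+2) := by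
    intro C hC
    rw [Finset.mem_range]
    have := card_le (hmemS.1 hC)
    omega
  rw [← Finset.sum_fiberwise_of_maps_to hmaps (fun C => (-t)^C.card * ∏ v ∈ C, y v)]
  apply Finset.sum_congr rfl
  intro m _
  rw [hz m, Finset.mul_sum]
  apply Finset.sum_congr rfl
  intro C hC
  rw [Finset.mem_filter] at hC
  rw [hC.2]

end HP7
namespace HP8
open HP HP2 HP3 HP4 HP5 HP6 HP7

lemma upd_row {r : ℕ} {t : ℝ} {y : ℕ → ℝ} (q0 : Fin (2*r+2)) (hq0 : (q0 : ℕ) = 0) :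
    (1 - Tmat r t y).updateRow q0 (Pi.single q0 1)
      = 1 - Tmat r t (Function.update y 1 0) := by
  ext p q
  rw [Matrix.updateRow_apply]
  by_cases hp : p = q0
  · rw [if_pos hp, Pi.single_apply]
    subst hp
    by_cases hq : q = p
    · rw [if_pos hq, hq]
      exact (A_diag p).symm
    · rw [if_neg hq]
      have hqv : (q : ℕ) ≠ (p : ℕ) := fun h => hq (Fin.ext h)
      rw [Matrix.sub_apply, Matrix.one_apply, if_neg (fun h => hq h.symm)]
      rw [Tmat_def]
      by_cases hq1 : (q : ℕ) = 1
      · rw [if_neg (by omega), if_neg (by omega), if_pos (by omega)]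
        rw [show (p : ℕ) + 1 = 1 from by omega, Function.update_self]
        ring
      · rw [if_neg (by omega), if_neg (by omega), if_neg (by omega), if_neg (by omega)]
        ring
  · rw [if_neg hp]
    have hpv : (p : ℕ) ≠ 0 := fun h => hp (Fin.ext (by omega))
    rw [Matrix.sub_apply, Matrix.sub_apply]
    congr 1
    rw [Tmat_def, Tmat_def,
      Function.update_of_ne (by omega : ((p:ℕ)+1) ≠ 1) 0 y,
      Function.update_of_ne (by omega : ((p:ℕ)+2) ≠ 1) 0 y]

theorem final (r : ℕ) (hr : 1 ≤ r) (t : ℝ) (y : ℕ → ℝ)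
    (hdet : (1 - Tmat r t y).det ≠ 0) (q0 : Fin (2*r+2)) (hq0 : (q0 : ℕ) = 0) :
    (1 - Tmat r t y)⁻¹ q0 q0 =
      (∑ m ∈ Finset.range (r + 2), (-t) ^ m * hardZ r m (Function.update y 1 0)) /
        (∑ m ∈ Finset.range (r + 2), (-t) ^ m * hardZ r m y) := by
  rw [Matrix.inv_def, Ring.inverse_eq_inv', Matrix.smul_apply, Matrix.adjugate_apply,
    upd_row q0 hq0, smul_eq_mul, det_eq, det_eq]
  exact inv_mul_eq_div _ _

end HP8

/-- the (0,0)-entry of (I − T_r(t·y))⁻¹ is the ratio of the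
hard-particle generating polynomial with y_1 set to 0 to the full one. -/
theorem inv_transfer_entry_eq_hardZ_ratio (r : ℕ) (hr : 1 ≤ r) (t : ℝ) (y : ℕ → ℝ)
    (hdet : (1 - Tmat r t y).det ≠ 0) :
    (1 - Tmat r t y)⁻¹ ⟨0, by omega⟩ ⟨0, by omega⟩ =
      (∑ m ∈ Finset.range (r + 2), (-t) ^ m * hardZ r m (Function.update y 1 0)) /
        (∑ m ∈ Finset.range (r + 2), (-t) ^ m * hardZ r m y) := by
  exact HP8.final r hr t y hdet ⟨0, by omega⟩ rfl
end

section
/- Let (R_{α,n}) be an A_r Q-system solution. Then for every 1 ≤ α ≤ r+1 and every n ∈ ℤ, R_{α,n} equals the determinant of the α×α matrix whose (i,j) entry is R_{1, n+i+j−α−1} (indices 1 ≤ i, j ≤ α). -/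
/-!
The Hankel determinants `H α n = det (f (n + i + j + 1 - α))` satisfy the Desnanot–Jacobi
identity `H (α + 2) n * H α n = H (α + 1) (n + 1) * H (α + 1) (n - 1) - H (α + 1) n ^ 2`, which
for `f = R 1` is the Q-system relation solved for `R (α + 2) n`. Since `H 0 = 1 = R 0`,
`H 1 = R 1` and `R α n ≠ 0`, induction on `α` gives `R α = H α`.

For Desnanot–Jacobi, multiply `M` by the identity matrix whose first and last columns are replaced
by those of `adjugate M`: the product is `M` with these columns replaced by `det M` times unit
vectors, so `det M` times a `2 × 2` minor of `adjugate M` equals `det M ^ 2` times the central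
minor. The factor `det M` cancels for the generic matrix over `ℤ[X_ij]`, and the identity
specialises.
-/

theorem Equiv.Perm.eq_one_or_eq_swap_of_forall_ne {n : Type*} [DecidableEq n] {i j : n}
    (hij : i ≠ j) {σ : Perm n} (hσ : ∀ k, k ≠ i → k ≠ j → σ k = k) :
    σ = 1 ∨ σ = Equiv.swap i j := by
  have hmove : ∀ k, σ k ≠ k → σ k = i ∨ σ k = j := fun k hk => by
    by_contra! h
    exact hk (σ.injective (hσ _ h.1 h.2))
  by_cases hi : σ i = i
  · left
    have hj : σ j = j := by
      by_contra hj
      rcases hmove j hj with h | h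
      · exact hij (σ.injective (h.trans hi.symm)).symm
      · exact hj h
    ext k
    by_cases hki : k = i <;> by_cases hkj : k = j <;> simp_all
  · right
    have hi' : σ i = j := (hmove i hi).resolve_left hi
    have hj : σ j = i := by
      have : σ j ≠ j := fun h => hij (σ.injective (hi'.trans h.symm))
      exact (hmove j this).resolve_right this
    ext k
    by_cases hki : k = i <;> by_cases hkj : k = j <;> simp_all [Equiv.swap_apply_of_ne_of_ne]

namespace Matrix

section

open Equiv

variable {n R : Type*} [Fintype n] [DecidableEq n] [CommRing R]

theorem det_one_updateCol_updateCol {i j : n} (hij : i ≠ j) (c d : n → R) :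
    (((1 : Matrix n n R).updateCol i c).updateCol j d).det = c i * d j - c j * d i := by
  set N := ((1 : Matrix n n R).updateCol i c).updateCol j d
  have hN : ∀ p q, q ≠ i → q ≠ j → N p q = if p = q then 1 else 0 := fun p q hi hj => by
    simp [N, one_apply, hi, hj]
  rw [det_apply,
    Fintype.sum_eq_add 1 (Equiv.swap i j) fun h => hij (Equiv.swap_eq_one_iff.mp h.symm)]
  · rw [Fintype.prod_eq_mul i j hij, Fintype.prod_eq_mul i j hij]
    · simp only [Perm.sign_one, Perm.coe_one, id_eq, ne_eq, hij, not_false_eq_true, updateCol_ne,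
        updateCol_self, one_smul, Perm.sign_swap hij, Equiv.swap_apply_left,
        Equiv.swap_apply_right, Units.neg_smul, N]
      ring
    · intro k hk
      rw [Equiv.swap_apply_of_ne_of_ne hk.1 hk.2, hN _ _ hk.1 hk.2, if_pos rfl]
    · intro k hk
      rw [Perm.one_apply, hN _ _ hk.1 hk.2, if_pos rfl]
  · rintro σ ⟨h1, hswap⟩
    obtain ⟨k, hki, hkj, hk⟩ : ∃ k, k ≠ i ∧ k ≠ j ∧ σ k ≠ k := by
      by_contra! h
      exact (Perm.eq_one_or_eq_swap_of_forall_ne hij h).elim h1 hswap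
    rw [Finset.prod_eq_zero (Finset.mem_univ k) (by rw [hN _ _ hki hkj, if_neg hk]), smul_zero]

theorem det_updateCol_pi_single {m : ℕ} (A : Matrix (Fin (m + 1)) (Fin (m + 1)) R)
    (p : Fin (m + 1)) :
    (A.updateCol p (Pi.single p 1)).det = (A.submatrix p.succAbove p.succAbove).det := by
  rw [det_succ_column _ p, Finset.sum_eq_single p]
  · simp [← two_mul]
  · intro i _ hi
    simp [hi]
  · simp

theorem mulVec_adjugate_col (A : Matrix n n R) (q : n) :
    A *ᵥ (fun k => A.adjugate k q) = A.det • Pi.single q 1 := by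
  ext p
  simpa [one_eq_pi_single, Pi.single_comm, mul_apply, mulVec, dotProduct] using
    congrFun (congrFun (mul_adjugate A) p) q

theorem det_updateCol_zero_updateCol_last_pi_single {m : ℕ}
    (A : Matrix (Fin (m + 2)) (Fin (m + 2)) R) :
    ((A.updateCol 0 (Pi.single 0 1)).updateCol (Fin.last _) (Pi.single (Fin.last _) 1)).det =
      (A.submatrix (Fin.castSucc ∘ Fin.succ) (Fin.castSucc ∘ Fin.succ)).det := by
  have : (A.updateCol 0 (Pi.single 0 1)).submatrix Fin.castSucc Fin.castSucc =
      (A.submatrix Fin.castSucc Fin.castSucc).updateCol 0 (Pi.single 0 1) := by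
    ext i j
    rcases Fin.eq_zero_or_eq_succ j with rfl | ⟨j, rfl⟩ <;>
      simp [Pi.single_apply, Fin.castSucc_eq_zero_iff]
  rw [det_updateCol_pi_single, Fin.succAbove_last, this, det_updateCol_pi_single,
    Fin.succAbove_zero, submatrix_submatrix]

theorem det_mul_desnanot_jacobi {m : ℕ} (M : Matrix (Fin (m + 2)) (Fin (m + 2)) R) :
    M.det *
      ((M.submatrix Fin.succ Fin.succ).det * (M.submatrix Fin.castSucc Fin.castSucc).det
        - (M.submatrix Fin.succ Fin.castSucc).det * (M.submatrix Fin.castSucc Fin.succ).det) =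
    M.det *
      (M.det * (M.submatrix (Fin.castSucc ∘ Fin.succ) (Fin.castSucc ∘ Fin.succ)).det) := by
  set l := Fin.last (m + 1)
  have h0l : (0 : Fin (m + 2)) ≠ l := Fin.last_pos.ne
  set N := ((1 : Matrix (Fin (m + 2)) (Fin (m + 2)) R).updateCol 0 fun k => M.adjugate k 0)
    |>.updateCol l fun k => M.adjugate k l
  have hMN : M * N = ((M.updateCol 0 (M.det • Pi.single 0 1)).updateCol l
      (M.det • Pi.single l 1)) := by
    rw [mul_updateCol, mul_updateCol, mul_one, mulVec_adjugate_col, mulVec_adjugate_col]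
  have hN : N.det =
      (M.submatrix Fin.succ Fin.succ).det * (M.submatrix Fin.castSucc Fin.castSucc).det
      - (M.submatrix Fin.succ Fin.castSucc).det * (M.submatrix Fin.castSucc Fin.succ).det := by
    rw [det_one_updateCol_updateCol h0l]
    have hsign : (-1 : R) ^ (m + 1) * (-1) ^ (m + 1) = 1 := by rw [← mul_pow]; simp
    simp only [adjugate_fin_succ_eq_det_submatrix, l, Fin.succAbove_zero, Fin.succAbove_last,
      Fin.val_zero, Fin.val_last, add_zero, zero_add, ← two_mul, pow_mul, neg_one_sq, one_pow,
      one_mul]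
    linear_combination (-(M.submatrix Fin.succ Fin.castSucc).det *
      (M.submatrix Fin.castSucc Fin.succ).det) * hsign
  rw [← hN, ← det_mul, hMN, det_updateCol_smul, updateCol_comm _ h0l, det_updateCol_smul,
    updateCol_comm _ h0l.symm, det_updateCol_zero_updateCol_last_pi_single]

theorem desnanot_jacobi {m : ℕ} (M : Matrix (Fin (m + 2)) (Fin (m + 2)) R) :
    (M.submatrix Fin.succ Fin.succ).det * (M.submatrix Fin.castSucc Fin.castSucc).det
      - (M.submatrix Fin.succ Fin.castSucc).det * (M.submatrix Fin.castSucc Fin.succ).det =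
    M.det * (M.submatrix (Fin.castSucc ∘ Fin.succ) (Fin.castSucc ∘ Fin.succ)).det := by
  have hgen := mul_left_cancel₀ (det_mvPolynomialX_ne_zero (Fin (m + 2)) ℤ)
    (det_mul_desnanot_jacobi (mvPolynomialX (Fin (m + 2)) (Fin (m + 2)) ℤ))
  have := congrArg (MvPolynomial.aeval fun p : Fin (m + 2) × Fin (m + 2) => M p.1 p.2) hgen
  simp only [map_sub, map_mul, AlgHom.map_det, AlgHom.mapMatrix_apply, ← submatrix_map] at this
  simpa only [← AlgHom.mapMatrix_apply, mvPolynomialX_mapMatrix_aeval] using this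

end

def hankel {A : Type*} (f : ℤ → A) (α : ℕ) (n : ℤ) : Matrix (Fin α) (Fin α) A :=
  of fun i j => f (n + ((i : ℕ) : ℤ) + ((j : ℕ) : ℤ) + 1 - (α : ℤ))

theorem hankel_submatrix {A : Type*} (f : ℤ → A) {α β : ℕ} (n n' : ℤ)
    {a b : Fin β → Fin α} {s t : ℤ}
    (ha : ∀ i, ((a i : ℕ) : ℤ) = i + s) (hb : ∀ j, ((b j : ℕ) : ℤ) = j + t)
    (hn : n' = n + s + t + β - α) :
    (hankel f α n).submatrix a b = hankel f β n' := by
  ext i j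
  simp only [hankel, submatrix_apply, of_apply, ha, hb, hn]
  ring_nf

theorem det_hankel_add_two {R : Type*} [CommRing R] (f : ℤ → R) (k : ℕ) (n : ℤ) :
    (hankel f (k + 2) n).det * (hankel f k n).det =
      (hankel f (k + 1) (n + 1)).det * (hankel f (k + 1) (n - 1)).det
        - (hankel f (k + 1) n).det ^ 2 := by
  have h := desnanot_jacobi (hankel f (k + 2) n)
  rw [hankel_submatrix f n (n + 1) (s := 1) (t := 1) (by simp) (by simp) (by push_cast; ring),
    hankel_submatrix f n (n - 1) (s := 0) (t := 0) (by simp) (by simp) (by push_cast; ring),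
    hankel_submatrix f n n (s := 1) (t := 0) (by simp) (by simp) (by push_cast; ring),
    hankel_submatrix f n n (s := 0) (t := 1) (by simp) (by simp) (by push_cast; ring),
    hankel_submatrix f n n (s := 1) (t := 1) (by simp) (by simp) (by push_cast; ring)] at h
  linear_combination -h

end Matrix

theorem qsystem_det_formula_general (r : ℕ) (R : ℕ → ℤ → ℝ)
    (hpos : ∀ α, α ≤ r + 1 → ∀ n : ℤ, 0 < R α n)
    (hbd0 : ∀ n : ℤ, R 0 n = 1)
    (hQ : ∀ α, 1 ≤ α → α ≤ r → ∀ n : ℤ,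
      R α (n + 1) * R α (n - 1) = R α n ^ 2 + R (α + 1) n * R (α - 1) n) :
    ∀ α, 1 ≤ α → α ≤ r + 1 → ∀ n : ℤ,
      R α n = Matrix.det (Matrix.of fun i j : Fin α =>
        R 1 (n + ((i : ℕ) : ℤ) + ((j : ℕ) : ℤ) + 1 - (α : ℤ))) := by
  suffices h : ∀ α, α ≤ r + 1 → ∀ n, R α n = (Matrix.hankel (R 1) α n).det from
    fun α _ hα => h α hα
  intro α
  induction α using Nat.strong_induction_on with
  | _ α ih =>
    match α with
    | 0 => intro _ n; simp [Matrix.hankel, hbd0]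
    | 1 => intro _ n; simp [Matrix.hankel]
    | k + 2 =>
      intro hk n
      have hQk := hQ (k + 1) (by omega) (by omega) n
      rw [Nat.add_sub_cancel] at hQk
      refine mul_right_cancel₀ (hpos k (by omega) n).ne' ?_
      calc R (k + 2) n * R k n
          = R (k + 1) (n + 1) * R (k + 1) (n - 1) - R (k + 1) n ^ 2 := by linear_combination -hQk
        _ = (Matrix.hankel (R 1) (k + 2) n).det * (Matrix.hankel (R 1) k n).det := by
          rw [Matrix.det_hankel_add_two, ih (k + 1) (by omega) (by omega),
            ih (k + 1) (by omega) (by omega), ih (k + 1) (by omega) (by omega)]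
        _ = (Matrix.hankel (R 1) (k + 2) n).det * R k n := by rw [ih k (by omega) (by omega)]

/-- for an A_r Q-system solution,
R_{α,n} = det_{1≤i,j≤α} (R_{1, n+i+j−α−1}). -/
theorem qsystem_det_formula (r : ℕ) (hr : 1 ≤ r) (R : ℕ → ℤ → ℝ)
    (hpos : ∀ α, α ≤ r + 1 → ∀ n : ℤ, 0 < R α n)
    (hbd0 : ∀ n : ℤ, R 0 n = 1) (hbd1 : ∀ n : ℤ, R (r + 1) n = 1)
    (hQ : ∀ α, 1 ≤ α → α ≤ r → ∀ n : ℤ,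
      R α (n + 1) * R α (n - 1) = R α n ^ 2 + R (α + 1) n * R (α - 1) n) :
    ∀ α, 1 ≤ α → α ≤ r + 1 → ∀ n : ℤ,
      R α n = Matrix.det (Matrix.of fun i j : Fin α =>
        R 1 (n + ((i : ℕ) : ℤ) + ((j : ℕ) : ℤ) + 1 - (α : ℤ))) :=
  qsystem_det_formula_general r R hpos hbd0 hQ
end

section
/- Fix k ≥ 1 and real weights y_1,…,y_{2k+1}. Over the formal power series ring ℝ[[t]], let A be the (2k+2)×(2k+2) matrix indexed by 0,…,2k+1 with A_{i+1,i} = 1 and A_{i,i+1} = t·y_{i+1} for 0 ≤ i ≤ 2k and all other entries 0 (the chain graph H_k with ascending steps of weight 1 and descending steps i+1 → i of weight t·y_{i+1}). Let B be the (k+2)×(k+2) matrix indexed by 0,…,k+1 with B_{i+1,i} = 1 for 0 ≤ i ≤ k, B_{i,i+1} = t·y_{2i+1} for 0 ≤ i ≤ k, B_{i+1,i+1} = t·y_{2i+2} for 0 ≤ i ≤ k−1, B_{j+2+a, j} = (−1)^{a+1} for 0 ≤ j ≤ k−1 and 0 ≤ a ≤ k−1−j, and all other entries 0 (the compactified graph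 H'_k with loops of weight t·y_{2i+2} and extra ascending edges of weight ±1). Then I − A and I − B are invertible over ℝ[[t]] and ((I − A)^{-1})_{0,0} = ((I − B)^{-1})_{0,0}. -/
/-- The transfer matrix of the chain graph H_k (vertices 0,…,2k+1), over
ℝ[[t]]: A_{i+1,i} = 1 and A_{i,i+1} = t·y_{i+1} for 0 ≤ i ≤ 2k, all other
entries 0. -/
noncomputable def chainMat (k : ℕ) (y : ℕ → ℝ) :
    Matrix (Fin (2 * k + 2)) (Fin (2 * k + 2)) (PowerSeries ℝ) :=
  Matrix.of fun p q =>
    if (p : ℕ) = (q : ℕ) + 1 then 1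
    else if (q : ℕ) = (p : ℕ) + 1 then PowerSeries.C (R := ℝ) (y (q : ℕ)) * PowerSeries.X
    else 0

/-- The transfer matrix of the compactified chain graph H'_k (vertices
0,…,k+1), over ℝ[[t]]: B_{i+1,i} = 1 (0 ≤ i ≤ k), B_{i,i+1} = t·y_{2i+1}
(0 ≤ i ≤ k), B_{i+1,i+1} = t·y_{2i+2} (0 ≤ i ≤ k−1), the extra ascending
edges B_{j+2+a,j} = (−1)^{a+1} (0 ≤ j ≤ k−1, 0 ≤ a ≤ k−1−j), all other
entries 0. -/
noncomputable def chainMatCompact (k : ℕ) (y : ℕ → ℝ) :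
    Matrix (Fin (k + 2)) (Fin (k + 2)) (PowerSeries ℝ) :=
  Matrix.of fun p q =>
    if (p : ℕ) = (q : ℕ) + 1 then 1
    else if (q : ℕ) = (p : ℕ) + 1 then PowerSeries.C (R := ℝ) (y (2 * (p : ℕ) + 1)) * PowerSeries.X
    else if (p : ℕ) = (q : ℕ) ∧ 1 ≤ (p : ℕ) ∧ (p : ℕ) ≤ k then
      PowerSeries.C (R := ℝ) (y (2 * (p : ℕ))) * PowerSeries.X
    else if (q : ℕ) + 2 ≤ (p : ℕ) then (-1 : PowerSeries ℝ) ^ ((p : ℕ) - (q : ℕ) - 1)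
    else 0

/-!
Modulo `t` both `1 - A` and `1 - B` are unipotent lower triangular, so they are invertible
over `ℝ⟦t⟧`. Let `u p` be the principal minor of `1 - A` on the vertices `p, …, 2k+1`; it is a
continuant, `u p = u (p+1) - t y_{p+1} u (p+2)`, with constant coefficient `1`. This recurrence
says exactly that `(1 - A) v = u₀ e₀` for `v p = u (p+1)`, and also that `(1 - B) w = u₀ e₀` for
`w 0 = u 1`, `w (p+1) = t^p y₂ y₄ ⋯ y_{2p} u (2p+2)`: the alternating sums produced by the
`±1` edges of `B` telescope to `t^p y₂ ⋯ y_{2p} u (2p+1)`. Hence both `(0,0)` entries equal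
`u 1 / u 0`.
-/

open PowerSeries Matrix Finset

theorem Matrix.isUnit_one_sub_of_constantCoeff_eq_zero {m R : Type*} [Fintype m] [DecidableEq m]
    [LinearOrder m] [CommRing R] (N : Matrix m m R⟦X⟧)
    (hN : ∀ i j, i ≤ j → constantCoeff (N i j) = 0) : IsUnit (1 - N) := by
  rw [isUnit_iff_isUnit_det, isUnit_iff_constantCoeff, RingHom.map_det, RingHom.mapMatrix_apply,
    det_of_isLowerTriangular]
  · simp [hN _ _ le_rfl]
  · intro i j (hij : i < j)
    simp [one_apply_ne hij.ne, hN i j hij.le]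

theorem Matrix.inv_apply_mul_of_mulVec_eq_single {n R : Type*} [Fintype n] [DecidableEq n]
    [CommRing R] {M : Matrix n n R} (hM : IsUnit M) {v : n → R} {j : n} {c : R}
    (h : M *ᵥ v = Pi.single j c) (i : n) : M⁻¹ i j * c = v i := by
  have hv : v = M⁻¹ *ᵥ Pi.single j c := by
    rw [← h, mulVec_mulVec, nonsing_inv_mul _ ((isUnit_iff_isUnit_det M).1 hM), one_mulVec]
  simp [hv, mul_comm]

theorem Fin.sum_ite_val_eq {M : Type*} [AddCommMonoid M] {n : ℕ} (m : ℕ) (F : ℕ → M) :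
    ∑ q : Fin n, (if (q : ℕ) = m then F q else 0) = if m < n then F m else 0 := by
  simp [Fin.sum_univ_eq_sum_range (fun q => if q = m then F q else 0)]

theorem Fin.sum_ite_val_lt {M : Type*} [AddCommMonoid M] {n m : ℕ} (hm : m ≤ n) (F : ℕ → M) :
    ∑ q : Fin n, (if (q : ℕ) < m then F q else 0) = ∑ q ∈ range m, F q := by
  rw [Fin.sum_univ_eq_sum_range (fun q => if q < m then F q else 0), ← sum_filter,
    range_eq_Ico, Ico_filter_lt, min_eq_right hm, ← range_eq_Ico]

section Continuant

variable {R : Type*} [CommRing R]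

def tailContinuant (x : ℕ → R) (N p : ℕ) : R :=
  if p < N then tailContinuant x N (p + 1) - x (p + 1) * tailContinuant x N (p + 2) else 1
termination_by N - p

theorem tailContinuant_of_lt (x : ℕ → R) {N p : ℕ} (h : p < N) :
    tailContinuant x N p = tailContinuant x N (p + 1) - x (p + 1) * tailContinuant x N (p + 2) := by
  rw [tailContinuant, if_pos h]

theorem tailContinuant_of_le (x : ℕ → R) {N p : ℕ} (h : N ≤ p) : tailContinuant x N p = 1 := by
  rw [tailContinuant, if_neg (not_lt.2 h)]

theorem constantCoeff_tailContinuant {x : ℕ → R⟦X⟧} (hx : ∀ i, constantCoeff (x i) = 0)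
    (N p : ℕ) : constantCoeff (tailContinuant x N p) = 1 := by
  induction p using tailContinuant.induct N with
  | case1 p h ih1 ih2 => simp [tailContinuant_of_lt x h, ih1, ih2, hx]
  | case2 p h => simp [tailContinuant_of_le x (not_lt.1 h)]

end Continuant

section Chain

variable (k : ℕ) (y : ℕ → ℝ)

noncomputable def chainWeight (i : ℕ) : ℝ⟦X⟧ := C (y i) * X

theorem constantCoeff_chainWeight (i : ℕ) : constantCoeff (chainWeight y i) = 0 := by
  simp [chainWeight]

theorem constantCoeff_chainMat_of_le {i j : Fin (2 * k + 2)} (h : i ≤ j) :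
    constantCoeff (chainMat k y i j) = 0 := by
  have h' : (i : ℕ) ≤ j := h
  simp only [chainMat, of_apply]
  split_ifs <;> first | omega | simp

theorem constantCoeff_chainMatCompact_of_le {i j : Fin (k + 2)} (h : i ≤ j) :
    constantCoeff (chainMatCompact k y i j) = 0 := by
  have h' : (i : ℕ) ≤ j := h
  simp only [chainMatCompact, of_apply]
  split_ifs <;> first | omega | simp

theorem chainMat_mulVec_apply (F : ℕ → ℝ⟦X⟧) (p : Fin (2 * k + 2)) :
    (chainMat k y *ᵥ fun q => F q) p =
      (if 1 ≤ (p : ℕ) then F (p - 1) else 0) +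
        (if (p : ℕ) + 1 < 2 * k + 2 then chainWeight y (p + 1) * F (p + 1) else 0) := by
  calc (chainMat k y *ᵥ fun q => F q) p
      = ∑ q : Fin (2 * k + 2), ((if (q : ℕ) = p - 1 then (if 1 ≤ (p : ℕ) then F q else 0) else 0) +
          (if (q : ℕ) = p + 1 then chainWeight y (p + 1) * F q else 0)) := by
        simp only [mulVec, dotProduct]
        refine sum_congr rfl fun q _ => ?_
        simp only [chainMat, of_apply, chainWeight]
        split_ifs <;> first | omega | simp_all
    _ = _ := by
      rw [sum_add_distrib, Fin.sum_ite_val_eq _ fun i => if 1 ≤ (p : ℕ) then F i else 0,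
        Fin.sum_ite_val_eq _ fun i => chainWeight y (p + 1) * F i, if_pos (by omega)]

theorem chainMatCompact_mulVec_apply (F : ℕ → ℝ⟦X⟧) (p : Fin (k + 2)) :
    (chainMatCompact k y *ᵥ fun q => F q) p =
      (∑ q ∈ range p, (-1) ^ ((p : ℕ) - q - 1) * F q) +
        (if (p : ℕ) + 1 < k + 2 then chainWeight y (2 * p + 1) * F (p + 1) else 0) +
        (if 1 ≤ (p : ℕ) ∧ (p : ℕ) ≤ k then chainWeight y (2 * p) * F p else 0) := by
  calc (chainMatCompact k y *ᵥ fun q => F q) p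
      = ∑ q : Fin (k + 2), ((if (q : ℕ) < p then (-1) ^ ((p : ℕ) - q - 1) * F q else 0) +
          (if (q : ℕ) = p + 1 then chainWeight y (2 * p + 1) * F q else 0) +
          (if (q : ℕ) = p then
            (if 1 ≤ (p : ℕ) ∧ (p : ℕ) ≤ k then chainWeight y (2 * p) * F q else 0) else 0)) := by
        simp only [mulVec, dotProduct]
        refine sum_congr rfl fun q _ => ?_
        simp only [chainMatCompact, of_apply, chainWeight]
        split_ifs <;> first | omega | (rw [show (p : ℕ) - q - 1 = 0 by omega]; simp) | simp
    _ = _ := by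
      rw [sum_add_distrib, sum_add_distrib,
        Fin.sum_ite_val_lt (by omega) fun i => (-1) ^ ((p : ℕ) - i - 1) * F i,
        Fin.sum_ite_val_eq _ fun i => chainWeight y (2 * p + 1) * F i,
        Fin.sum_ite_val_eq _ fun i => if 1 ≤ (p : ℕ) ∧ (p : ℕ) ≤ k then chainWeight y (2 * p) * F i
          else 0, if_pos p.isLt]

theorem one_sub_chainMat_mulVec :
    (1 - chainMat k y) *ᵥ
        (fun q : Fin (2 * k + 2) => tailContinuant (chainWeight y) (2 * k + 1) (q + 1)) =
      Pi.single ⟨0, Nat.succ_pos _⟩ (tailContinuant (chainWeight y) (2 * k + 1) 0) := by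
  funext ⟨p, hp⟩
  rw [sub_mulVec, one_mulVec, Pi.sub_apply,
    chainMat_mulVec_apply k y fun i => tailContinuant (chainWeight y) (2 * k + 1) (i + 1)]
  simp only [Pi.single_apply, Fin.mk.injEq]
  rcases Nat.eq_zero_or_pos p with rfl | hp0
  · rw [if_neg (by omega), if_pos (by omega), if_pos rfl]
    linear_combination -tailContinuant_of_lt (chainWeight y) (by omega : 0 < 2 * k + 1)
  · rw [if_pos (by omega : 1 ≤ p), if_neg hp0.ne', Nat.sub_add_cancel hp0]
    by_cases htop : p < 2 * k + 1
    · rw [if_pos (by omega)]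
      linear_combination -tailContinuant_of_lt (chainWeight y) htop
    · rw [if_neg (by omega), tailContinuant_of_le _ (by omega : 2 * k + 1 ≤ p),
        tailContinuant_of_le _ (by omega : 2 * k + 1 ≤ p + 1)]
      ring

noncomputable def compactSolution : ℕ → ℝ⟦X⟧
  | 0 => tailContinuant (chainWeight y) (2 * k + 1) 1
  | p + 1 => (∏ j ∈ range p, chainWeight y (2 * j + 2)) *
      tailContinuant (chainWeight y) (2 * k + 1) (2 * p + 2)

theorem sum_range_neg_one_pow_mul_compactSolution {p : ℕ} (hp : p ≤ k) :
    ∑ q ∈ range (p + 1), (-1) ^ (p + 1 - q - 1) * compactSolution k y q =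
      (∏ j ∈ range p, chainWeight y (2 * j + 2)) *
        tailContinuant (chainWeight y) (2 * k + 1) (2 * p + 1) := by
  induction p with
  | zero => simp [compactSolution]
  | succ p ih =>
    have hsign : ∀ q ∈ range (p + 1), (-1) ^ (p + 1 + 1 - q - 1) * compactSolution k y q =
        -((-1) ^ (p + 1 - q - 1) * compactSolution k y q) := fun q hq => by
      rw [show p + 1 + 1 - q - 1 = p + 1 - q - 1 + 1 by grind, pow_succ]
      ring
    rw [sum_range_succ, sum_congr rfl hsign, sum_neg_distrib, ih (by omega),
      show p + 1 + 1 - (p + 1) - 1 = 0 by omega, compactSolution, prod_range_succ,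
      tailContinuant_of_lt (chainWeight y) (by omega : 2 * p + 1 < 2 * k + 1)]
    ring_nf

theorem one_sub_chainMatCompact_mulVec :
    (1 - chainMatCompact k y) *ᵥ (fun q : Fin (k + 2) => compactSolution k y q) =
      Pi.single ⟨0, Nat.succ_pos _⟩ (tailContinuant (chainWeight y) (2 * k + 1) 0) := by
  funext ⟨p, hp⟩
  rw [sub_mulVec, one_mulVec, Pi.sub_apply, chainMatCompact_mulVec_apply k y (compactSolution k y)]
  simp only [Pi.single_apply, Fin.mk.injEq]
  rcases p with _ | p
  · rw [if_pos rfl, range_zero, sum_empty, if_pos (by omega), if_neg (by omega)]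
    simp only [compactSolution, prod_range_zero]
    linear_combination (norm := ring_nf)
      -tailContinuant_of_lt (chainWeight y) (by omega : 0 < 2 * k + 1)
  · rw [sum_range_neg_one_pow_mul_compactSolution k y (by omega), if_neg p.succ_ne_zero]
    by_cases htop : p < k
    · rw [if_pos (by omega), if_pos (by omega)]
      simp only [compactSolution, prod_range_succ]
      linear_combination (norm := ring_nf)
        -(∏ j ∈ range p, chainWeight y (2 * j + 2)) *
          tailContinuant_of_lt (chainWeight y) (by omega : 2 * p + 1 < 2 * k + 1) -
        (∏ j ∈ range p, chainWeight y (2 * j + 2)) * chainWeight y (2 * p + 2) *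
          tailContinuant_of_lt (chainWeight y) (by omega : 2 * p + 2 < 2 * k + 1)
    · rw [if_neg (by omega), if_neg (by omega), compactSolution,
        tailContinuant_of_le _ (by omega : 2 * k + 1 ≤ 2 * p + 1),
        tailContinuant_of_le _ (by omega : 2 * k + 1 ≤ 2 * p + 2)]
      ring

end Chain

/-- compactification of a vertical chain preserves the path
generating function: ((I − A)⁻¹)_{0,0} = ((I − B)⁻¹)_{0,0} over ℝ[[t]]. -/
theorem chain_compactification (k : ℕ) (y : ℕ → ℝ) :
    IsUnit (1 - chainMat k y) ∧ IsUnit (1 - chainMatCompact k y) ∧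
    (1 - chainMat k y)⁻¹ ⟨0, by omega⟩ ⟨0, by omega⟩ =
      (1 - chainMatCompact k y)⁻¹ ⟨0, by omega⟩ ⟨0, by omega⟩ := by
  have hA : IsUnit (1 - chainMat k y) :=
    isUnit_one_sub_of_constantCoeff_eq_zero _ fun _ _ => constantCoeff_chainMat_of_le k y
  have hB : IsUnit (1 - chainMatCompact k y) :=
    isUnit_one_sub_of_constantCoeff_eq_zero _ fun _ _ => constantCoeff_chainMatCompact_of_le k y
  have hu₀ : tailContinuant (chainWeight y) (2 * k + 1) 0 ≠ 0 := fun h => by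
    simpa [h] using constantCoeff_tailContinuant (constantCoeff_chainWeight y) (2 * k + 1) 0
  refine ⟨hA, hB, mul_right_cancel₀ hu₀ ?_⟩
  rw [inv_apply_mul_of_mulVec_eq_single hA (one_sub_chainMat_mulVec k y),
    inv_apply_mul_of_mulVec_eq_single hB (one_sub_chainMatCompact_mulVec k y)]
  rfl
end

section
/- Fix r ≥ 1, positive reals y_1,…,y_{2r+1}, and a real (or formal) parameter t. Let E_{i,j} denote the (r+1)×(r+1) elementary matrix with 1 in position (i,j) and 0 elsewhere, and define f_i = I + E_{i+1,i} and e_i = I + (y_{2i}/y_{2i−1})·E_{i,i+1} for 1 ≤ i ≤ r, and d_i = I + (y_{2i−1} − 1)·E_{i,i} for 1 ≤ i ≤ r+1. Let F = f_r·f_{r−1}···f_1 (so F_{i,j} = 1 if i ≥ j and 0 otherwise), let P = F·(d_1·d_2···d_{r+1})·(e_r·e_{r−1}···e_1), and let T' = T'_r(t·y) be the compactified transfer matrix. Then I − t·P = F·(I − T'). -/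
/-!
D·E is the upper bidiagonal matrix with diagonal y₁, y₃, …, y_{2r+1} and superdiagonal
y₂, y₄, …, y_{2r} (the ratios y_{2i}/y_{2i−1} in eᵢ are undone by dᵢ), so T' = S + t·D·E where
S is the subdiagonal of ones. On the other side F is the lower-triangular all-ones matrix, which
is the inverse of 1 − S. Hence 1 − t·F·D·E = F·(1 − S − t·D·E) = F·(1 − T').
-/

/-- The elementary matrix f_i = I + E_{i+1,i} (λ_i = 1), acting on
Fin (r+1) (index p encodes the 1-based row label p+1). -/
def elemF (r : ℕ) (i : ℕ) : Matrix (Fin (r + 1)) (Fin (r + 1)) ℝ :=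
  Matrix.of fun p q =>
    (if p = q then 1 else 0) + (if (p : ℕ) = i ∧ (q : ℕ) + 1 = i then 1 else 0)

/-- The elementary matrix e_i = I + (y_{2i}/y_{2i−1})·E_{i,i+1}. -/
noncomputable def elemE (r : ℕ) (y : ℕ → ℝ) (i : ℕ) : Matrix (Fin (r + 1)) (Fin (r + 1)) ℝ :=
  Matrix.of fun p q =>
    (if p = q then 1 else 0) +
      (if (p : ℕ) + 1 = i ∧ (q : ℕ) = i then y (2 * i) / y (2 * i - 1) else 0)

/-- The elementary matrix d_i = I + (y_{2i−1} − 1)·E_{i,i}. -/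
def elemD (r : ℕ) (y : ℕ → ℝ) (i : ℕ) : Matrix (Fin (r + 1)) (Fin (r + 1)) ℝ :=
  Matrix.of fun p q => if p = q then (if (p : ℕ) + 1 = i then y (2 * i - 1) else 1) else 0

/-- F = f_r·f_{r−1}···f_1. -/
def matF (r : ℕ) : Matrix (Fin (r + 1)) (Fin (r + 1)) ℝ :=
  ((List.range r).map fun j => elemF r (r - j)).prod

/-- D = d_1·d_2···d_{r+1}. -/
def matD (r : ℕ) (y : ℕ → ℝ) : Matrix (Fin (r + 1)) (Fin (r + 1)) ℝ :=
  ((List.range (r + 1)).map fun j => elemD r y (j + 1)).prod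

/-- E = e_r·e_{r−1}···e_1. -/
noncomputable def matE (r : ℕ) (y : ℕ → ℝ) : Matrix (Fin (r + 1)) (Fin (r + 1)) ℝ :=
  ((List.range r).map fun j => elemE r y (r - j)).prod

/-- The compactified transfer matrix T'_r(t·y): rows and columns indexed by
1,…,r+1 (index p in Fin (r+1) stands for vertex p+1), with entries
(T')_{i,i} = t·y_{2i−1}, (T')_{i,i+1} = t·y_{2i}, (T')_{i+1,i} = 1. -/
def Tcomp (r : ℕ) (t : ℝ) (y : ℕ → ℝ) : Matrix (Fin (r + 1)) (Fin (r + 1)) ℝ :=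
  Matrix.of fun p q =>
    if p = q then t * y (2 * (p : ℕ) + 1)
    else if (q : ℕ) = (p : ℕ) + 1 then t * y (2 * (p : ℕ) + 2)
    else if (p : ℕ) = (q : ℕ) + 1 then 1
    else 0

open Matrix

lemma Matrix.mul_one_add_single_apply {n R : Type*} [Fintype n] [DecidableEq n]
    [NonAssocSemiring R] (A : Matrix n n R) (i j : n) (c : R) (p q : n) :
    (A * (1 + single i j c)) p q = A p q + if q = j then A p i * c else 0 := by
  rw [mul_add, mul_one, add_apply]
  split_ifs with h
  · rw [h, mul_single_apply_same]
  · rw [mul_single_apply_of_ne _ _ _ _ _ h]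

section LowerOnes

variable (n : ℕ) (R : Type*)

def lowerOnes [Zero R] [One R] : Matrix (Fin n) (Fin n) R :=
  of fun p q => if q ≤ p then 1 else 0

def subdiagOnes [Zero R] [One R] : Matrix (Fin n) (Fin n) R :=
  of fun p q => if (p : ℕ) = q + 1 then 1 else 0

theorem lowerOnes_mul_subdiagOnes_apply [NonAssocSemiring R] (p q : Fin n) :
    (lowerOnes n R * subdiagOnes n R) p q = if (q : ℕ) + 1 ≤ p then 1 else 0 := by
  simp only [lowerOnes, subdiagOnes, mul_apply, of_apply, mul_ite, mul_one, mul_zero]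
  split_ifs with h
  · rw [Finset.sum_eq_single ⟨(q : ℕ) + 1, by omega⟩]
    · simp only [Fin.le_def, if_pos h, if_true]
    · intro k _ hk
      rw [if_neg fun h' => hk (Fin.ext h')]
    · simp
  · refine Finset.sum_eq_zero fun k _ => ?_
    simp only [Fin.le_def]
    split_ifs <;> first | rfl | omega

theorem lowerOnes_mul_one_sub_subdiagOnes [Ring R] :
    lowerOnes n R * (1 - subdiagOnes n R) = 1 := by
  ext p q
  rw [mul_sub, mul_one, Matrix.sub_apply, lowerOnes_mul_subdiagOnes_apply, lowerOnes, of_apply,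
    one_apply]
  simp only [Fin.ext_iff, Fin.le_def]
  split_ifs <;> first | omega | simp

end LowerOnes

section FominZelevinsky

variable (r : ℕ) (y : ℕ → ℝ)

theorem elemF_eq_one_add_single {i : ℕ} (hi : 1 ≤ i) (hir : i ≤ r) :
    elemF r i = 1 + single ⟨i, by omega⟩ ⟨i - 1, by omega⟩ 1 := by
  ext p q
  simp only [elemF, of_apply, Matrix.add_apply, one_apply, single_apply, Fin.ext_iff]
  congr 1
  split_ifs <;> first | rfl | omega

theorem elemE_eq_one_add_single {i : ℕ} (hi : 1 ≤ i) (hir : i ≤ r) :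
    elemE r y i = 1 + single ⟨i - 1, by omega⟩ ⟨i, by omega⟩ (y (2 * i) / y (2 * i - 1)) := by
  ext p q
  simp only [elemE, of_apply, Matrix.add_apply, one_apply, single_apply, Fin.ext_iff]
  congr 1
  split_ifs <;> first | rfl | omega

theorem elemD_eq_diagonal (i : ℕ) :
    elemD r y i = diagonal fun p : Fin (r + 1) => if (p : ℕ) + 1 = i then y (2 * i - 1) else 1 := by
  ext p q
  simp only [elemD, of_apply, diagonal_apply]

theorem prod_elemF_range {k : ℕ} (hk : k ≤ r) :
    ((List.range k).map fun j => elemF r (r - j)).prod =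
      of fun p q : Fin (r + 1) => if q ≤ p ∧ (q = p ∨ r - k ≤ (q : ℕ)) then 1 else 0 := by
  induction k with
  | zero =>
    ext p q
    simp only [List.range_zero, List.map_nil, List.prod_nil, one_apply, of_apply, Fin.ext_iff,
      Fin.le_def]
    split_ifs <;> first | rfl | omega
  | succ k ih =>
    rw [List.prod_range_succ, ih (by omega), elemF_eq_one_add_single r (by omega) (by omega)]
    ext p q
    rw [mul_one_add_single_apply]
    simp only [of_apply, Fin.ext_iff, Fin.le_def]
    split_ifs <;> first | omega | simp

theorem matF_eq_lowerOnes : matF r = lowerOnes (r + 1) ℝ := by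
  rw [matF, prod_elemF_range r le_rfl, lowerOnes]
  ext p q
  simp only [of_apply, Nat.sub_self]
  split_ifs <;> first | rfl | omega

theorem prod_elemE_range {k : ℕ} (hk : k ≤ r) :
    ((List.range k).map fun j => elemE r y (r - j)).prod =
      1 + of fun p q : Fin (r + 1) =>
        if (q : ℕ) = p + 1 ∧ r - k ≤ (p : ℕ) then y (2 * q) / y (2 * q - 1) else 0 := by
  induction k with
  | zero =>
    ext p q
    simp only [List.range_zero, List.map_nil, List.prod_nil, Matrix.add_apply, of_apply]
    rw [if_neg (by omega), add_zero]
  | succ k ih =>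
    rw [List.prod_range_succ, ih (by omega), elemE_eq_one_add_single r y (by omega) (by omega)]
    ext p q
    rw [mul_one_add_single_apply]
    simp only [Matrix.add_apply, one_apply, of_apply, Fin.ext_iff]
    by_cases hq : (q : ℕ) = r - k
    · simp only [hq]
      split_ifs <;> first | omega | simp
    · split_ifs <;> first | omega | simp

theorem matE_eq : matE r y =
    1 + of fun p q : Fin (r + 1) => if (q : ℕ) = p + 1 then y (2 * q) / y (2 * q - 1) else 0 := by
  rw [matE, prod_elemE_range r y le_rfl]
  simp only [Nat.sub_self, zero_le, and_true]

theorem prod_elemD_range {k : ℕ} :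
    ((List.range k).map fun j => elemD r y (j + 1)).prod =
      diagonal fun p : Fin (r + 1) => if (p : ℕ) < k then y (2 * p + 1) else 1 := by
  induction k with
  | zero => simp
  | succ k ih =>
    rw [List.prod_range_succ, ih, elemD_eq_diagonal, diagonal_mul_diagonal]
    congr 1
    ext p
    rcases lt_trichotomy (p : ℕ) k with h | h | h
    · simp [h, h.ne, Nat.lt_succ_of_lt h]
    · simp [h, show 2 * (k + 1) - 1 = 2 * k + 1 by omega]
    · simp [h.not_gt, h.ne', show ¬(p : ℕ) < k + 1 by omega]

theorem matD_eq_diagonal : matD r y = diagonal fun p : Fin (r + 1) => y (2 * p + 1) := by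
  rw [matD, prod_elemD_range]
  simp only [Fin.is_lt, if_true]

theorem matD_mul_matE (hy : ∀ i < r, y (2 * i + 1) ≠ 0) :
    matD r y * matE r y = of fun p q : Fin (r + 1) =>
      if p = q then y (2 * p + 1) else if (q : ℕ) = p + 1 then y (2 * p + 2) else 0 := by
  ext p q
  rw [matD_eq_diagonal, matE_eq, diagonal_mul]
  simp only [Matrix.add_apply, one_apply, of_apply, Fin.ext_iff]
  split_ifs with hdiag hsup hsup
  · omega
  · simp
  · rw [hsup, show 2 * ((p : ℕ) + 1) - 1 = 2 * p + 1 by omega, mul_add_one, zero_add]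
    field_simp [hy p (by omega)]
  · simp

theorem Tcomp_eq_subdiagOnes_add (t : ℝ) (hy : ∀ i < r, y (2 * i + 1) ≠ 0) :
    Tcomp r t y = subdiagOnes (r + 1) ℝ + t • (matD r y * matE r y) := by
  rw [matD_mul_matE r y hy]
  ext p q
  simp only [Tcomp, subdiagOnes, Matrix.add_apply, Matrix.smul_apply, of_apply, smul_eq_mul,
    Fin.ext_iff]
  split_ifs <;> first | omega | ring

end FominZelevinsky

theorem one_sub_tP_eq_F_mul_one_sub_Tcomp_general (r : ℕ) (t : ℝ) (y : ℕ → ℝ)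
    (hy : ∀ i, 1 ≤ i → i ≤ 2 * r + 1 → 0 < y i) :
    (1 : Matrix (Fin (r + 1)) (Fin (r + 1)) ℝ) -
        t • (matF r * matD r y * matE r y) =
      matF r * (1 - Tcomp r t y) := by
  have hy' : ∀ i < r, y (2 * i + 1) ≠ 0 := fun i hi => (hy _ (by omega) (by omega)).ne'
  calc 1 - t • (matF r * matD r y * matE r y)
      = matF r * (1 - subdiagOnes (r + 1) ℝ) - matF r * (t • (matD r y * matE r y)) := by
        rw [matF_eq_lowerOnes, lowerOnes_mul_one_sub_subdiagOnes, mul_assoc, Matrix.mul_smul]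
    _ = matF r * (1 - Tcomp r t y) := by
        rw [← mul_sub, Tcomp_eq_subdiagOnes_add r y t hy', sub_sub]

/-- with P = F·D·E the Fomin–Zelevinsky totally positive matrix
of the fundamental Motzkin path, one has I − t·P = F·(I − T'_r(t·y)). -/
theorem one_sub_tP_eq_F_mul_one_sub_Tcomp (r : ℕ) (hr : 1 ≤ r) (t : ℝ) (y : ℕ → ℝ)
    (hy : ∀ i, 1 ≤ i → i ≤ 2 * r + 1 → 0 < y i) :
    (1 : Matrix (Fin (r + 1)) (Fin (r + 1)) ℝ) -
        t • (matF r * matD r y * matE r y) =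
      matF r * (1 - Tcomp r t y) :=
  one_sub_tP_eq_F_mul_one_sub_Tcomp_general r t y hy
end
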